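/- arXiv:1903.00060 — 8 statements merged into one kernel-verified Lean document; each statement's English description precedes it below -/
import Mathlib

section
/- Let K be an algebraically closed field of characteristic 2 and n ≥ 2 with n+1 not divisible by 2. Then sl_{n+1}(K) is a simple Lie algebra. -/
namespace SlIsSimpleAux

open Matrix LieAlgebra.SpecialLinear
variable {K : Type*} [Field K] [CharP K 2] {n : ℕ}

noncomputable def chi (a b u : Fin (n+1)) : K :=
  (if u = a then 1 else 0) + (if u = b then 1 else 0)

noncomputable def Dg (K : Type*) [Field K] [CharP K 2] {n : ℕ} (a b : Fin (n+1)) :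
    sl (Fin (n+1)) K :=
  ⟨Matrix.diagonal (chi a b),
   show _ ∈ LinearMap.ker (Matrix.traceLinearMap _ K K) by
     simp only [LinearMap.mem_ker, Matrix.traceLinearMap_apply, Matrix.trace_diagonal, chi]
     rw [Finset.sum_add_distrib, Finset.sum_ite_eq', Finset.sum_ite_eq']
     simp [CharTwo.add_self_eq_zero]⟩

lemma Dg_bracket_val (a b : Fin (n+1)) (x : sl (Fin (n+1)) K) (u v : Fin (n+1)) :
    (⁅Dg K a b, x⁆ : sl (Fin (n+1)) K).val u v = (chi a b u - chi a b v) * x.val u v := by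
  have h : (⁅Dg K a b, x⁆ : sl (Fin (n+1)) K).val
      = Matrix.diagonal (chi a b) * x.val - x.val * Matrix.diagonal (chi a b) := rfl
  rw [h, Matrix.sub_apply, Matrix.diagonal_mul, Matrix.mul_diagonal]
  ring

lemma smul_val (c : K) (x : sl (Fin (n+1)) K) (u v : Fin (n+1)) :
    (c • x).val u v = c * x.val u v := rfl
lemma add_val (x y : sl (Fin (n+1)) K) (u v : Fin (n+1)) :
    (x + y).val u v = x.val u v + y.val u v := rfl
lemma sub_val (x y : sl (Fin (n+1)) K) (u v : Fin (n+1)) :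
    (x - y).val u v = x.val u v - y.val u v := rfl

set_option linter.unusedSectionVars false

lemma chi_eval (a b u : Fin (n+1)) (hu : u = a ∨ u = b) (hab : a ≠ b) :
    chi (K := K) a b u = 1 := by
  rcases hu with h | h <;> subst h <;> simp [chi, hab, hab.symm]

lemma chi_eval0 (a b u : Fin (n+1)) (hua : u ≠ a) (hub : u ≠ b) :
    chi (K := K) a b u = 0 := by simp [chi, hua, hub]

/-- separation: find a diagonal `Dg a b` whose weight separates the (unordered) pair `(i,j)`
from the pair `(p,q)`. -/
lemma separation (hodd : ¬ (2 ∣ (n + 1))) (i j p q : Fin (n+1)) (hij : i ≠ j) (hpq : p ≠ q)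
    (h1 : (p, q) ≠ (i, j)) (h2 : (p, q) ≠ (j, i)) :
    ∃ a b : Fin (n+1), a ≠ b ∧
      (chi (K := K) a b i - chi a b j) ≠ (chi (K := K) a b p - chi a b q) := by
  by_cases hi : i = p ∨ i = q
  · by_cases hj : j = p ∨ j = q
    · exfalso
      rcases hi with hi | hi <;> rcases hj with hj | hj
      · exact hij (hi.trans hj.symm)
      · exact h1 (by rw [← hi, ← hj])
      · exact h2 (by rw [← hi, ← hj])
      · exact hij (hi.trans hj.symm)
    · push_neg at hj
      refine ⟨p, q, hpq, ?_⟩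
      rw [chi_eval p q i hi hpq, chi_eval0 p q j hj.1 hj.2,
        chi_eval p q p (Or.inl rfl) hpq, chi_eval p q q (Or.inr rfl) hpq]
      simp
  · push_neg at hi
    by_cases hj : j = p ∨ j = q
    · refine ⟨p, q, hpq, ?_⟩
      rw [chi_eval p q j hj hpq, chi_eval0 p q i hi.1 hi.2,
        chi_eval p q p (Or.inl rfl) hpq, chi_eval p q q (Or.inr rfl) hpq]
      simp
    · push_neg at hj
      -- all four distinct; find a fifth element
      have hcard : ({p, q, i, j} : Finset (Fin (n+1))).card = 4 := by
        rw [Finset.card_insert_of_notMem (by simp [hpq, hi.1.symm, hj.1.symm]),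
          Finset.card_insert_of_notMem (by simp [hi.2.symm, hj.2.symm]),
          Finset.card_insert_of_notMem (by simp [hij]), Finset.card_singleton]
      have hle : (4 : ℕ) ≤ n + 1 := by
        have := Finset.card_le_univ ({p, q, i, j} : Finset (Fin (n+1)))
        simpa [hcard] using this
      have h5 : (5 : ℕ) ≤ n + 1 := by omega
      have : 0 < (({p, q, i, j} : Finset (Fin (n+1)))ᶜ).card := by
        rw [Finset.card_compl, hcard]
        simp only [Fintype.card_fin]
        omega
      obtain ⟨b, hb⟩ := Finset.card_pos.mp this
      simp only [Finset.mem_compl, Finset.mem_insert, Finset.mem_singleton, not_or] at hb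
      obtain ⟨hbp, hbq, hbi, hbj⟩ := hb
      refine ⟨p, b, Ne.symm hbp, ?_⟩
      rw [chi_eval0 p b i hi.1 (Ne.symm hbi), chi_eval0 p b j hj.1 (Ne.symm hbj),
        chi_eval p b p (Or.inl rfl) (Ne.symm hbp), chi_eval0 p b q (Ne.symm hpq) (Ne.symm hbq)]
      simp

open Finset in
/-- From `x ∈ I` with zero diagonal we can find `y ∈ I` supported on `{(i,j),(j,i)}`
with the same entries there. -/
lemma strip (hodd : ¬ (2 ∣ (n + 1))) (I : LieIdeal K (sl (Fin (n+1)) K))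
    (i j : Fin (n+1)) (hij : i ≠ j) :
    ∀ x ∈ I, (∀ u, x.val u u = 0) →
    ∃ y ∈ I, y.val i j = x.val i j ∧ y.val j i = x.val j i ∧
      ∀ u v : Fin (n+1), (u, v) ≠ (i, j) → (u, v) ≠ (j, i) → y.val u v = 0 := by
  classical
  set supp : sl (Fin (n+1)) K → Finset (Fin (n+1) × Fin (n+1)) := fun z =>
    Finset.univ.filter (fun w => z.val w.1 w.2 ≠ 0 ∧ w ≠ (i, j) ∧ w ≠ (j, i)) with hsupp
  suffices H : ∀ (N : ℕ) (x : sl (Fin (n+1)) K), x ∈ I → (∀ u, x.val u u = 0) →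
      (supp x).card ≤ N →
      ∃ y ∈ I, y.val i j = x.val i j ∧ y.val j i = x.val j i ∧
        ∀ u v : Fin (n+1), (u, v) ≠ (i, j) → (u, v) ≠ (j, i) → y.val u v = 0 by
    intro x hx hd
    exact H (supp x).card x hx hd le_rfl
  intro N
  induction N with
  | zero =>
    intro x hx hd hcard
    refine ⟨x, hx, rfl, rfl, fun u v h1 h2 => ?_⟩
    by_contra hne
    have : (u, v) ∈ supp x := by simp [hsupp, hne, h1, h2]
    exact Finset.notMem_empty _ (Finset.card_eq_zero.mp (Nat.le_zero.mp hcard) ▸ this)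
  | succ N ih =>
    intro x hx hd hcard
    by_cases hemp : supp x = ∅
    · refine ⟨x, hx, rfl, rfl, fun u v h1 h2 => ?_⟩
      by_contra hne
      have : (u, v) ∈ supp x := by simp [hsupp, hne, h1, h2]
      simp [hemp] at this
    · obtain ⟨⟨p, q⟩, hpq⟩ := Finset.nonempty_of_ne_empty hemp
      simp only [hsupp, Finset.mem_filter, Finset.mem_univ, true_and] at hpq
      obtain ⟨hxpq, h1, h2⟩ := hpq
      have hpqne : p ≠ q := by rintro rfl; exact hxpq (hd p)
      obtain ⟨a, b, hab, hsep⟩ := separation (K := K) hodd i j p q hij hpqne h1 h2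
      set c : K := chi a b p - chi a b q with hc
      set t : K := (chi a b i - chi a b j) - c with ht
      have htne : t ≠ 0 := sub_ne_zero.mpr hsep
      set y : sl (Fin (n+1)) K := t⁻¹ • (⁅Dg K a b, x⁆ + (-c) • x) with hy
      have hyI : y ∈ I := I.smul_mem _ (I.add_mem (lie_mem_right K _ I _ _ hx) (I.smul_mem _ hx))
      have hyval : ∀ u v, y.val u v = (t⁻¹ * ((chi a b u - chi a b v) - c)) * x.val u v := by
        intro u v
        rw [hy, smul_val, add_val, Dg_bracket_val, smul_val]
        ring
      have hydiag : ∀ u, y.val u u = 0 := by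
        intro u; rw [hyval]; rw [hd u]; ring
      have hyij : y.val i j = x.val i j := by
        rw [hyval, ← ht, inv_mul_cancel₀ htne, one_mul]
      have hyji : y.val j i = x.val j i := by
        have : chi (K := K) a b j - chi a b i = chi a b i - chi a b j := by
          rw [← CharTwo.neg_eq (chi (K := K) a b i - chi a b j)]; ring
        rw [hyval, this, ← ht, inv_mul_cancel₀ htne, one_mul]
      have hsub : supp y ⊂ supp x := by
        constructor
        · intro w hw
          simp only [hsupp, Finset.mem_filter, Finset.mem_univ, true_and] at hw ⊢
          refine ⟨fun h0 => hw.1 ?_, hw.2⟩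
          rw [hyval, h0, mul_zero]
        · intro hsub'
          have hpmem : (p, q) ∈ supp x := by simp [hsupp, hxpq, h1, h2]
          have : (p, q) ∈ supp y := hsub' hpmem
          simp only [hsupp, Finset.mem_filter, Finset.mem_univ, true_and] at this
          apply this.1
          rw [hyval, ← hc, sub_self, mul_zero, zero_mul]
      have hcard' : (supp y).card ≤ N := by
        have := Finset.card_lt_card hsub
        omega
      obtain ⟨z, hzI, hz1, hz2, hz3⟩ := ih y hyI hydiag hcard'
      exact ⟨z, hzI, hz1.trans hyij, hz2.trans hyji, hz3⟩

lemma exists_third (hn : 2 ≤ n) (u v : Fin (n+1)) : ∃ k : Fin (n+1), k ≠ u ∧ k ≠ v := by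
  classical
  have hc : ({u, v} : Finset (Fin (n+1))).card ≤ 2 := Finset.card_insert_le _ _ |>.trans (by simp)
  have : 0 < (({u, v} : Finset (Fin (n+1)))ᶜ).card := by
    rw [Finset.card_compl]
    simp only [Fintype.card_fin]
    omega
  obtain ⟨k, hk⟩ := Finset.card_pos.mp this
  simp only [Finset.mem_compl, Finset.mem_insert, Finset.mem_singleton, not_or] at hk
  exact ⟨k, hk.1, hk.2⟩

noncomputable def Eb (K : Type*) [Field K] {n : ℕ} (i j : Fin (n+1)) (h : j ≠ i) :
    sl (Fin (n+1)) K :=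
  LieAlgebra.SpecialLinear.single i j (Ne.symm h) 1

lemma smul_eb_mem (I : LieIdeal K (sl (Fin (n+1)) K)) (p q : Fin (n+1)) (hqp : q ≠ p)
    (c : K) (hc : c ≠ 0) {z : sl (Fin (n+1)) K} (hz : z ∈ I)
    (hzval : z.val = c • Matrix.single p q 1) :
    Eb K p q hqp ∈ I := by
  have : Eb K p q hqp = c⁻¹ • z := by
    apply Subtype.ext
    show Matrix.single p q 1 = c⁻¹ • z.val
    rw [hzval, smul_smul, inv_mul_cancel₀ hc, one_smul]
  rw [this]
  exact I.smul_mem _ hz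

lemma pair_supported_eq (u v : Fin (n+1)) (huv : u ≠ v) (y : sl (Fin (n+1)) K)
    (hy : ∀ a b : Fin (n+1), (a, b) ≠ (u, v) → (a, b) ≠ (v, u) → y.val a b = 0) :
    y.val = y.val u v • Matrix.single u v 1 + y.val v u • Matrix.single v u 1 := by
  ext a b
  rw [Matrix.add_apply, Matrix.smul_apply, Matrix.smul_apply]
  by_cases h1 : a = u ∧ b = v
  · obtain ⟨rfl, rfl⟩ := h1
    simp [Matrix.single, huv, Ne.symm huv]
  · by_cases h2 : a = v ∧ b = u
    · obtain ⟨rfl, rfl⟩ := h2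
      simp [Matrix.single, huv, Ne.symm huv]
    · rw [hy a b (by simpa [Prod.ext_iff] using h1) (by simpa [Prod.ext_iff] using h2)]
      simp only [Matrix.single, Matrix.of_apply]
      rw [if_neg (by tauto), if_neg (by tauto)]
      simp

lemma bracket_pair_supported (u v k : Fin (n+1)) (hku : k ≠ u) (hkv : k ≠ v) (huv : u ≠ v)
    (y : sl (Fin (n+1)) K)
    (hy : ∀ a b : Fin (n+1), (a, b) ≠ (u, v) → (a, b) ≠ (v, u) → y.val a b = 0) :
    (⁅Eb K k u (Ne.symm hku), y⁆ : sl (Fin (n+1)) K).val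
      = y.val u v • Matrix.single k v 1 := by
  have hzval : (⁅Eb K k u (Ne.symm hku), y⁆ : sl (Fin (n+1)) K).val
      = Matrix.single k u 1 * y.val - y.val * Matrix.single k u 1 := rfl
  rw [hzval]
  conv_lhs => rw [pair_supported_eq u v huv y hy]
  rw [Matrix.mul_add, Matrix.add_mul, Matrix.mul_smul, Matrix.mul_smul, Matrix.smul_mul,
    Matrix.smul_mul, Matrix.single_mul_single_same,
    Matrix.single_mul_single_of_ne _ _ _ _ huv,
    Matrix.single_mul_single_of_ne _ _ _ _ (Ne.symm hkv),
    Matrix.single_mul_single_of_ne _ _ _ _ (Ne.symm hku)]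
  simp

lemma bracket_diag_supported (i j : Fin (n+1)) (hij : i ≠ j) (x : sl (Fin (n+1)) K)
    (hxd : ∀ a b : Fin (n+1), a ≠ b → x.val a b = 0) :
    (⁅x, Eb K i j (Ne.symm hij)⁆ : sl (Fin (n+1)) K).val
      = (x.val i i - x.val j j) • Matrix.single i j 1 := by
  have hzval : (⁅x, Eb K i j (Ne.symm hij)⁆ : sl (Fin (n+1)) K).val
      = x.val * Matrix.single i j 1 - Matrix.single i j 1 * x.val := rfl
  have hdiag : x.val = Matrix.diagonal (fun a => x.val a a) := by
    ext a b
    by_cases hab : a = b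
    · subst hab; simp
    · rw [hxd a b hab, Matrix.diagonal_apply_ne _ hab]
  rw [hzval, hdiag]
  ext a b
  rw [Matrix.sub_apply, Matrix.diagonal_mul, Matrix.mul_diagonal, Matrix.smul_apply]
  simp only [Matrix.single, Matrix.of_apply]
  by_cases h1 : i = a
  · by_cases h2 : j = b
    · subst h1; subst h2; simp
    · simp [h2]
  · by_cases h2 : j = b
    · simp [h1]
    · simp [h1, h2]

/-- A nonzero ideal contains some elementary matrix. -/
lemma exists_eb_mem (hn : 2 ≤ n) (hodd : ¬ (2 ∣ (n + 1)))
    (I : LieIdeal K (sl (Fin (n+1)) K)) (x : sl (Fin (n+1)) K) (hx : x ∈ I) (hxne : x ≠ 0) :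
    ∃ (p q : Fin (n+1)) (hqp : q ≠ p), Eb K p q hqp ∈ I := by
  classical
  by_cases hod : ∃ u v : Fin (n+1), u ≠ v ∧ x.val u v ≠ 0
  · -- off-diagonal case
    obtain ⟨u, v, huvne, huv⟩ := hod
    obtain ⟨k, hku, hkv⟩ := exists_third hn u v
    set x1 : sl (Fin (n+1)) K := ⁅Dg K u k, x⁆ with hx1
    have hx1I : x1 ∈ I := lie_mem_right K _ I _ _ hx
    have hx1val : ∀ a b, x1.val a b = (chi u k a - chi u k b) * x.val a b := fun a b =>
      Dg_bracket_val u k x a b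
    have hx1diag : ∀ a, x1.val a a = 0 := by intro a; rw [hx1val]; ring_nf
    have hx1uv : x1.val u v = x.val u v := by
      rw [hx1val, chi_eval u k u (Or.inl rfl) (Ne.symm hku),
        chi_eval0 u k v (Ne.symm huvne) (Ne.symm hkv)]
      ring
    obtain ⟨y, hyI, hy1, hy2, hy3⟩ := strip hodd I u v huvne x1 hx1I hx1diag
    have hyuv : y.val u v ≠ 0 := by rw [hy1, hx1uv]; exact huv
    exact ⟨k, v, Ne.symm hkv, smul_eb_mem I k v (Ne.symm hkv) (y.val u v) hyuv
      (z := ⁅Eb K k u (Ne.symm hku), y⁆) (lie_mem_right K _ I _ _ hyI)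
      (bracket_pair_supported u v k hku hkv huvne y hy3)⟩
  · -- diagonal case
    push_neg at hod
    have hxd : ∀ a b : Fin (n+1), a ≠ b → x.val a b = 0 := hod
    have : ∃ i j : Fin (n+1), i ≠ j ∧ x.val i i ≠ x.val j j := by
      by_contra h
      push_neg at h
      have hall : ∀ a : Fin (n+1), x.val a a = x.val 0 0 := by
        intro a
        by_cases ha : a = 0
        · rw [ha]
        · exact h a 0 ha
      have htr : Matrix.trace x.val = 0 := x.property
      rw [Matrix.trace] at htr
      have : (n + 1 : K) * x.val 0 0 = 0 := by
        rw [← htr]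
        simp only [Matrix.diag]
        rw [Finset.sum_congr rfl (fun a _ => hall a), Finset.sum_const]
        simp [mul_comm]
      have hKn : ((n : K) + 1) ≠ 0 := by
        have := (CharP.cast_eq_zero_iff K 2 (n+1)).not.mpr hodd
        simpa using this
      have hx00 : x.val 0 0 = 0 := by
        rcases mul_eq_zero.mp this with h' | h'
        · exact absurd h' hKn
        · exact h'
      apply hxne
      apply Subtype.ext
      ext a b
      by_cases hab : a = b
      · subst hab; rw [hall a, hx00]; simp
      · rw [hxd a b hab]; simp
    obtain ⟨i, j, hij, hne⟩ := this
    exact ⟨i, j, Ne.symm hij, smul_eb_mem I i j (Ne.symm hij) (x.val i i - x.val j j)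
      (sub_ne_zero.mpr hne) (z := ⁅x, Eb K i j (Ne.symm hij)⁆) (lie_mem_left K _ I _ _ hx)
      (bracket_diag_supported i j hij x hxd)⟩

lemma bracket_eb (a b c : Fin (n+1)) (hba : b ≠ a) (hcb : c ≠ b) (hca : c ≠ a) :
    (⁅Eb K a b hba, Eb K b c hcb⁆ : sl (Fin (n+1)) K) = Eb K a c hca := by
  apply Subtype.ext
  show Matrix.single a b 1 * Matrix.single b c 1 -
    Matrix.single b c 1 * Matrix.single a b 1 = Matrix.single a c 1
  rw [Matrix.single_mul_single_same, Matrix.single_mul_single_of_ne _ _ _ _ hca]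
  simp

/-- From one elementary matrix in the ideal, get all of them. -/
lemma spread (hn : 2 ≤ n) (I : LieIdeal K (sl (Fin (n+1)) K)) (i j : Fin (n+1)) (hji : j ≠ i)
    (hE : Eb K i j hji ∈ I) :
    ∀ (p q : Fin (n+1)) (hqp : q ≠ p), Eb K p q hqp ∈ I := by
  have hij : i ≠ j := Ne.symm hji
  have row : ∀ (q : Fin (n+1)) (hqi : q ≠ i), q ≠ j → Eb K i q hqi ∈ I := by
    intro q hqi hqj
    rw [← bracket_eb i j q hji hqj hqi]
    exact lie_mem_left K _ I _ _ hE
  have col : ∀ (p : Fin (n+1)) (hjp : j ≠ p), p ≠ i → Eb K p j hjp ∈ I := by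
    intro p hjp hpi
    rw [← bracket_eb p i j (Ne.symm hpi) hji hjp]
    exact lie_mem_right K _ I _ _ hE
  obtain ⟨k, hki, hkj⟩ := exists_third hn i j
  have hEik : Eb K i k hki ∈ I := row k hki hkj
  have hEjk : Eb K j k hkj ∈ I := by
    rw [← bracket_eb j i k hij hki hkj]
    exact lie_mem_right K _ I _ _ hEik
  have hEji : Eb K j i hij ∈ I := by
    rw [← bracket_eb j k i hkj (Ne.symm hki) hij]
    exact lie_mem_left K _ I _ _ hEjk
  intro p q hqp
  by_cases hpi : p = i
  · subst hpi
    by_cases hqj : q = j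
    · subst hqj; exact hE
    · exact row q hqp hqj
  · by_cases hpj : p = j
    · subst hpj
      by_cases hqi : q = i
      · subst hqi; exact hEji
      · -- E j q = ⁅E j i, E i q⁆ with E i q ∈ I
        rw [← bracket_eb p i q hij hqi hqp]
        exact lie_mem_right K _ I _ _ (row q hqi hqp)
    · by_cases hqi : q = i
      · subst hqi
        -- E p i = ⁅E p j, E j i⁆ with E j i ∈ I
        rw [← bracket_eb p j q (Ne.symm hpj) hij hqp]
        exact lie_mem_right K _ I _ _ hEji
      · by_cases hqj : q = j
        · subst hqj; exact col p hqp hpi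
        · -- E p q = ⁅E p i, E i q⁆ with E i q ∈ I
          rw [← bracket_eb p i q (fun h => hpi h.symm) hqi hqp]
          exact lie_mem_right K _ I _ _ (row q hqi hqj)

noncomputable def Hd (K : Type*) [Field K] [CharP K 2] {n : ℕ} (k : Fin (n+1)) :
    sl (Fin (n+1)) K :=
  ⟨Matrix.single k k 1 - Matrix.single 0 0 1,
   show _ ∈ LinearMap.ker (Matrix.traceLinearMap _ K K) by
     simp [Matrix.trace_sub, Matrix.trace, Matrix.single]⟩

lemma Hd_eq (k : Fin (n+1)) (hk : k ≠ 0) :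
    Hd K k = ⁅Eb K k 0 (Ne.symm hk), Eb K 0 k hk⁆ := by
  apply Subtype.ext
  show _ = Matrix.single k 0 1 * Matrix.single 0 k 1 -
    Matrix.single 0 k 1 * Matrix.single k 0 1
  rw [Matrix.single_mul_single_same, Matrix.single_mul_single_same]
  norm_num
  rfl

open Finset in
lemma diag_mem (I : LieIdeal K (sl (Fin (n+1)) K)) (hH : ∀ k : Fin (n+1), k ≠ 0 → Hd K k ∈ I) :
    ∀ x : sl (Fin (n+1)) K, (∀ a b : Fin (n+1), a ≠ b → x.val a b = 0) → x ∈ I := by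
  classical
  set dsupp : sl (Fin (n+1)) K → Finset (Fin (n+1)) := fun z =>
    Finset.univ.filter (fun k => k ≠ 0 ∧ z.val k k ≠ 0) with hdsupp
  suffices H : ∀ (N : ℕ) (x : sl (Fin (n+1)) K), (∀ a b : Fin (n+1), a ≠ b → x.val a b = 0) →
      (dsupp x).card ≤ N → x ∈ I by
    intro x hx
    exact H (dsupp x).card x hx le_rfl
  have base : ∀ x : sl (Fin (n+1)) K, (∀ a b : Fin (n+1), a ≠ b → x.val a b = 0) →
      dsupp x = ∅ → x ∈ I := by
    intro x hd hemp
    have hzero : ∀ k : Fin (n+1), k ≠ 0 → x.val k k = 0 := by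
      intro k hk
      by_contra hne
      have : k ∈ dsupp x := by simp [hdsupp, hk, hne]
      simp [hemp] at this
    have htr : Matrix.trace x.val = 0 := x.property
    have hx00 : x.val 0 0 = 0 := by
      rw [Matrix.trace] at htr
      simp only [Matrix.diag_apply] at htr
      rwa [Finset.sum_eq_single_of_mem 0 (Finset.mem_univ 0)
        (fun b _ hb => hzero b hb)] at htr
    have : x = 0 := by
      apply Subtype.ext
      ext a b
      by_cases hab : a = b
      · subst hab
        by_cases ha : a = 0
        · subst ha; simpa using hx00
        · simpa using hzero a ha
      · simpa using hd a b hab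
    rw [this]; exact I.zero_mem
  intro N
  induction N with
  | zero =>
    intro x hd hcard
    exact base x hd (Finset.card_eq_zero.mp (Nat.le_zero.mp hcard))
  | succ N ih =>
    intro x hd hcard
    by_cases hemp : dsupp x = ∅
    · exact base x hd hemp
    · obtain ⟨k, hk⟩ := Finset.nonempty_of_ne_empty hemp
      simp only [hdsupp, Finset.mem_filter, Finset.mem_univ, true_and] at hk
      obtain ⟨hk0, hkk⟩ := hk
      set x' : sl (Fin (n+1)) K := x - x.val k k • Hd K k with hx'
      have hHd : ∀ a b : Fin (n+1), (Hd K k).val a b =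
          (if k = a ∧ k = b then (1:K) else 0) -
          (if (0 : Fin (n+1)) = a ∧ (0 : Fin (n+1)) = b then (1:K) else 0) := fun a b => rfl
      have hH' : ∀ a b : Fin (n+1), x'.val a b = x.val a b -
          x.val k k * (Hd K k).val a b := fun a b => rfl
      have hd' : ∀ a b : Fin (n+1), a ≠ b → x'.val a b = 0 := by
        intro a b hab
        rw [hH', hHd, hd a b hab,
          if_neg (by rintro ⟨rfl, rfl⟩; exact hab rfl),
          if_neg (by rintro ⟨rfl, rfl⟩; exact hab rfl)]
        ring
      have hx'kk : x'.val k k = 0 := by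
        rw [hH', hHd, if_pos ⟨rfl, rfl⟩,
          if_neg (by rintro ⟨h, -⟩; exact hk0 h.symm)]
        ring
      have hunch : ∀ l : Fin (n+1), l ≠ k → l ≠ 0 → x'.val l l = x.val l l := by
        intro l hlk hl0
        rw [hH', hHd, if_neg (by rintro ⟨h, -⟩; exact hlk h.symm),
          if_neg (by rintro ⟨h, -⟩; exact hl0 h.symm)]
        ring
      have hsub : dsupp x' ⊂ dsupp x := by
        constructor
        · intro l hl
          simp only [hdsupp, Finset.mem_filter, Finset.mem_univ, true_and] at hl ⊢
          obtain ⟨hl0, hll⟩ := hl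
          by_cases hlk : l = k
          · subst hlk; exact absurd hx'kk hll
          · exact ⟨hl0, by rwa [hunch l hlk hl0] at hll⟩
        · intro hsub'
          have : k ∈ dsupp x' := hsub' (by simp [hdsupp, hk0, hkk])
          simp only [hdsupp, Finset.mem_filter, Finset.mem_univ, true_and] at this
          exact this.2 hx'kk
      have hcard' : (dsupp x').card ≤ N := by
        have := Finset.card_lt_card hsub; omega
      have hx'I : x' ∈ I := ih x' hd' hcard'
      have : x = x' + x.val k k • Hd K k := by rw [hx']; abel
      rw [this]
      exact I.add_mem hx'I (I.smul_mem _ (hH k hk0))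

open Finset in
lemma full_mem (I : LieIdeal K (sl (Fin (n+1)) K))
    (hEb : ∀ (p q : Fin (n+1)) (hqp : q ≠ p), Eb K p q hqp ∈ I)
    (hH : ∀ k : Fin (n+1), k ≠ 0 → Hd K k ∈ I) :
    ∀ x : sl (Fin (n+1)) K, x ∈ I := by
  classical
  set osupp : sl (Fin (n+1)) K → Finset (Fin (n+1) × Fin (n+1)) := fun z =>
    Finset.univ.filter (fun w => w.1 ≠ w.2 ∧ z.val w.1 w.2 ≠ 0) with hosupp
  suffices H : ∀ (N : ℕ) (x : sl (Fin (n+1)) K), (osupp x).card ≤ N → x ∈ I by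
    intro x; exact H (osupp x).card x le_rfl
  have base : ∀ x : sl (Fin (n+1)) K, osupp x = ∅ → x ∈ I := by
    intro x hemp
    apply diag_mem I hH
    intro a b hab
    by_contra hne
    have : (a, b) ∈ osupp x := by simp [hosupp, hab, hne]
    simp [hemp] at this
  intro N
  induction N with
  | zero => intro x hcard; exact base x (Finset.card_eq_zero.mp (Nat.le_zero.mp hcard))
  | succ N ih =>
    intro x hcard
    by_cases hemp : osupp x = ∅
    · exact base x hemp
    · obtain ⟨⟨p, q⟩, hpq⟩ := Finset.nonempty_of_ne_empty hemp
      simp only [hosupp, Finset.mem_filter, Finset.mem_univ, true_and] at hpq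
      obtain ⟨hpqne, hxpq⟩ := hpq
      set x' : sl (Fin (n+1)) K := x - x.val p q • Eb K p q (Ne.symm hpqne) with hx'
      have hH' : ∀ a b : Fin (n+1), x'.val a b = x.val a b -
          x.val p q * (if p = a ∧ q = b then (1:K) else 0) := fun a b => rfl
      have hx'pq : x'.val p q = 0 := by
        rw [hH', if_pos ⟨rfl, rfl⟩]; ring
      have hunch : ∀ a b : Fin (n+1), (a, b) ≠ (p, q) → x'.val a b = x.val a b := by
        intro a b hab
        rw [hH', if_neg (by rintro ⟨rfl, rfl⟩; exact hab rfl)]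
        ring
      have hsub : osupp x' ⊂ osupp x := by
        constructor
        · intro w hw
          simp only [hosupp, Finset.mem_filter, Finset.mem_univ, true_and] at hw ⊢
          obtain ⟨hw1, hw2⟩ := hw
          by_cases hwpq : (w.1, w.2) = (p, q)
          · exfalso
            rw [Prod.mk.injEq] at hwpq
            obtain ⟨h1, h2⟩ := hwpq
            rw [h1, h2] at hw2
            exact hw2 hx'pq
          · exact ⟨hw1, by rwa [hunch w.1 w.2 hwpq] at hw2⟩
        · intro hsub'
          have : (p, q) ∈ osupp x' := hsub' (by simp [hosupp, hpqne, hxpq])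
          simp only [hosupp, Finset.mem_filter, Finset.mem_univ, true_and] at this
          exact this.2 hx'pq
      have hcard' : (osupp x').card ≤ N := by
        have := Finset.card_lt_card hsub; omega
      have hx'I : x' ∈ I := ih x' hcard'
      have : x = x' + x.val p q • Eb K p q (Ne.symm hpqne) := by rw [hx']; abel
      rw [this]
      exact I.add_mem hx'I (I.smul_mem _ (hEb p q (Ne.symm hpqne)))

theorem sl_isSimple_aux {K : Type*} [Field K] [CharP K 2] (n : ℕ)
    (hn : 2 ≤ n) (hodd : ¬ (2 ∣ (n + 1))) :
    LieAlgebra.IsSimple K (LieAlgebra.SpecialLinear.sl (Fin (n + 1)) K) := by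
  constructor
  · intro I
    by_cases hI : I = ⊥
    · left; exact hI
    · right
      have hex : ∃ x ∈ I, x ≠ 0 := by
        by_contra h
        push_neg at h
        exact hI ((LieSubmodule.eq_bot_iff I).mpr h)
      obtain ⟨x, hx, hxne⟩ := hex
      obtain ⟨p, q, hqp, hEb⟩ := exists_eb_mem hn hodd I x hx hxne
      have hall := spread hn I p q hqp hEb
      have hH : ∀ k : Fin (n+1), k ≠ 0 → Hd K k ∈ I := by
        intro k hk
        rw [Hd_eq k hk]
        exact lie_mem_left K _ I _ _ (hall k 0 (Ne.symm hk))
      rw [eq_top_iff]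
      exact fun y _ => full_mem I hall hH y
  · apply sl_non_abelian
    simp only [Fintype.card_fin]
    omega

end SlIsSimpleAux

/-- Let `K` be an algebraically closed field of characteristic 2 and `n ≥ 2`
with `n + 1` not divisible by 2.  Then `sl_{n+1}(K)` is a simple Lie algebra. -/
theorem sl_isSimple {K : Type*} [Field K] [IsAlgClosed K] [CharP K 2] (n : ℕ)
    (hn : 2 ≤ n) (hodd : ¬ (2 ∣ (n + 1))) :
    LieAlgebra.IsSimple K (LieAlgebra.SpecialLinear.sl (Fin (n + 1)) K) := by
  exact SlIsSimpleAux.sl_isSimple_aux n hn hodd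
end

section
/- Let K be a field of characteristic 2 and m ≥ 3. The derived algebra sp_{2m}(K)^{(1)} of the symplectic Lie algebra sp_{2m}(K) equals the set of block matrices [[a, b],[c, aᵀ]] with a ∈ gl_m(K) arbitrary and b, c alternating m×m matrices (symmetric with zero diagonal). -/
open Matrix

/-- An `m × m` matrix is alternating if it is symmetric with zero diagonal. -/
def Matrix.IsAlternating {K : Type*} [Zero K] {m : ℕ} (M : Matrix (Fin m) (Fin m) K) : Prop :=
  M.IsSymm ∧ ∀ i, M i i = 0

/-- The symplectic Lie algebra `sp_{2m}(K)` in characteristic 2, as the set of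
block matrices `[[a, b], [c, aᵀ]]` with `b`, `c` symmetric. -/
def spSet (K : Type*) [Field K] (m : ℕ) :
    Set (Matrix (Fin m ⊕ Fin m) (Fin m ⊕ Fin m) K) :=
  {X | X.toBlocks₂₂ = (X.toBlocks₁₁)ᵀ ∧ (X.toBlocks₁₂).IsSymm ∧ (X.toBlocks₂₁).IsSymm}

/-- The span of all commutators of elements of a set of matrices. -/
def bracketSpan (K : Type*) [Field K] {m : ℕ}
    (S : Set (Matrix (Fin m ⊕ Fin m) (Fin m ⊕ Fin m) K)) :
    Submodule K (Matrix (Fin m ⊕ Fin m) (Fin m ⊕ Fin m) K) :=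
  Submodule.span K {z | ∃ x ∈ S, ∃ y ∈ S, z = ⁅x, y⁆}

section Aux

variable {K : Type*} [Field K] [CharP K 2] {m : ℕ}

/-- In characteristic 2, matrix subtraction is addition. -/
lemma matSub {n l : Type*} (A B : Matrix n l K) : A - B = A + B := by
  ext i j
  simp only [Matrix.sub_apply, Matrix.add_apply, CharTwo.sub_eq_add]

lemma lieEq {n : Type*} [Fintype n] (x y : Matrix n n K) : ⁅x, y⁆ = x * y + y * x := by
  rw [Ring.lie_def, matSub]

lemma stdT (i j : Fin m) (c : K) :
    (Matrix.single i j c)ᵀ = Matrix.single j i c := by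
  ext p q
  simp [Matrix.single, Matrix.transpose_apply, and_comm]

lemma alt_add_transpose (M : Matrix (Fin m) (Fin m) K) : (M + Mᵀ).IsAlternating := by
  constructor
  · show (M + Mᵀ)ᵀ = M + Mᵀ
    rw [Matrix.transpose_add, Matrix.transpose_transpose, add_comm]
  · intro i
    simp [Matrix.add_apply, CharTwo.add_self_eq_zero]

lemma A_mem_sp (a : Matrix (Fin m) (Fin m) K) : fromBlocks a 0 0 aᵀ ∈ spSet K m := by
  refine ⟨?_, ?_, ?_⟩ <;>
    simp [spSet, Matrix.toBlocks_fromBlocks₁₁, Matrix.toBlocks_fromBlocks₁₂,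
      Matrix.toBlocks_fromBlocks₂₁, Matrix.toBlocks_fromBlocks₂₂, Matrix.isSymm_zero]

lemma B_mem_sp {b : Matrix (Fin m) (Fin m) K} (hb : b.IsSymm) :
    fromBlocks 0 b 0 0 ∈ spSet K m := by
  refine ⟨?_, ?_, ?_⟩ <;>
    simp [spSet, Matrix.toBlocks_fromBlocks₁₁, Matrix.toBlocks_fromBlocks₁₂,
      Matrix.toBlocks_fromBlocks₂₁, Matrix.toBlocks_fromBlocks₂₂, Matrix.isSymm_zero, hb]

lemma C_mem_sp {c : Matrix (Fin m) (Fin m) K} (hc : c.IsSymm) :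
    fromBlocks 0 0 c 0 ∈ spSet K m := by
  refine ⟨?_, ?_, ?_⟩ <;>
    simp [spSet, Matrix.toBlocks_fromBlocks₁₁, Matrix.toBlocks_fromBlocks₁₂,
      Matrix.toBlocks_fromBlocks₂₁, Matrix.toBlocks_fromBlocks₂₂, Matrix.isSymm_zero, hc]

/-- generator for the `a`-part -/
lemma genA (i j : Fin m) :
    fromBlocks (Matrix.single i j (1:K)) 0 0 (Matrix.single j i (1:K)) ∈
      bracketSpan K (spSet K m) := by
  by_cases hij : i = j
  · subst hij
    apply Submodule.subset_span
    refine ⟨fromBlocks 0 (Matrix.single i i (1:K)) 0 0, B_mem_sp ?_,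
      fromBlocks 0 0 (Matrix.single i i (1:K)) 0, C_mem_sp ?_, ?_⟩
    · show _ᵀ = _; rw [stdT]
    · show _ᵀ = _; rw [stdT]
    · rw [lieEq, Matrix.fromBlocks_multiply, Matrix.fromBlocks_multiply,
        Matrix.fromBlocks_add]
      simp [Matrix.single_mul_single_same]
  · apply Submodule.subset_span
    refine ⟨fromBlocks 0 (Matrix.single i i (1:K)) 0 0, B_mem_sp ?_,
      fromBlocks 0 0 (Matrix.single i j (1:K) + Matrix.single j i (1:K)) 0, C_mem_sp ?_, ?_⟩
    · show _ᵀ = _; rw [stdT]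
    · show _ᵀ = _; rw [Matrix.transpose_add, stdT, stdT, add_comm]
    · rw [lieEq, Matrix.fromBlocks_multiply, Matrix.fromBlocks_multiply,
        Matrix.fromBlocks_add]
      have h1 : Matrix.single i i (1:K) * Matrix.single j i (1:K) = 0 :=
        Matrix.single_mul_single_of_ne (c := (1:K)) i i j hij 1
      have h2 : Matrix.single i j (1:K) * Matrix.single i i (1:K) = 0 :=
        Matrix.single_mul_single_of_ne (c := (1:K)) i j i (Ne.symm hij) 1
      simp [mul_add, add_mul, Matrix.single_mul_single_same, h1, h2]

/-- generator for the `b`-part -/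
lemma genB (N : Matrix (Fin m) (Fin m) K) :
    fromBlocks 0 (N + Nᵀ) 0 0 ∈ bracketSpan K (spSet K m) := by
  apply Submodule.subset_span
  refine ⟨fromBlocks N 0 0 Nᵀ, A_mem_sp N, fromBlocks 0 1 0 0, B_mem_sp Matrix.isSymm_one, ?_⟩
  rw [Ring.lie_def, matSub, Matrix.fromBlocks_multiply, Matrix.fromBlocks_multiply,
    Matrix.fromBlocks_add]
  simp

/-- generator for the `c`-part -/
lemma genC (N : Matrix (Fin m) (Fin m) K) :
    fromBlocks 0 0 (N + Nᵀ) 0 ∈ bracketSpan K (spSet K m) := by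
  apply Submodule.subset_span
  refine ⟨fromBlocks Nᵀ 0 0 N, ?_, fromBlocks 0 0 1 0, C_mem_sp Matrix.isSymm_one, ?_⟩
  · have := A_mem_sp (K := K) Nᵀ
    rwa [Matrix.transpose_transpose] at this
  rw [Ring.lie_def, matSub, Matrix.fromBlocks_multiply, Matrix.fromBlocks_multiply,
    Matrix.fromBlocks_add]
  simp

lemma PA (a : Matrix (Fin m) (Fin m) K) :
    fromBlocks a 0 0 aᵀ ∈ bracketSpan K (spSet K m) := by
  have hdecomp : fromBlocks a 0 0 aᵀ =
      ∑ i : Fin m, ∑ j : Fin m,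
        a i j • fromBlocks (Matrix.single i j (1:K)) 0 0 (Matrix.single j i (1:K)) := by
    ext p q
    rcases p with p | p <;> rcases q with q | q <;>
      simp [Matrix.sum_apply, Matrix.fromBlocks_apply₁₁, Matrix.fromBlocks_apply₁₂,
        Matrix.fromBlocks_apply₂₁, Matrix.fromBlocks_apply₂₂, Matrix.single,
        Matrix.transpose_apply, ite_and, Finset.sum_ite_eq, Finset.sum_ite_eq']
  rw [hdecomp]
  exact Submodule.sum_mem _ fun i _ => Submodule.sum_mem _ fun j _ =>
    Submodule.smul_mem _ _ (genA i j)

lemma PB {b : Matrix (Fin m) (Fin m) K} (hb : b.IsAlternating) :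
    fromBlocks 0 b 0 0 ∈ bracketSpan K (spSet K m) := by
  set N : Matrix (Fin m) (Fin m) K := Matrix.of fun i j => if i < j then b i j else 0 with hN
  have hbN : b = N + Nᵀ := by
    ext i j
    rcases lt_trichotomy i j with h | h | h
    · simp [Matrix.add_apply, hN, Matrix.transpose_apply, h, not_lt_of_gt h]
    · subst h; simp [Matrix.add_apply, hN, Matrix.transpose_apply, hb.2 i]
    · have : b j i = b i j := hb.1.apply i j
      simp [Matrix.add_apply, hN, Matrix.transpose_apply, h, not_lt_of_gt h, this]
  rw [hbN]
  exact genB N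

lemma PC {c : Matrix (Fin m) (Fin m) K} (hc : c.IsAlternating) :
    fromBlocks 0 0 c 0 ∈ bracketSpan K (spSet K m) := by
  set N : Matrix (Fin m) (Fin m) K := Matrix.of fun i j => if i < j then c i j else 0 with hN
  have hcN : c = N + Nᵀ := by
    ext i j
    rcases lt_trichotomy i j with h | h | h
    · simp [Matrix.add_apply, hN, Matrix.transpose_apply, h, not_lt_of_gt h]
    · subst h; simp [Matrix.add_apply, hN, Matrix.transpose_apply, hc.2 i]
    · have : c j i = c i j := hc.1.apply i j
      simp [Matrix.add_apply, hN, Matrix.transpose_apply, h, not_lt_of_gt h, this]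
  rw [hcN]
  exact genC N

/-- The target set, as a submodule. -/
def altSub (K : Type*) [Field K] [CharP K 2] (m : ℕ) :
    Submodule K (Matrix (Fin m ⊕ Fin m) (Fin m ⊕ Fin m) K) where
  carrier := {X | X.toBlocks₂₂ = (X.toBlocks₁₁)ᵀ ∧
    (X.toBlocks₁₂).IsAlternating ∧ (X.toBlocks₂₁).IsAlternating}
  add_mem' := by
    rintro X Y ⟨h1, ⟨h2s, h2d⟩, ⟨h3s, h3d⟩⟩ ⟨g1, ⟨g2s, g2d⟩, ⟨g3s, g3d⟩⟩
    refine ⟨?_, ⟨?_, ?_⟩, ⟨?_, ?_⟩⟩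
    · show (X + Y).toBlocks₂₂ = ((X + Y).toBlocks₁₁)ᵀ
      have e2 : (X + Y).toBlocks₂₂ = X.toBlocks₂₂ + Y.toBlocks₂₂ := rfl
      have e1 : (X + Y).toBlocks₁₁ = X.toBlocks₁₁ + Y.toBlocks₁₁ := rfl
      rw [e1, e2, h1, g1, Matrix.transpose_add]
    · have e : (X + Y).toBlocks₁₂ = X.toBlocks₁₂ + Y.toBlocks₁₂ := rfl
      rw [e]; exact h2s.add g2s
    · intro i
      have e : (X + Y).toBlocks₁₂ = X.toBlocks₁₂ + Y.toBlocks₁₂ := rfl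
      rw [e, Matrix.add_apply, h2d, g2d, add_zero]
    · have e : (X + Y).toBlocks₂₁ = X.toBlocks₂₁ + Y.toBlocks₂₁ := rfl
      rw [e]; exact h3s.add g3s
    · intro i
      have e : (X + Y).toBlocks₂₁ = X.toBlocks₂₁ + Y.toBlocks₂₁ := rfl
      rw [e, Matrix.add_apply, h3d, g3d, add_zero]
  zero_mem' := by
    refine ⟨rfl, ⟨Matrix.isSymm_zero, fun i => rfl⟩, ⟨Matrix.isSymm_zero, fun i => rfl⟩⟩
  smul_mem' := by
    rintro r X ⟨h1, ⟨h2s, h2d⟩, ⟨h3s, h3d⟩⟩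
    refine ⟨?_, ⟨?_, ?_⟩, ⟨?_, ?_⟩⟩
    · show (r • X).toBlocks₂₂ = ((r • X).toBlocks₁₁)ᵀ
      have e2 : (r • X).toBlocks₂₂ = r • X.toBlocks₂₂ := rfl
      have e1 : (r • X).toBlocks₁₁ = r • X.toBlocks₁₁ := rfl
      rw [e1, e2, h1, Matrix.transpose_smul]
    · have e : (r • X).toBlocks₁₂ = r • X.toBlocks₁₂ := rfl
      rw [e]; show (r • X.toBlocks₁₂)ᵀ = _
      rw [Matrix.transpose_smul, h2s.eq]
    · intro i
      have e : (r • X).toBlocks₁₂ = r • X.toBlocks₁₂ := rfl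
      rw [e, Matrix.smul_apply, h2d, smul_zero]
    · have e : (r • X).toBlocks₂₁ = r • X.toBlocks₂₁ := rfl
      rw [e]; show (r • X.toBlocks₂₁)ᵀ = _
      rw [Matrix.transpose_smul, h3s.eq]
    · intro i
      have e : (r • X).toBlocks₂₁ = r • X.toBlocks₂₁ := rfl
      rw [e, Matrix.smul_apply, h3d, smul_zero]

/-- Any commutator of elements of `spSet` lies in `altSub`. -/
lemma bracket_mem_altSub {x y : Matrix (Fin m ⊕ Fin m) (Fin m ⊕ Fin m) K}
    (hx : x ∈ spSet K m) (hy : y ∈ spSet K m) : ⁅x, y⁆ ∈ altSub K m := by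
  obtain ⟨hx1, hx2, hx3⟩ := hx
  obtain ⟨hy1, hy2, hy3⟩ := hy
  set a := x.toBlocks₁₁ with ha
  set b := x.toBlocks₁₂ with hb
  set c := x.toBlocks₂₁ with hc
  set a' := y.toBlocks₁₁ with ha'
  set b' := y.toBlocks₁₂ with hb'
  set c' := y.toBlocks₂₁ with hc'
  have hxe : x = fromBlocks a b c aᵀ := by
    rw [← hx1]; exact (Matrix.fromBlocks_toBlocks x).symm
  have hye : y = fromBlocks a' b' c' a'ᵀ := by
    rw [← hy1]; exact (Matrix.fromBlocks_toBlocks y).symm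
  rw [hxe, hye, lieEq, Matrix.fromBlocks_multiply, Matrix.fromBlocks_multiply,
    Matrix.fromBlocks_add]
  refine ⟨?_, ?_, ?_⟩
  · show (c * b' + aᵀ * a'ᵀ) + (c' * b + a'ᵀ * aᵀ) = ((a * a' + b * c') + (a' * a + b' * c))ᵀ
    simp only [Matrix.transpose_add, Matrix.transpose_mul, hx2.eq, hx3.eq, hy2.eq, hy3.eq]
    abel
  · convert alt_add_transpose (a * b' + a' * b) using 1
    simp only [Matrix.toBlocks_fromBlocks₁₂, Matrix.transpose_add, Matrix.transpose_mul,
      Matrix.transpose_transpose, hx2.eq, hy2.eq]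
    abel
  · convert alt_add_transpose (c * a' + aᵀ * c') using 1
    simp only [Matrix.toBlocks_fromBlocks₂₁, Matrix.transpose_add, Matrix.transpose_mul,
      Matrix.transpose_transpose, hx3.eq, hy3.eq]
    abel
  

end Aux

/-- Let `K` be a field of characteristic 2 and `m ≥ 3`.  The derived algebra
`sp_{2m}(K)⁽¹⁾` equals the set of block matrices `[[a, b], [c, aᵀ]]` with `a`
arbitrary and `b`, `c` alternating. -/
theorem sp_derived_one {K : Type*} [Field K] [CharP K 2] (m : ℕ) (hm : 3 ≤ m) :
    (↑(bracketSpan K (spSet K m)) : Set (Matrix (Fin m ⊕ Fin m) (Fin m ⊕ Fin m) K)) =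
      {X | X.toBlocks₂₂ = (X.toBlocks₁₁)ᵀ ∧
        (X.toBlocks₁₂).IsAlternating ∧ (X.toBlocks₂₁).IsAlternating} := by
  ext X
  constructor
  · intro hX
    have hle : bracketSpan K (spSet K m) ≤ altSub K m := by
      rw [bracketSpan]
      apply Submodule.span_le.mpr
      rintro z ⟨x, hx, y, hy, rfl⟩
      exact bracket_mem_altSub hx hy
    exact hle hX
  · rintro ⟨h1, h2, h3⟩
    show X ∈ bracketSpan K (spSet K m)
    have hXe : X = fromBlocks X.toBlocks₁₁ X.toBlocks₁₂ X.toBlocks₂₁ (X.toBlocks₁₁)ᵀ := by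
      rw [← h1]; exact (Matrix.fromBlocks_toBlocks X).symm
    have hsum : fromBlocks X.toBlocks₁₁ X.toBlocks₁₂ X.toBlocks₂₁ (X.toBlocks₁₁)ᵀ =
        fromBlocks X.toBlocks₁₁ 0 0 (X.toBlocks₁₁)ᵀ +
        fromBlocks 0 X.toBlocks₁₂ 0 0 + fromBlocks 0 0 X.toBlocks₂₁ 0 := by
      rw [Matrix.fromBlocks_add, Matrix.fromBlocks_add]
      simp
    rw [hXe, hsum]
    exact Submodule.add_mem _ (Submodule.add_mem _ (PA _) (PB h2)) (PC h3)
end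

section
/- Let K be a field of characteristic 2 and m ≥ 3. The subspace sp_{2m}(K)^{(2)} = {[[a,b],[c,aᵀ]] : b,c alternating, tr(a) = 0} is closed under the squaring map α ↦ α². -/
open Matrix

/-- The set `sp_{2m}(K)⁽²⁾` of block matrices `[[a,b],[c,aᵀ]]` with `b`, `c`
alternating and `tr a = 0`. -/
def sp2Set (K : Type*) [Field K] (m : ℕ) :
    Set (Matrix (Fin m ⊕ Fin m) (Fin m ⊕ Fin m) K) :=
  {X | X.toBlocks₂₂ = (X.toBlocks₁₁)ᵀ ∧
    (X.toBlocks₁₂).IsAlternating ∧ (X.toBlocks₂₁).IsAlternating ∧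
    Matrix.trace X.toBlocks₁₁ = 0}

lemma sum_symm_offdiag_zero {K : Type*} [Field K] [CharP K 2] {m : ℕ} (f : Fin m → Fin m → K)
    (hs : ∀ i j, f j i = f i j) (hd : ∀ i, f i i = 0) :
    ∑ i, ∑ j, f i j = 0 := by
  rw [← Finset.sum_product']
  refine Finset.sum_ninvolution Prod.swap (fun p => ?_) (fun p h hp => h ?_)
    (fun p => Finset.mem_univ _) (fun p => Prod.swap_swap p)
  · simp only [Prod.fst_swap, Prod.snd_swap, hs p.1 p.2, CharTwo.add_self_eq_zero]
  · have h1 : p.2 = p.1 := congrArg Prod.fst hp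
    calc f p.1 p.2 = f p.1 p.1 := by rw [h1]
    _ = 0 := hd p.1

lemma trace_mul_self_zero {K : Type*} [Field K] [CharP K 2] {m : ℕ} (a : Matrix (Fin m) (Fin m) K)
    (ha : a.trace = 0) : (a * a).trace = 0 := by
  have : (a * a).trace = ∑ i, ∑ k, a i k * a k i := by
    simp [Matrix.trace, Matrix.mul_apply, Matrix.diag]
  rw [this]
  have key : ∑ i, ∑ k, (a i k * a k i + (if k = i then a i i * a i i else 0)) = 0 := by
    apply sum_symm_offdiag_zero
    · intro i j; by_cases h : i = j <;> simp [h, mul_comm, eq_comm]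
    · intro i; simp [CharTwo.add_self_eq_zero]
  rw [Finset.sum_congr rfl (fun i _ => Finset.sum_add_distrib)] at key
  rw [Finset.sum_add_distrib] at key
  simp only [Finset.sum_ite_eq, Finset.sum_ite_eq', Finset.mem_univ, if_true] at key
  have h2 : ∑ i : Fin m, a i i * a i i = 0 := by
    rw [← CharTwo.sum_mul_self]
    rw [show (∑ i, a i i) = a.trace from rfl, ha, mul_zero]
  rw [h2, add_zero] at key
  exact key

lemma trace_mul_symm_zero {K : Type*} [Field K] [CharP K 2] {m : ℕ}
    (b c : Matrix (Fin m) (Fin m) K) (hb : b.IsSymm) (hc : c.IsSymm)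
    (hbd : ∀ i, b i i = 0) : (b * c).trace = 0 := by
  have : (b * c).trace = ∑ i, ∑ k, b i k * c k i := by
    simp [Matrix.trace, Matrix.mul_apply, Matrix.diag]
  rw [this]
  apply sum_symm_offdiag_zero
  · intro i j
    rw [← hb.apply i j, ← hc.apply j i]
  · intro i; rw [hbd i, zero_mul]

/-- Let `K` be a field of characteristic 2 and `m ≥ 3`.  Then `sp_{2m}(K)⁽²⁾`
is closed under the squaring map `α ↦ α²`. -/
theorem sp2_closed_under_squaring {K : Type*} [Field K] [CharP K 2] (m : ℕ)
    (hm : 3 ≤ m) :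
    ∀ X ∈ sp2Set K m, X * X ∈ sp2Set K m := by
  intro X hX
  obtain ⟨h22, ⟨hbs, hbd⟩, ⟨hcs, hcd⟩, htr⟩ := hX
  set a := X.toBlocks₁₁ with ha
  set b := X.toBlocks₁₂ with hb
  set c := X.toBlocks₂₁ with hc
  have hXeq : X = Matrix.fromBlocks a b c aᵀ := by
    rw [← h22]; exact (Matrix.fromBlocks_toBlocks X).symm
  have hmul : X * X = Matrix.fromBlocks (a * a + b * c) (a * b + b * aᵀ)
      (c * a + aᵀ * c) (c * b + aᵀ * aᵀ) := by
    rw [hXeq, Matrix.fromBlocks_multiply]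
  refine ⟨?_, ⟨?_, ?_⟩, ⟨?_, ?_⟩, ?_⟩
  · rw [hmul]
    simp only [Matrix.toBlocks_fromBlocks₂₂, Matrix.toBlocks_fromBlocks₁₁]
    rw [Matrix.transpose_add, Matrix.transpose_mul, Matrix.transpose_mul, hbs.eq, hcs.eq]
    rw [add_comm]
  · rw [hmul]
    simp only [Matrix.toBlocks_fromBlocks₁₂]
    unfold Matrix.IsSymm
    rw [Matrix.transpose_add, Matrix.transpose_mul, Matrix.transpose_mul,
      Matrix.transpose_transpose, hbs.eq, add_comm]
  · rw [hmul]
    simp only [Matrix.toBlocks_fromBlocks₁₂]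
    intro i
    simp only [Matrix.add_apply, Matrix.mul_apply]
    have : ∀ k, b k i = b i k := fun k => hbs.apply i k
    simp only [Matrix.transpose_apply]
    calc ∑ k, a i k * b k i + ∑ k, b i k * a i k
        = ∑ k, a i k * b i k + ∑ k, a i k * b i k := by
          rw [Finset.sum_congr rfl fun k _ => by rw [this k],
            Finset.sum_congr rfl fun k _ => mul_comm _ _]
    _ = 0 := CharTwo.add_self_eq_zero _
  · rw [hmul]
    simp only [Matrix.toBlocks_fromBlocks₂₁]
    unfold Matrix.IsSymm
    rw [Matrix.transpose_add, Matrix.transpose_mul, Matrix.transpose_mul,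
      Matrix.transpose_transpose, hcs.eq, add_comm]
  · rw [hmul]
    simp only [Matrix.toBlocks_fromBlocks₂₁]
    intro i
    simp only [Matrix.add_apply, Matrix.mul_apply, Matrix.transpose_apply]
    have : ∀ k, c k i = c i k := fun k => hcs.apply i k
    calc ∑ k, c i k * a k i + ∑ k, a k i * c k i
        = ∑ k, c i k * a k i + ∑ k, c i k * a k i := by
          congr 1
          exact Finset.sum_congr rfl fun k _ => by rw [this k, mul_comm]
    _ = 0 := CharTwo.add_self_eq_zero _
  · rw [hmul]
    simp only [Matrix.toBlocks_fromBlocks₁₁]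
    rw [Matrix.trace_add, trace_mul_self_zero a htr, trace_mul_symm_zero b c hbs hcs hbd,
      add_zero]
end

section
/- Let K be an algebraically closed field of characteristic 2, m ≥ 3 with m odd (4 ∤ 2m). Then sp_{2m}(K)^{(2)} is a simple Lie algebra. -/
open Matrix

set_option linter.unusedSectionVars false

namespace Sp2Aux

variable {K : Type*} [Field K] [CharP K 2] {m : ℕ}

/-- standard basis matrix with entry 1 -/
def e (p q : Fin m) : Matrix (Fin m) (Fin m) K := Matrix.single p q 1

lemma e_mul (p q r s : Fin m) : (e p q : Matrix (Fin m) (Fin m) K) * e r s =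
    if q = r then e p s else 0 := by
  by_cases h : q = r
  · subst h; simp [e, single_mul_single_same]
  · simp [e, h, single_mul_single_of_ne]

lemma e_transpose (p q : Fin m) : (e p q : Matrix (Fin m) (Fin m) K)ᵀ = e q p := by
  ext a b
  simp [e, Matrix.single, and_comm, transpose_apply]

lemma e_apply (p q a b : Fin m) : (e p q : Matrix (Fin m) (Fin m) K) a b = if p = a ∧ q = b then 1 else 0 := rfl

lemma e_mul_mat (p q : Fin m) (M : Matrix (Fin m) (Fin m) K) (a b : Fin m) :
    ((e p q : Matrix (Fin m) (Fin m) K) * M) a b = if p = a then M q b else 0 := by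
  simp [e, mul_apply, Matrix.single, ite_and]

lemma mat_mul_e (r s : Fin m) (M : Matrix (Fin m) (Fin m) K) (a b : Fin m) :
    (M * (e r s : Matrix (Fin m) (Fin m) K)) a b = if s = b then M a r else 0 := by
  simp [e, mul_apply, Matrix.single, ite_and]

lemma e_mul_mat_mul (p q r s : Fin m) (M : Matrix (Fin m) (Fin m) K) :
    (e p q : Matrix (Fin m) (Fin m) K) * M * e r s = M q r • e p s := by
  ext a b
  rw [mat_mul_e, Matrix.smul_apply, e_apply]
  by_cases hb : s = b
  · subst hb
    rw [e_mul_mat]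
    by_cases ha : p = a <;> simp [ha]
  · simp [hb, and_comm]

lemma neg_mat (M : Matrix (Fin m ⊕ Fin m) (Fin m ⊕ Fin m) K) : -M = M := by
  ext a b; simp [CharTwo.neg_eq]

lemma lie_eq (X Y : Matrix (Fin m ⊕ Fin m) (Fin m ⊕ Fin m) K) : ⁅X, Y⁆ = X * Y + Y * X := by
  rw [Ring.lie_def, sub_eq_add_neg, neg_mat]

lemma lie_symm (X Y : Matrix (Fin m ⊕ Fin m) (Fin m ⊕ Fin m) K) : ⁅X, Y⁆ = ⁅Y, X⁆ := by
  rw [lie_eq, lie_eq, add_comm]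

/-- basis elements -/
def MA (p q : Fin m) : Matrix (Fin m ⊕ Fin m) (Fin m ⊕ Fin m) K :=
  fromBlocks (e p q) 0 0 (e q p)
def MB (p q : Fin m) : Matrix (Fin m ⊕ Fin m) (Fin m ⊕ Fin m) K :=
  fromBlocks 0 (e p q + e q p) 0 0
def MC (p q : Fin m) : Matrix (Fin m ⊕ Fin m) (Fin m ⊕ Fin m) K :=
  fromBlocks 0 0 (e p q + e q p) 0
def MH (p q : Fin m) : Matrix (Fin m ⊕ Fin m) (Fin m ⊕ Fin m) K :=
  fromBlocks (e p p + e q q) 0 0 (e p p + e q q)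

lemma symm_e_add (p q : Fin m) : ((e p q + e q p : Matrix (Fin m) (Fin m) K)).IsSymm := by
  rw [Matrix.IsSymm, transpose_add, e_transpose, e_transpose, add_comm]

lemma alt_e_add {p q : Fin m} (h : p ≠ q) :
    ((e p q + e q p : Matrix (Fin m) (Fin m) K)).IsAlternating := by
  refine ⟨symm_e_add p q, fun i => ?_⟩
  simp only [Matrix.add_apply, e_apply]
  split_ifs with h1 h2 h2
  · exact absurd (h1.1.trans h1.2.symm) h
  · exact absurd (h1.1.trans h1.2.symm) h
  · exact absurd (h2.1.trans h2.2.symm) (fun hh => h hh.symm)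
  · simp

lemma trace_e (p q : Fin m) : trace (e p q : Matrix (Fin m) (Fin m) K) = if p = q then 1 else 0 := by
  by_cases h : p = q
  · subst h; simp [trace, diag, e_apply]
  · rw [if_neg h, e, trace]
    have : ∀ x : Fin m, Matrix.single p q (1 : K) x x = 0 := by
      intro x
      show (if p = x ∧ q = x then (1:K) else 0) = 0
      rw [if_neg (fun hh => h (hh.1.trans hh.2.symm))]
    simp [diag, this]

lemma memA {p q : Fin m} (h : p ≠ q) : (MA p q : Matrix (Fin m ⊕ Fin m) (Fin m ⊕ Fin m) K) ∈ sp2Set K m := by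
  refine ⟨?_, ?_, ?_, ?_⟩
  · simp [MA, toBlocks_fromBlocks₁₁, toBlocks_fromBlocks₂₂, e_transpose]
  · simp only [MA, toBlocks_fromBlocks₁₂]
    exact ⟨by simp [Matrix.IsSymm], fun i => rfl⟩
  · simp only [MA, toBlocks_fromBlocks₂₁]
    exact ⟨by simp [Matrix.IsSymm], fun i => rfl⟩
  · simp [MA, toBlocks_fromBlocks₁₁, trace_e, h]

lemma memB {p q : Fin m} (h : p ≠ q) : (MB p q : Matrix (Fin m ⊕ Fin m) (Fin m ⊕ Fin m) K) ∈ sp2Set K m := by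
  refine ⟨?_, ?_, ?_, ?_⟩
  · simp [MB, toBlocks_fromBlocks₁₁, toBlocks_fromBlocks₂₂]
  · simpa only [MB, toBlocks_fromBlocks₁₂] using alt_e_add h
  · simp only [MB, toBlocks_fromBlocks₂₁]
    exact ⟨by simp [Matrix.IsSymm], fun i => rfl⟩
  · simp [MB, toBlocks_fromBlocks₁₁]

lemma memC {p q : Fin m} (h : p ≠ q) : (MC p q : Matrix (Fin m ⊕ Fin m) (Fin m ⊕ Fin m) K) ∈ sp2Set K m := by
  refine ⟨?_, ?_, ?_, ?_⟩
  · simp [MC, toBlocks_fromBlocks₁₁, toBlocks_fromBlocks₂₂]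
  · simp only [MC, toBlocks_fromBlocks₁₂]
    exact ⟨by simp [Matrix.IsSymm], fun i => rfl⟩
  · simpa only [MC, toBlocks_fromBlocks₂₁] using alt_e_add h
  · simp [MC, toBlocks_fromBlocks₁₁]

lemma memH (p q : Fin m) : (MH p q : Matrix (Fin m ⊕ Fin m) (Fin m ⊕ Fin m) K) ∈ sp2Set K m := by
  refine ⟨?_, ?_, ?_, ?_⟩
  · simp [MH, toBlocks_fromBlocks₁₁, toBlocks_fromBlocks₂₂, transpose_add, e_transpose]
  · simp only [MH, toBlocks_fromBlocks₁₂]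
    exact ⟨by simp [Matrix.IsSymm], fun i => rfl⟩
  · simp only [MH, toBlocks_fromBlocks₂₁]
    exact ⟨by simp [Matrix.IsSymm], fun i => rfl⟩
  · simp only [MH, toBlocks_fromBlocks₁₁, trace_add, trace_e]
    by_cases h : p = q <;> simp [h, CharTwo.add_self_eq_zero]

lemma AA1 {i j l : Fin m} (h : l ≠ i) : ⁅(MA i j : Matrix (Fin m ⊕ Fin m) (Fin m ⊕ Fin m) K), MA j l⁆ = MA (K:=K) i l := by
  rw [lie_eq]
  simp [MA, fromBlocks_multiply, fromBlocks_add, e_mul, h, h.symm]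

lemma AB1 {i j l : Fin m} (h : j ≠ l) : ⁅(MA i j : Matrix (Fin m ⊕ Fin m) (Fin m ⊕ Fin m) K), MB j l⁆ = MB (K:=K) i l := by
  rw [lie_eq]
  simp [MA, MB, fromBlocks_multiply, fromBlocks_add, mul_add, add_mul, e_mul, h, h.symm]

lemma AC1 {i j l : Fin m} (h : i ≠ l) : ⁅(MA i j : Matrix (Fin m ⊕ Fin m) (Fin m ⊕ Fin m) K), MC i l⁆ = MC (K:=K) j l := by
  rw [lie_eq]
  simp [MA, MC, fromBlocks_multiply, fromBlocks_add, mul_add, add_mul, e_mul, h, h.symm]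

lemma BC1 {i j l : Fin m} (hij : i ≠ j) (hjl : j ≠ l) (hil : i ≠ l) :
    ⁅(MB i j : Matrix (Fin m ⊕ Fin m) (Fin m ⊕ Fin m) K), MC j l⁆ = MA (K:=K) i l := by
  rw [lie_eq]
  simp [MA, MB, MC, fromBlocks_multiply, fromBlocks_add, mul_add, add_mul, e_mul,
    hij, hjl, hil, hij.symm, hjl.symm, hil.symm]

lemma BC2 {i j : Fin m} (h : i ≠ j) : ⁅(MB i j : Matrix (Fin m ⊕ Fin m) (Fin m ⊕ Fin m) K), MC i j⁆ = MH (K:=K) i j := by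
  rw [lie_eq]
  simp [MB, MC, MH, fromBlocks_multiply, fromBlocks_add, mul_add, add_mul, e_mul,
    h, h.symm, add_comm]


lemma LB_gen (i j : Fin m) (a b c d : Matrix (Fin m) (Fin m) K) :
    ⁅(MB i j : Matrix (Fin m ⊕ Fin m) (Fin m ⊕ Fin m) K), fromBlocks a b c d⁆ =
      fromBlocks ((e i j + e j i) * c) ((e i j + e j i) * d + a * (e i j + e j i)) 0
        (c * (e i j + e j i)) := by
  rw [lie_eq]
  simp [MB, fromBlocks_multiply, fromBlocks_add, add_comm]

lemma LC_gen (i j : Fin m) (a b c d : Matrix (Fin m) (Fin m) K) :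
    ⁅(MC i j : Matrix (Fin m ⊕ Fin m) (Fin m ⊕ Fin m) K), fromBlocks a b c d⁆ =
      fromBlocks (b * (e i j + e j i)) 0 ((e i j + e j i) * a + d * (e i j + e j i))
        ((e i j + e j i) * b) := by
  rw [lie_eq]
  simp [MC, fromBlocks_multiply, fromBlocks_add, add_comm]

lemma LH_gen (i j : Fin m) (a b c d : Matrix (Fin m) (Fin m) K) :
    ⁅(MH i j : Matrix (Fin m ⊕ Fin m) (Fin m ⊕ Fin m) K), fromBlocks a b c d⁆ =
      fromBlocks ((e i i + e j j) * a + a * (e i i + e j j))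
        ((e i i + e j j) * b + b * (e i i + e j j))
        ((e i i + e j j) * c + c * (e i i + e j j))
        ((e i i + e j j) * d + d * (e i i + e j j)) := by
  rw [lie_eq]
  simp [MH, fromBlocks_multiply, fromBlocks_add, add_comm]

set_option maxHeartbeats 2000000 in
lemma key1 {i j k : Fin m} (hij : i ≠ j) (hjk : j ≠ k) (hik : i ≠ k)
    (c : Matrix (Fin m) (Fin m) K) (hsym : c.IsSymm) (hd : c j j = 0) :
    (e k j + e j k) * (c * (e i j + e j i)) + ((e i j + e j i) * c) * (e k j + e j k)
      = c j k • (e i j) + c j k • (e j i) + c i j • (e j k) + c i j • (e k j) := by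
  have hsym' : ∀ p q, c p q = c q p := fun p q => (hsym.apply q p)
  ext x y
  simp only [Matrix.add_apply, mul_add, add_mul, e_mul_mat, mat_mul_e, Matrix.smul_apply, e_apply,
    smul_eq_mul, mul_one, mul_zero]
  split_ifs <;>
    simp_all [hsym' j i, hsym' k i, hsym' k j, CharTwo.add_self_eq_zero]


lemma two_nsmul_mat (M : Matrix (Fin m) (Fin m) K) : (2:ℕ) • M = 0 := by
  ext x y; rw [Matrix.smul_apply]; exact CharTwo.two_nsmul _

lemma two_mul_mat (M : Matrix (Fin m) (Fin m) K) : (2 : Matrix (Fin m) (Fin m) K) * M = 0 := by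
  have h2 : (2 : Matrix (Fin m) (Fin m) K) = 0 := by
    rw [← one_add_one_eq_two]
    ext x y; simp [Matrix.add_apply, CharTwo.add_self_eq_zero]
  rw [h2, zero_mul]

lemma key2 {i j k : Fin m} (hij : i ≠ j) (hjk : j ≠ k) (hik : i ≠ k) (r s : K) :
    (e i i + e j j) * (r • (e i j) + r • (e j i) + s • (e j k) + s • (e k j))
      + (r • (e i j) + r • (e j i) + s • (e j k) + s • (e k j)) * (e i i + e j j)
      = s • ((e j k : Matrix (Fin m) (Fin m) K) + e k j) := by
  simp only [mul_add, add_mul, mul_smul_comm, smul_mul_assoc, e_mul,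
    hij, hjk, hik, hij.symm, hjk.symm, hik.symm, if_pos rfl, ite_true, ite_false,
    if_false, smul_zero, add_zero, zero_add, smul_add]
  abel_nf
  simp [two_nsmul_mat, two_mul_mat]

lemma ext1 {i j k : Fin m} (hij : i ≠ j) (hjk : j ≠ k) (hik : i ≠ k)
    (Y : Matrix (Fin m ⊕ Fin m) (Fin m ⊕ Fin m) K)
    (hsym : Y.toBlocks₂₁.IsSymm) (hd : Y.toBlocks₂₁ j j = 0) :
    ⁅(MH i j : Matrix (Fin m ⊕ Fin m) (Fin m ⊕ Fin m) K), ⁅(MB k j : Matrix (Fin m ⊕ Fin m) (Fin m ⊕ Fin m) K), ⁅(MB i j : Matrix (Fin m ⊕ Fin m) (Fin m ⊕ Fin m) K), Y⁆⁆⁆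
      = Y.toBlocks₂₁ i j • MB j k := by
  conv_lhs => rw [← fromBlocks_toBlocks Y]
  rw [LB_gen, LB_gen, mul_zero, zero_mul, key1 hij hjk hik _ hsym hd, LH_gen]
  simp only [mul_zero, zero_mul, add_zero, zero_add]
  rw [key2 hij hjk hik]
  simp [MB, fromBlocks_smul, smul_add]

lemma ext2 {i j k : Fin m} (hij : i ≠ j) (hjk : j ≠ k) (hik : i ≠ k)
    (Y : Matrix (Fin m ⊕ Fin m) (Fin m ⊕ Fin m) K)
    (hsym : Y.toBlocks₁₂.IsSymm) (hd : Y.toBlocks₁₂ j j = 0) :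
    ⁅(MH i j : Matrix (Fin m ⊕ Fin m) (Fin m ⊕ Fin m) K), ⁅(MC k j : Matrix (Fin m ⊕ Fin m) (Fin m ⊕ Fin m) K), ⁅(MC i j : Matrix (Fin m ⊕ Fin m) (Fin m ⊕ Fin m) K), Y⁆⁆⁆
      = Y.toBlocks₁₂ i j • MC j k := by
  conv_lhs => rw [← fromBlocks_toBlocks Y]
  rw [LC_gen, LC_gen, mul_zero, zero_mul, key1 hij hjk hik _ hsym hd, LH_gen]
  simp only [mul_zero, zero_mul, add_zero, zero_add]
  rw [key2 hij hjk hik]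
  simp [MC, fromBlocks_smul, smul_add]

lemma e3a {i j q : Fin m} (hij : i ≠ j) (hqi : q ≠ i) (hqj : q ≠ j)
    (Y : Matrix (Fin m ⊕ Fin m) (Fin m ⊕ Fin m) K)
    (hb : Y.toBlocks₁₂ = 0) (hd : Y.toBlocks₂₂ = (Y.toBlocks₁₁)ᵀ) :
    (⁅(MC i j : Matrix (Fin m ⊕ Fin m) (Fin m ⊕ Fin m) K), Y⁆).toBlocks₂₁ i q
      = Y.toBlocks₁₁ j q := by
  conv_lhs => rw [← fromBlocks_toBlocks Y, LC_gen]
  rw [toBlocks_fromBlocks₂₁, hd]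
  simp [Matrix.add_apply, add_mul, mul_add, e_mul_mat, mat_mul_e, hij, hij.symm,
    hqi.symm, hqj.symm, transpose_apply]

lemma e3b {i j : Fin m} (hij : i ≠ j)
    (Y : Matrix (Fin m ⊕ Fin m) (Fin m ⊕ Fin m) K)
    (hb : Y.toBlocks₁₂ = 0) (hd : Y.toBlocks₂₂ = (Y.toBlocks₁₁)ᵀ) :
    (⁅(MC i j : Matrix (Fin m ⊕ Fin m) (Fin m ⊕ Fin m) K), Y⁆).toBlocks₂₁ i j
      = Y.toBlocks₁₁ j j + Y.toBlocks₁₁ i i := by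
  conv_lhs => rw [← fromBlocks_toBlocks Y, LC_gen]
  rw [toBlocks_fromBlocks₂₁, hd]
  simp [Matrix.add_apply, add_mul, mul_add, e_mul_mat, mat_mul_e, hij, hij.symm,
    transpose_apply]

lemma dd (f : Fin m → Fin m → K) (x y : Fin m) :
    (∑ p : Fin m, ∑ q : Fin m, if p = x ∧ q = y then f p q else 0) = f x y := by
  simp [ite_and]

lemma MH_self (p : Fin m) : (MH p p : Matrix (Fin m ⊕ Fin m) (Fin m ⊕ Fin m) K) = 0 := by
  have h : (e p p + e p p : Matrix (Fin m) (Fin m) K) = 0 := by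
    ext x y; simp [Matrix.add_apply, CharTwo.add_self_eq_zero]
  ext (x|x) (y|y) <;> simp [MH, h, fromBlocks]


lemma sdd (f : Fin m → K) (x y : Fin m) :
    (∑ p : Fin m, if p = x ∧ p = y then f p else 0) = if x = y then f x else 0 := by
  by_cases h : x = y
  · subst h; simp
  · rw [if_neg h]
    exact Finset.sum_eq_zero fun p _ => if_neg (fun hh => h (hh.1.symm.trans hh.2))

lemma decomp (l0 : Fin m) (X : Matrix (Fin m ⊕ Fin m) (Fin m ⊕ Fin m) K)
    (hX : X ∈ sp2Set K m) :
    X = (∑ p : Fin m, ∑ q : Fin m, (if p = q then 0 else X.toBlocks₁₁ p q) • MA p q)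
      + (∑ p : Fin m, X.toBlocks₁₁ p p • MH p l0)
      + (∑ p : Fin m, ∑ q : Fin m, (if p < q then X.toBlocks₁₂ p q else 0) • MB p q)
      + (∑ p : Fin m, ∑ q : Fin m, (if p < q then X.toBlocks₂₁ p q else 0) • MC p q) := by
  obtain ⟨h22, hb, hc, htr⟩ := hX
  have hbs : ∀ p q, X.toBlocks₁₂ p q = X.toBlocks₁₂ q p := fun p q => (hb.1.apply p q).symm
  have hcs : ∀ p q, X.toBlocks₂₁ p q = X.toBlocks₂₁ q p := fun p q => (hc.1.apply p q).symm
  have htr' : ∑ p : Fin m, X.toBlocks₁₁ p p = 0 := htr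
  ext (x|x) (y|y)
  · -- (inl, inl)
    show X.toBlocks₁₁ x y = _
    simp only [Matrix.add_apply, Matrix.sum_apply, Matrix.smul_apply, smul_eq_mul,
      MA, MB, MC, MH, fromBlocks_apply₁₁, Matrix.add_apply, e_apply,
      Matrix.zero_apply, mul_zero, add_zero, mul_add, mul_ite, mul_one]
    rw [dd, Finset.sum_add_distrib, sdd]
    by_cases hl : l0 = x ∧ l0 = y <;> by_cases hxy : x = y <;> simp_all
  · -- (inl, inr)
    show X (Sum.inl x) (Sum.inr y) = _
    have hXb : X (Sum.inl x) (Sum.inr y) = X.toBlocks₁₂ x y := rfl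
    simp only [hXb, Matrix.add_apply, Matrix.sum_apply, Matrix.smul_apply, smul_eq_mul,
      MA, MB, MC, MH, fromBlocks_apply₁₂, Matrix.add_apply, e_apply,
      Matrix.zero_apply, mul_zero, add_zero, zero_add, mul_add, mul_ite, mul_one]
    simp only [Finset.sum_add_distrib, Finset.sum_const_zero, zero_add, add_zero]
    rw [dd, Finset.sum_comm, dd]
    rcases lt_trichotomy x y with h|h|h
    · rw [if_pos h, if_neg (asymm h), add_zero]
    · subst h; simp [lt_irrefl, hb.2 x]
    · rw [if_neg (asymm h), if_pos h, zero_add, hbs x y]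
  · -- (inr, inl)
    show X (Sum.inr x) (Sum.inl y) = _
    have hXc : X (Sum.inr x) (Sum.inl y) = X.toBlocks₂₁ x y := rfl
    simp only [hXc, Matrix.add_apply, Matrix.sum_apply, Matrix.smul_apply, smul_eq_mul,
      MA, MB, MC, MH, fromBlocks_apply₂₁, Matrix.add_apply, e_apply,
      Matrix.zero_apply, mul_zero, add_zero, zero_add, mul_add, mul_ite, mul_one]
    simp only [Finset.sum_add_distrib, Finset.sum_const_zero, zero_add, add_zero]
    rw [dd, Finset.sum_comm, dd]
    rcases lt_trichotomy x y with h|h|h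
    · rw [if_pos h, if_neg (asymm h), add_zero]
    · subst h; simp [lt_irrefl, hc.2 x]
    · rw [if_neg (asymm h), if_pos h, zero_add, hcs x y]
  · -- (inr, inr)
    show X (Sum.inr x) (Sum.inr y) = _
    have hXd : X (Sum.inr x) (Sum.inr y) = X.toBlocks₁₁ y x := by
      show X.toBlocks₂₂ x y = _
      rw [h22]; rfl
    simp only [hXd, Matrix.add_apply, Matrix.sum_apply, Matrix.smul_apply, smul_eq_mul,
      MA, MB, MC, MH, fromBlocks_apply₂₂, Matrix.add_apply, e_apply,
      Matrix.zero_apply, mul_zero, add_zero, zero_add, mul_add, mul_ite, mul_one]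
    simp only [Finset.sum_add_distrib, Finset.sum_const_zero, zero_add, add_zero]
    rw [Finset.sum_comm, dd, sdd]
    have hsum : (∑ p : Fin m, if l0 = x ∧ l0 = y then X.toBlocks₁₁ p p else 0) = 0 := by
      by_cases hl : l0 = x ∧ l0 = y
      · simp [hl, htr']
      · simp [hl]
    rw [hsum, add_zero]
    by_cases hxy : x = y
    · subst hxy; simp
    · rw [if_neg (fun hh => hxy hh.symm), if_neg hxy, add_zero]


lemma third (hm : 3 ≤ m) (a b : Fin m) : ∃ k : Fin m, k ≠ a ∧ k ≠ b := by
  have hns : ¬ ((Finset.univ : Finset (Fin m)) ⊆ {a, b}) := by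
    intro hsub
    have h1 := Finset.card_le_card hsub
    have h2 : ({a, b} : Finset (Fin m)).card ≤ 2 := by
      refine le_trans (Finset.card_insert_le _ _) ?_
      simp
    rw [Finset.card_univ, Fintype.card_fin] at h1
    omega
  obtain ⟨k, -, hk⟩ := Finset.not_subset.1 hns
  simp only [Finset.mem_insert, Finset.mem_singleton, not_or] at hk
  exact ⟨k, hk.1, hk.2⟩

lemma odd_nsmul (hodd : Odd m) (x : K) : m • x = x := by
  obtain ⟨t, rfl⟩ := hodd
  rw [add_nsmul, one_nsmul, mul_nsmul, CharTwo.two_nsmul, smul_zero, zero_add]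

section Main
variable (I : Submodule K (Matrix (Fin m ⊕ Fin m) (Fin m ⊕ Fin m) K))

lemma stepA (hm : 3 ≤ m)
    (hbr : ∀ x ∈ sp2Set K m, ∀ y ∈ I, ⁅x, y⁆ ∈ I)
    {i0 j0 : Fin m} (hij0 : i0 ≠ j0) (hA0 : MA i0 j0 ∈ I) :
    ∀ X ∈ sp2Set K m, X ∈ I := by
  have hbr' : ∀ y ∈ I, ∀ x ∈ sp2Set K m, ⁅y, x⁆ ∈ I := fun y hy x hx => by
    rw [lie_symm]; exact hbr x hx y hy
  have hArow : ∀ x, x ≠ i0 → MA i0 x ∈ I := by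
    intro x hx
    by_cases hxj : x = j0
    · subst hxj; exact hA0
    · have h1 := hbr' _ hA0 (MA j0 x) (memA (Ne.symm hxj))
      rwa [AA1 hx] at h1
  have hA2 : ∀ p q : Fin m, p ≠ q → q ≠ i0 → MA p q ∈ I := by
    intro p q hpq hq
    by_cases hp : p = i0
    · subst hp; exact hArow q hq
    · have h2 := hbr (MA p i0) (memA hp) _ (hArow q hq)
      rwa [AA1 hpq.symm] at h2
  have hAall : ∀ p q : Fin m, p ≠ q → MA p q ∈ I := by
    intro p q hpq
    by_cases hq : q = i0
    · obtain ⟨k, hki, hkp⟩ := third hm i0 p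
      have h1 : MA p k ∈ I := hA2 p k (Ne.symm hkp) hki
      have h2 := hbr' _ h1 (MA k i0) (memA hki)
      rw [AA1 (show i0 ≠ p from fun hh => hpq (hh ▸ hq.symm ▸ rfl))] at h2
      rw [hq]
      exact h2
    · exact hA2 p q hpq hq
  have hB : ∀ p q : Fin m, p ≠ q → MB p q ∈ I := by
    intro p q hpq
    obtain ⟨k, hkp, hkq⟩ := third hm p q
    have h1 := hbr' _ (hAall p k (Ne.symm hkp)) (MB k q) (memB hkq)
    rwa [AB1 hkq] at h1
  have hC : ∀ p q : Fin m, p ≠ q → MC p q ∈ I := by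
    intro p q hpq
    obtain ⟨k, hkp, hkq⟩ := third hm p q
    have h1 := hbr' _ (hAall k p hkp) (MC k q) (memC hkq)
    rwa [AC1 hkq] at h1
  have hH : ∀ p q : Fin m, MH p q ∈ I := by
    intro p q
    by_cases h : p = q
    · subst h; rw [MH_self]; exact zero_mem _
    · have h1 := hbr (MB p q) (memB h) _ (hC p q h)
      rwa [BC2 h] at h1
  intro X hX
  rw [decomp i0 X hX]
  refine add_mem (add_mem (add_mem ?_ ?_) ?_) ?_
  · refine Submodule.sum_mem I fun p _ => Submodule.sum_mem I fun q _ => ?_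
    by_cases hpq : p = q
    · rw [if_pos hpq, zero_smul]; exact zero_mem _
    · exact I.smul_mem _ (hAall p q hpq)
  · exact Submodule.sum_mem I fun p _ => I.smul_mem _ (hH p i0)
  · refine Submodule.sum_mem I fun p _ => Submodule.sum_mem I fun q _ => ?_
    by_cases hpq : p < q
    · rw [if_pos hpq]; exact I.smul_mem _ (hB p q (ne_of_lt hpq))
    · rw [if_neg hpq, zero_smul]; exact zero_mem _
  · refine Submodule.sum_mem I fun p _ => Submodule.sum_mem I fun q _ => ?_
    by_cases hpq : p < q
    · rw [if_pos hpq]; exact I.smul_mem _ (hC p q (ne_of_lt hpq))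
    · rw [if_neg hpq, zero_smul]; exact zero_mem _

lemma fromCentry (hm : 3 ≤ m)
    (hsub : (I : Set (Matrix (Fin m ⊕ Fin m) (Fin m ⊕ Fin m) K)) ⊆ sp2Set K m)
    (hbr : ∀ x ∈ sp2Set K m, ∀ y ∈ I, ⁅x, y⁆ ∈ I)
    {Y : Matrix (Fin m ⊕ Fin m) (Fin m ⊕ Fin m) K} (hY : Y ∈ I)
    {i j : Fin m} (hij : i ≠ j) (hne : Y.toBlocks₂₁ i j ≠ 0) :
    ∀ X ∈ sp2Set K m, X ∈ I := by
  have hbr' : ∀ y ∈ I, ∀ x ∈ sp2Set K m, ⁅y, x⁆ ∈ I := fun y hy x hx => by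
    rw [lie_symm]; exact hbr x hx y hy
  obtain ⟨h22, hb, hc, htr⟩ := hsub hY
  obtain ⟨k, hki, hkj⟩ := third hm i j
  have h1 : ⁅(MB i j : Matrix (Fin m ⊕ Fin m) (Fin m ⊕ Fin m) K), Y⁆ ∈ I :=
    hbr _ (memB hij) _ hY
  have h2 := hbr _ (memB hkj) _ h1
  have h3 := hbr _ (memH i j) _ h2
  rw [ext1 hij (Ne.symm hkj) (Ne.symm hki) Y hc.1 (hc.2 j)] at h3
  have hBjk : MB j k ∈ I := by
    have h4 := I.smul_mem (Y.toBlocks₂₁ i j)⁻¹ h3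
    rwa [smul_smul, inv_mul_cancel₀ hne, one_smul] at h4
  obtain ⟨l, hlj, hlk⟩ := third hm j k
  have h5 := hbr' _ hBjk (MC k l) (memC (Ne.symm hlk))
  rw [BC1 (Ne.symm hkj) (Ne.symm hlk) (Ne.symm hlj)] at h5
  exact stepA I hm hbr (Ne.symm hlj) h5

lemma fromBentry (hm : 3 ≤ m)
    (hsub : (I : Set (Matrix (Fin m ⊕ Fin m) (Fin m ⊕ Fin m) K)) ⊆ sp2Set K m)
    (hbr : ∀ x ∈ sp2Set K m, ∀ y ∈ I, ⁅x, y⁆ ∈ I)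
    {Y : Matrix (Fin m ⊕ Fin m) (Fin m ⊕ Fin m) K} (hY : Y ∈ I)
    {i j : Fin m} (hij : i ≠ j) (hne : Y.toBlocks₁₂ i j ≠ 0) :
    ∀ X ∈ sp2Set K m, X ∈ I := by
  obtain ⟨h22, hb, hc, htr⟩ := hsub hY
  obtain ⟨k, hki, hkj⟩ := third hm i j
  have h1 : ⁅(MC i j : Matrix (Fin m ⊕ Fin m) (Fin m ⊕ Fin m) K), Y⁆ ∈ I :=
    hbr _ (memC hij) _ hY
  have h2 := hbr _ (memC hkj) _ h1
  have h3 := hbr _ (memH i j) _ h2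
  rw [ext2 hij (Ne.symm hkj) (Ne.symm hki) Y hb.1 (hb.2 j)] at h3
  have hCjk : MC j k ∈ I := by
    have h4 := I.smul_mem (Y.toBlocks₁₂ i j)⁻¹ h3
    rwa [smul_smul, inv_mul_cancel₀ hne, one_smul] at h4
  obtain ⟨l, hlj, hlk⟩ := third hm j k
  have h5 := hbr (MB l j) (memB hlj) _ hCjk
  rw [BC1 hlj (Ne.symm hkj) hlk] at h5
  exact stepA I hm hbr hlk h5

lemma getAll (hm : 3 ≤ m) (hodd : Odd m)
    (hsub : (I : Set (Matrix (Fin m ⊕ Fin m) (Fin m ⊕ Fin m) K)) ⊆ sp2Set K m)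
    (hbr : ∀ x ∈ sp2Set K m, ∀ y ∈ I, ⁅x, y⁆ ∈ I)
    {Y : Matrix (Fin m ⊕ Fin m) (Fin m ⊕ Fin m) K} (hY : Y ∈ I) (hY0 : Y ≠ 0) :
    ∀ X ∈ sp2Set K m, X ∈ I := by
  obtain ⟨h22, hb, hc, htr⟩ := hsub hY
  by_cases hcz : ∃ i j, Y.toBlocks₂₁ i j ≠ 0
  · obtain ⟨i, j, hne⟩ := hcz
    have hij : i ≠ j := by rintro rfl; exact hne (hc.2 i)
    exact fromCentry I hm hsub hbr hY hij hne
  by_cases hbz : ∃ i j, Y.toBlocks₁₂ i j ≠ 0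
  · obtain ⟨i, j, hne⟩ := hbz
    have hij : i ≠ j := by rintro rfl; exact hne (hb.2 i)
    exact fromBentry I hm hsub hbr hY hij hne
  push_neg at hcz hbz
  have hb0 : Y.toBlocks₁₂ = 0 := by ext p q; exact hbz p q
  have hc0 : Y.toBlocks₂₁ = 0 := by ext p q; exact hcz p q
  have haz : Y.toBlocks₁₁ ≠ 0 := by
    intro h0
    apply hY0
    rw [← fromBlocks_toBlocks Y, h0, h22, h0, hb0, hc0]
    ext (x|x) (y|y) <;> simp [fromBlocks]
  by_cases hoff : ∃ p q, p ≠ q ∧ Y.toBlocks₁₁ p q ≠ 0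
  · obtain ⟨p, q, hpq, h0⟩ := hoff
    obtain ⟨i, hip, hiq⟩ := third hm p q
    have hZ : ⁅(MC i p : Matrix (Fin m ⊕ Fin m) (Fin m ⊕ Fin m) K), Y⁆ ∈ I :=
      hbr _ (memC hip) _ hY
    have he := e3a hip (Ne.symm hiq) (Ne.symm hpq) Y hb0 h22
    exact fromCentry I hm hsub hbr hZ hiq (by rw [he]; exact h0)
  · push_neg at hoff
    have i0 : Fin m := ⟨0, by omega⟩
    have hne : ∃ i j, i ≠ j ∧ Y.toBlocks₁₁ i i ≠ Y.toBlocks₁₁ j j := by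
      by_contra hcon
      push_neg at hcon
      apply haz
      have hconst : ∀ p : Fin m, Y.toBlocks₁₁ p p = Y.toBlocks₁₁ i0 i0 := by
        intro p
        by_cases hp : p = i0
        · rw [hp]
        · exact hcon p i0 hp
      have hzero : Y.toBlocks₁₁ i0 i0 = 0 := by
        have hsum : Matrix.trace (Y.toBlocks₁₁) = m • Y.toBlocks₁₁ i0 i0 := by
          rw [Matrix.trace]
          have hdg : ∀ p : Fin m, Y.toBlocks₁₁.diag p = Y.toBlocks₁₁ i0 i0 :=
            fun p => hconst p
          rw [Finset.sum_congr rfl (fun p _ => hdg p), Finset.sum_const, Finset.card_univ,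
            Fintype.card_fin]
        rw [htr] at hsum
        rw [odd_nsmul hodd] at hsum
        exact hsum.symm
      ext p q
      by_cases hpq : p = q
      · subst hpq; rw [hconst p, hzero]; rfl
      · rw [hoff p q hpq]; rfl
    obtain ⟨i, j, hij, hneq⟩ := hne
    have hZ : ⁅(MC i j : Matrix (Fin m ⊕ Fin m) (Fin m ⊕ Fin m) K), Y⁆ ∈ I :=
      hbr _ (memC hij) _ hY
    have he := e3b hij Y hb0 h22
    refine fromCentry I hm hsub hbr hZ hij ?_
    rw [he]
    intro hzz
    apply hneq
    have := CharTwo.neg_eq (Y.toBlocks₁₁ j j)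
    have h6 := eq_neg_of_add_eq_zero_left hzz
    rw [CharTwo.neg_eq] at h6
    exact h6.symm

end Main
end Sp2Aux

/-- Let `K` be an algebraically closed field of characteristic 2 and `m ≥ 3`
with `4 ∤ 2m`.  Then `sp_{2m}(K)⁽²⁾` is a simple Lie algebra: it is
non-abelian and its only ideals are `0` and the whole algebra. -/
theorem sp2_isSimple {K : Type*} [Field K] [IsAlgClosed K] [CharP K 2] (m : ℕ)
    (hm : 3 ≤ m) (h4 : ¬ (4 ∣ 2 * m)) :
    (∃ x ∈ sp2Set K m, ∃ y ∈ sp2Set K m, ⁅x, y⁆ ≠ (0 : Matrix (Fin m ⊕ Fin m) (Fin m ⊕ Fin m) K)) ∧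
    (∀ I : Submodule K (Matrix (Fin m ⊕ Fin m) (Fin m ⊕ Fin m) K),
      (↑I ⊆ sp2Set K m) →
      (∀ x ∈ sp2Set K m, ∀ y ∈ I, ⁅x, y⁆ ∈ I) →
      I = ⊥ ∨ (↑I : Set (Matrix (Fin m ⊕ Fin m) (Fin m ⊕ Fin m) K)) = sp2Set K m) := by
  have hodd : Odd m := by
    rcases Nat.even_or_odd m with he | ho
    · obtain ⟨t, rfl⟩ := he
      exact absurd ⟨t, by ring⟩ h4
    · exact ho
  have h01 : (⟨0, by omega⟩ : Fin m) ≠ (⟨1, by omega⟩ : Fin m) := by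
    intro h
    simpa using congrArg Fin.val h
  constructor
  · refine ⟨Sp2Aux.MB ⟨0, by omega⟩ ⟨1, by omega⟩, Sp2Aux.memB h01,
      Sp2Aux.MC ⟨0, by omega⟩ ⟨1, by omega⟩, Sp2Aux.memC h01, ?_⟩
    rw [Sp2Aux.BC2 h01]
    intro h0
    have hent := congrFun (congrFun h0 (Sum.inl ⟨0, by omega⟩)) (Sum.inl ⟨0, by omega⟩)
    simp [Sp2Aux.MH, Sp2Aux.e_apply, Matrix.fromBlocks] at hent
  · intro I hsub hbr
    by_cases hbot : ∀ y ∈ I, y = 0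
    · left
      exact (Submodule.eq_bot_iff I).2 hbot
    · right
      push_neg at hbot
      obtain ⟨Y, hY, hY0⟩ := hbot
      exact Set.Subset.antisymm hsub
        (fun X hX => Sp2Aux.getAll I hm hodd hsub hbr hY hY0 X hX)
end

section
/- Let K be an algebraically closed field of characteristic 2, m ≥ 3 with m even (4 | 2m). Then the scalar matrices z(gl_{2m}(K)) lie in sp_{2m}(K)^{(2)} and the quotient sp_{2m}(K)^{(2)}/z(gl_{2m}(K)) is a simple Lie algebra. -/
open Matrix

set_option linter.unusedSectionVars false
set_option linter.unusedVariables false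
set_option maxHeartbeats 1000000

namespace Sp2Proof

variable {K : Type*} [Field K] [CharP K 2] {m : ℕ}

/-- ambient matrix space -/
abbrev Mat (K : Type*) [Field K] (m : ℕ) := Matrix (Fin m ⊕ Fin m) (Fin m ⊕ Fin m) K

/-- standard basis matrix with a `1` -/
abbrev E (K : Type*) [Field K] {m : ℕ} (i j : Fin m) : Matrix (Fin m) (Fin m) K :=
  Matrix.single i j 1

lemma E_transpose (i j : Fin m) : (E K i j)ᵀ = E K j i := by
  ext p q
  rw [transpose_apply]
  by_cases h1 : i = q <;> by_cases h2 : j = p <;>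
    simp [Matrix.single, h1, h2, and_comm]

/-- `A`-type generator. -/
def Amat (i j : Fin m) : Mat K m := fromBlocks (E K i j) 0 0 (E K j i)

/-- `B`-type generator. -/
def Bmat (i j : Fin m) : Mat K m := fromBlocks 0 (E K i j + E K j i) 0 0

/-- `C`-type generator. -/
def Cmat (i j : Fin m) : Mat K m := fromBlocks 0 0 (E K i j + E K j i) 0

/-- `H`-type generator. -/
def Hmat (i j : Fin m) : Mat K m := fromBlocks (E K i i + E K j j) 0 0 (E K i i + E K j j)

/-- diagonal (toral) elements -/
def Dmat (d : Fin m → K) : Mat K m := fromBlocks (diagonal d) 0 0 (diagonal d)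

/-- elementary piece of a general element of `sp2Set` -/
def vv (α β γ : K) (i j : Fin m) : Mat K m :=
  fromBlocks (α • E K i j) (β • E K i j) (γ • E K i j) (α • E K j i)

/- ### characteristic two helpers -/

lemma matNeg {n n' : Type*} (M : Matrix n n' K) : -M = M := by
  ext p q
  rw [Matrix.neg_apply]
  exact CharTwo.neg_eq _

lemma mat_add_self {n n' : Type*} (M : Matrix n n' K) : M + M = 0 := by
  ext p q
  rw [Matrix.add_apply, Matrix.zero_apply]
  exact CharTwo.add_self_eq_zero _

lemma char2_add_eq_zero {x y : K} : x + y = 0 ↔ x = y := by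
  rw [add_eq_zero_iff_eq_neg, CharTwo.neg_eq]

lemma lie_eq (x y : Mat K m) : ⁅x, y⁆ = x * y + y * x := by
  rw [Ring.lie_def, sub_eq_add_neg, matNeg]

lemma lie_comm (x y : Mat K m) : ⁅x, y⁆ = ⁅y, x⁆ := by
  rw [lie_eq, lie_eq, add_comm]

lemma lie_add' (x y z : Mat K m) : ⁅x, y + z⁆ = ⁅x, y⁆ + ⁅x, z⁆ := by
  simp only [Ring.lie_def, mul_add, add_mul]
  abel

lemma lie_smul' (t : K) (x y : Mat K m) : ⁅x, t • y⁆ = t • ⁅x, y⁆ := by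
  simp only [Ring.lie_def, Matrix.mul_smul, Matrix.smul_mul, smul_sub]

lemma lie_self' (x : Mat K m) : ⁅x, x⁆ = 0 := by
  rw [Ring.lie_def, sub_self]

lemma lie_sum' {ι : Type*} (g : Mat K m) (s : Finset ι) (f : ι → Mat K m) :
    ⁅g, ∑ p ∈ s, f p⁆ = ∑ p ∈ s, ⁅g, f p⁆ := by
  simp only [Ring.lie_def, Finset.mul_sum, Finset.sum_mul, Finset.sum_sub_distrib]

/- ### membership lemmas -/

lemma A_mem {i j : Fin m} (hij : i ≠ j) : (Amat i j : Mat K m) ∈ sp2Set K m := by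
  refine ⟨?_, ?_, ?_, ?_⟩ <;>
    simp only [Amat, toBlocks_fromBlocks₁₁, toBlocks_fromBlocks₁₂, toBlocks_fromBlocks₂₁,
      toBlocks_fromBlocks₂₂]
  · exact (E_transpose i j).symm
  · exact ⟨isSymm_zero, fun k => rfl⟩
  · exact ⟨isSymm_zero, fun k => rfl⟩
  · exact Matrix.trace_single_eq_of_ne i j 1 hij

lemma B_mem {i j : Fin m} (hij : i ≠ j) : (Bmat i j : Mat K m) ∈ sp2Set K m := by
  refine ⟨?_, ⟨?_, ?_⟩, ?_, ?_⟩ <;>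
    simp only [Bmat, toBlocks_fromBlocks₁₁, toBlocks_fromBlocks₁₂, toBlocks_fromBlocks₂₁,
      toBlocks_fromBlocks₂₂]
  · rw [transpose_zero]
  · rw [Matrix.IsSymm, transpose_add, E_transpose, E_transpose, add_comm]
  · intro k
    have h1 : ¬(i = k ∧ j = k) := fun hco => hij (hco.1.trans hco.2.symm)
    have h2 : ¬(j = k ∧ i = k) := fun hco => hij (hco.2.trans hco.1.symm)
    simp only [E, Matrix.add_apply, Matrix.single_apply_of_ne _ _ _ _ _ h1,
      Matrix.single_apply_of_ne _ _ _ _ _ h2, add_zero]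
  · exact ⟨isSymm_zero, fun k => rfl⟩
  · exact Matrix.trace_zero _ _

lemma C_mem {i j : Fin m} (hij : i ≠ j) : (Cmat i j : Mat K m) ∈ sp2Set K m := by
  refine ⟨?_, ?_, ⟨?_, ?_⟩, ?_⟩ <;>
    simp only [Cmat, toBlocks_fromBlocks₁₁, toBlocks_fromBlocks₁₂, toBlocks_fromBlocks₂₁,
      toBlocks_fromBlocks₂₂]
  · rw [transpose_zero]
  · exact ⟨isSymm_zero, fun k => rfl⟩
  · rw [Matrix.IsSymm, transpose_add, E_transpose, E_transpose, add_comm]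
  · intro k
    have h1 : ¬(i = k ∧ j = k) := fun hco => hij (hco.1.trans hco.2.symm)
    have h2 : ¬(j = k ∧ i = k) := fun hco => hij (hco.2.trans hco.1.symm)
    simp only [E, Matrix.add_apply, Matrix.single_apply_of_ne _ _ _ _ _ h1,
      Matrix.single_apply_of_ne _ _ _ _ _ h2, add_zero]
  · exact Matrix.trace_zero _ _

lemma H_mem {i j : Fin m} (hij : i ≠ j) : (Hmat i j : Mat K m) ∈ sp2Set K m := by
  refine ⟨?_, ?_, ?_, ?_⟩ <;>
    simp only [Hmat, toBlocks_fromBlocks₁₁, toBlocks_fromBlocks₁₂, toBlocks_fromBlocks₂₁,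
      toBlocks_fromBlocks₂₂]
  · rw [transpose_add, E_transpose, E_transpose]
  · exact ⟨isSymm_zero, fun k => rfl⟩
  · exact ⟨isSymm_zero, fun k => rfl⟩
  · rw [trace_add, Matrix.trace_single_eq_same, Matrix.trace_single_eq_same, one_add_one_eq_two,
      CharTwo.two_eq_zero]

lemma D_mem {d : Fin m → K} (hd : ∑ k, d k = 0) : (Dmat d : Mat K m) ∈ sp2Set K m := by
  refine ⟨?_, ?_, ?_, ?_⟩ <;>
    simp only [Dmat, toBlocks_fromBlocks₁₁, toBlocks_fromBlocks₁₂, toBlocks_fromBlocks₂₁,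
      toBlocks_fromBlocks₂₂]
  · rw [diagonal_transpose]
  · exact ⟨isSymm_zero, fun k => rfl⟩
  · exact ⟨isSymm_zero, fun k => rfl⟩
  · rw [trace_diagonal]; exact hd

lemma Bswap (i j : Fin m) : (Bmat i j : Mat K m) = Bmat j i := by
  rw [Bmat, Bmat, add_comm]

lemma Cswap (i j : Fin m) : (Cmat i j : Mat K m) = Cmat j i := by
  rw [Cmat, Cmat, add_comm]

lemma Hswap (i j : Fin m) : (Hmat i j : Mat K m) = Hmat j i := by
  rw [Hmat, Hmat, add_comm]

lemma Amat_eq_vv (i j : Fin m) : (Amat i j : Mat K m) = vv 1 0 0 i j := by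
  simp [Amat, vv]

/- ### multiplication against diagonal matrices -/

lemma diagonal_mul_E (d : Fin m → K) (i j : Fin m) :
    diagonal d * E K i j = d i • E K i j := by
  simp only [E]
  ext p q
  rw [diagonal_mul, Matrix.smul_apply, smul_eq_mul]
  rcases eq_or_ne i p with rfl | h
  · rfl
  · rw [Matrix.single_apply_of_row_ne h, mul_zero, mul_zero]

lemma E_mul_diagonal (d : Fin m → K) (i j : Fin m) :
    E K i j * diagonal d = d j • E K i j := by
  simp only [E]
  ext p q
  rw [mul_diagonal, Matrix.smul_apply, smul_eq_mul]
  rcases eq_or_ne j q with rfl | h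
  · rw [mul_comm]
  · rw [Matrix.single_apply_of_col_ne _ _ h, zero_mul, mul_zero]

/- ### bracket tables -/

lemma lieAA {i j k : Fin m} (hij : i ≠ j) (hjk : j ≠ k) (hik : i ≠ k) :
    ⁅(Amat i j : Mat K m), (Amat j k : Mat K m)⁆ = Amat i k := by
  rw [lie_eq]
  simp only [Amat, E, fromBlocks_multiply, fromBlocks_add, mul_zero, zero_mul, add_zero, zero_add,
    Matrix.single_mul_single_same, one_mul, Matrix.single_mul_single_of_ne _ _ _ _ hik,
    Matrix.single_mul_single_of_ne _ _ _ _ hik.symm]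

lemma lieAA' {i j : Fin m} (hij : i ≠ j) :
    ⁅(Amat i j : Mat K m), (Amat j i : Mat K m)⁆ = Hmat i j := by
  rw [lie_eq]
  simp only [Amat, Hmat, E, fromBlocks_multiply, fromBlocks_add, mul_zero, zero_mul, add_zero,
    zero_add, Matrix.single_mul_single_same, one_mul]
  rw [fromBlocks_inj]
  refine ⟨rfl, rfl, rfl, add_comm _ _⟩

lemma lieAB {p k q : Fin m} (hpk : p ≠ k) (hkq : k ≠ q) (hpq : p ≠ q) :
    ⁅(Amat p k : Mat K m), (Bmat k q : Mat K m)⁆ = Bmat p q := by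
  rw [lie_eq]
  simp only [Amat, Bmat, E, fromBlocks_multiply, fromBlocks_add, mul_zero, zero_mul, add_zero,
    zero_add, mul_add, add_mul, Matrix.single_mul_single_same, one_mul,
    Matrix.single_mul_single_of_ne _ _ _ _ hkq, Matrix.single_mul_single_of_ne _ _ _ _ hkq.symm]

lemma lieAC {i p q : Fin m} (hip : i ≠ p) (hiq : i ≠ q) (hpq : p ≠ q) :
    ⁅(Amat i p : Mat K m), (Cmat i q : Mat K m)⁆ = Cmat p q := by
  rw [lie_eq]
  simp only [Amat, Cmat, E, fromBlocks_multiply, fromBlocks_add, mul_zero, zero_mul, add_zero,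
    zero_add, mul_add, add_mul, Matrix.single_mul_single_same, one_mul,
    Matrix.single_mul_single_of_ne _ _ _ _ hiq, Matrix.single_mul_single_of_ne _ _ _ _ hiq.symm]

lemma lieBC {i j : Fin m} (hij : i ≠ j) :
    ⁅(Bmat i j : Mat K m), (Cmat i j : Mat K m)⁆ = Hmat i j := by
  rw [lie_eq]
  simp only [Bmat, Cmat, Hmat, E, fromBlocks_multiply, fromBlocks_add, mul_zero, zero_mul,
    add_zero, zero_add, mul_add, add_mul, Matrix.single_mul_single_same, one_mul,
    Matrix.single_mul_single_of_ne _ _ _ _ hij, Matrix.single_mul_single_of_ne _ _ _ _ hij.symm]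
  rw [fromBlocks_inj]
  refine ⟨?_, ?_, ?_, ?_⟩ <;> abel

lemma zAB {i j : Fin m} (hij : i ≠ j) :
    ⁅(Amat i j : Mat K m), (Bmat i j : Mat K m)⁆ = 0 := by
  rw [lie_eq]
  simp only [Amat, Bmat, E, fromBlocks_multiply, fromBlocks_add, mul_zero, zero_mul, add_zero,
    zero_add, mul_add, add_mul, Matrix.single_mul_single_same, one_mul,
    Matrix.single_mul_single_of_ne _ _ _ _ hij, Matrix.single_mul_single_of_ne _ _ _ _ hij.symm, mat_add_self,
    fromBlocks_zero]

lemma zAC {i j : Fin m} (hij : i ≠ j) :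
    ⁅(Amat i j : Mat K m), (Cmat i j : Mat K m)⁆ = 0 := by
  rw [lie_eq]
  simp only [Amat, Cmat, E, fromBlocks_multiply, fromBlocks_add, mul_zero, zero_mul, add_zero,
    zero_add, mul_add, add_mul, Matrix.single_mul_single_same, one_mul,
    Matrix.single_mul_single_of_ne _ _ _ _ hij, Matrix.single_mul_single_of_ne _ _ _ _ hij.symm, mat_add_self,
    fromBlocks_zero]

lemma dAA {i j p q : Fin m} (h1 : j ≠ p) (h2 : q ≠ i) :
    ⁅(Amat i j : Mat K m), (Amat p q : Mat K m)⁆ = 0 := by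
  rw [lie_eq]
  simp only [Amat, E, fromBlocks_multiply, fromBlocks_add, mul_zero, zero_mul, add_zero, zero_add,
    Matrix.single_mul_single_of_ne _ _ _ _ h1, Matrix.single_mul_single_of_ne _ _ _ _ h2, Matrix.single_mul_single_of_ne _ _ _ _ h1.symm,
    Matrix.single_mul_single_of_ne _ _ _ _ h2.symm, fromBlocks_zero, add_zero, zero_add]

lemma dAB {i j p q : Fin m} (h1 : j ≠ p) (h2 : j ≠ q) :
    ⁅(Amat i j : Mat K m), (Bmat p q : Mat K m)⁆ = 0 := by
  rw [lie_eq]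
  simp only [Amat, Bmat, E, fromBlocks_multiply, fromBlocks_add, mul_zero, zero_mul, add_zero,
    zero_add, mul_add, add_mul, Matrix.single_mul_single_of_ne _ _ _ _ h1, Matrix.single_mul_single_of_ne _ _ _ _ h2,
    Matrix.single_mul_single_of_ne _ _ _ _ h1.symm, Matrix.single_mul_single_of_ne _ _ _ _ h2.symm, fromBlocks_zero,
    add_zero, zero_add]

lemma dAC {i j p q : Fin m} (h1 : i ≠ p) (h2 : i ≠ q) :
    ⁅(Amat i j : Mat K m), (Cmat p q : Mat K m)⁆ = 0 := by
  rw [lie_eq]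
  simp only [Amat, Cmat, E, fromBlocks_multiply, fromBlocks_add, mul_zero, zero_mul, add_zero,
    zero_add, mul_add, add_mul, Matrix.single_mul_single_of_ne _ _ _ _ h1, Matrix.single_mul_single_of_ne _ _ _ _ h2,
    Matrix.single_mul_single_of_ne _ _ _ _ h1.symm, Matrix.single_mul_single_of_ne _ _ _ _ h2.symm, fromBlocks_zero,
    add_zero, zero_add]

lemma dBB (i j p q : Fin m) : ⁅(Bmat i j : Mat K m), (Bmat p q : Mat K m)⁆ = 0 := by
  rw [lie_eq]
  simp only [Bmat, E, fromBlocks_multiply, fromBlocks_add, mul_zero, zero_mul, add_zero,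
    zero_add, fromBlocks_zero]

lemma dCC (i j p q : Fin m) : ⁅(Cmat i j : Mat K m), (Cmat p q : Mat K m)⁆ = 0 := by
  rw [lie_eq]
  simp only [Cmat, E, fromBlocks_multiply, fromBlocks_add, mul_zero, zero_mul, add_zero,
    zero_add, fromBlocks_zero]

lemma dBC {i j p q : Fin m} (h1 : j ≠ p) (h2 : j ≠ q) (h3 : i ≠ p) (h4 : i ≠ q) :
    ⁅(Bmat i j : Mat K m), (Cmat p q : Mat K m)⁆ = 0 := by
  rw [lie_eq]
  simp only [Bmat, Cmat, E, fromBlocks_multiply, fromBlocks_add, mul_zero, zero_mul, add_zero,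
    zero_add, mul_add, add_mul, Matrix.single_mul_single_of_ne _ _ _ _ h1, Matrix.single_mul_single_of_ne _ _ _ _ h2,
    Matrix.single_mul_single_of_ne _ _ _ _ h3, Matrix.single_mul_single_of_ne _ _ _ _ h4,
    Matrix.single_mul_single_of_ne _ _ _ _ h1.symm, Matrix.single_mul_single_of_ne _ _ _ _ h2.symm,
    Matrix.single_mul_single_of_ne _ _ _ _ h3.symm, Matrix.single_mul_single_of_ne _ _ _ _ h4.symm,
    fromBlocks_zero, add_zero, zero_add]

lemma lieHA {i j k : Fin m} (hij : i ≠ j) (hki : k ≠ i) (hkj : k ≠ j) :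
    ⁅(Hmat i j : Mat K m), (Amat i k : Mat K m)⁆ = Amat i k := by
  rw [lie_eq]
  simp only [Hmat, Amat, E, fromBlocks_multiply, fromBlocks_add, mul_zero, zero_mul, add_zero,
    zero_add, mul_add, add_mul, Matrix.single_mul_single_same, one_mul,
    Matrix.single_mul_single_of_ne _ _ _ _ hij.symm, Matrix.single_mul_single_of_ne _ _ _ _ hki,
    Matrix.single_mul_single_of_ne _ _ _ _ hkj, Matrix.single_mul_single_of_ne _ _ _ _ hki.symm,
    Matrix.single_mul_single_of_ne _ _ _ _ hkj.symm, Matrix.single_mul_single_of_ne _ _ _ _ hij,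
    add_zero, zero_add]

lemma lie_D_vv (d : Fin m → K) (α β γ : K) (p q : Fin m) :
    ⁅(Dmat d : Mat K m), (vv α β γ p q : Mat K m)⁆ = (d p + d q) • vv α β γ p q := by
  rw [lie_eq]
  simp only [Dmat, vv, fromBlocks_multiply, fromBlocks_add, fromBlocks_smul,
    Matrix.mul_smul, Matrix.smul_mul, diagonal_mul_E, E_mul_diagonal,
    mul_zero, zero_mul, smul_zero, add_zero, zero_add, fromBlocks_inj]
  refine ⟨?_, ?_, ?_, ?_⟩ <;> module

lemma pairCombo (α α' β γ : K) (i j : Fin m) :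
    (vv α β γ i j : Mat K m) + vv α' β γ j i =
      α • Amat i j + α' • Amat j i + β • Bmat i j + γ • Cmat i j := by
  simp only [vv, Amat, Bmat, Cmat, fromBlocks_smul, fromBlocks_add, smul_zero, smul_add,
    fromBlocks_inj]
  refine ⟨?_, ?_, ?_, ?_⟩ <;> module

/- ### decomposition of an element of `sp2Set` into elementary pieces -/

lemma sum_fromBlocks {ι : Type*} (s : Finset ι) (f g h k : ι → Matrix (Fin m) (Fin m) K) :
    ∑ p ∈ s, fromBlocks (f p) (g p) (h p) (k p) =
      fromBlocks (∑ p ∈ s, f p) (∑ p ∈ s, g p) (∑ p ∈ s, h p) (∑ p ∈ s, k p) := by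
  classical
  induction s using Finset.induction_on with
  | empty => simp
  | insert _ _ ha ih =>
    rw [Finset.sum_insert ha, Finset.sum_insert ha, Finset.sum_insert ha, Finset.sum_insert ha,
      Finset.sum_insert ha, ih, fromBlocks_add]

lemma sum_scaled_E (Mx : Matrix (Fin m) (Fin m) K) :
    ∑ p : Fin m × Fin m, Mx p.1 p.2 • E K p.1 p.2 = Mx := by
  simp only [E, smul_single, smul_eq_mul, mul_one]
  rw [Fintype.sum_prod_type]
  exact (matrix_eq_sum_single Mx).symm

lemma sum_scaled_E' (Mx : Matrix (Fin m) (Fin m) K) :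
    ∑ p : Fin m × Fin m, Mx p.1 p.2 • E K p.2 p.1 = Mxᵀ := by
  rw [← sum_scaled_E (Mx := Mxᵀ)]
  exact Fintype.sum_equiv (Equiv.prodComm _ _) _ _ (fun p => by
    simp only [Equiv.prodComm_apply, Prod.fst_swap, Prod.snd_swap, transpose_apply])

lemma sum_diag_E (d : Fin m → K) :
    ∑ k, d k • E K k k = diagonal d := by
  simp only [E]
  ext p q
  rw [Matrix.sum_apply]
  rcases eq_or_ne p q with rfl | h
  · rw [diagonal_apply_eq, Finset.sum_eq_single p]
    · rw [Matrix.smul_apply, Matrix.single_apply_same, smul_eq_mul, mul_one]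
    · intro k _ hk
      rw [Matrix.smul_apply, Matrix.single_apply_of_row_ne hk, smul_zero]
    · intro hp; exact absurd (Finset.mem_univ p) hp
  · rw [diagonal_apply_ne _ h]
    refine Finset.sum_eq_zero fun k _ => ?_
    rcases eq_or_ne k p with rfl | hk
    · rw [Matrix.smul_apply, Matrix.single_apply_of_col_ne _ _ h, smul_zero]
    · rw [Matrix.smul_apply, Matrix.single_apply_of_row_ne hk, smul_zero]

lemma Dcmp {X : Mat K m} (hX : X ∈ sp2Set K m) :
    X = ∑ p : Fin m × Fin m,
      vv (X.toBlocks₁₁ p.1 p.2) (X.toBlocks₁₂ p.1 p.2) (X.toBlocks₂₁ p.1 p.2) p.1 p.2 := by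
  obtain ⟨h22, -, -, -⟩ := hX
  conv_lhs => rw [← fromBlocks_toBlocks X, h22]
  simp only [vv]
  rw [sum_fromBlocks, sum_scaled_E, sum_scaled_E, sum_scaled_E, sum_scaled_E']

/- ### regrouping sums over ordered pairs -/

lemma sum_pairs {M : Type*} [AddCommMonoid M] (s : Finset (Fin m × Fin m))
    (hd : ∀ p ∈ s, p.1 ≠ p.2) (hsw : ∀ p ∈ s, p.swap ∈ s) (t : Fin m × Fin m → M) :
    ∑ p ∈ s, t p = ∑ p ∈ s.filter (fun p => p.1 < p.2), (t p + t p.swap) := by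
  rw [← Finset.sum_filter_add_sum_filter_not s (fun p => p.1 < p.2), Finset.sum_add_distrib]
  congr 1
  refine Finset.sum_nbij' (fun p => p.swap) (fun p => p.swap) ?_ ?_ ?_ ?_ ?_
  · intro p hp
    obtain ⟨hps, hnlt⟩ := Finset.mem_filter.mp hp
    refine Finset.mem_filter.mpr ⟨hsw p hps, ?_⟩
    rw [Prod.fst_swap, Prod.snd_swap]
    exact lt_of_le_of_ne (le_of_not_gt hnlt) (hd p hps).symm
  · intro p hp
    obtain ⟨hps, hlt⟩ := Finset.mem_filter.mp hp
    refine Finset.mem_filter.mpr ⟨hsw p hps, ?_⟩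
    rw [Prod.fst_swap, Prod.snd_swap]
    exact asymm hlt
  · intro p _; exact Prod.swap_swap p
  · intro p _; exact Prod.swap_swap p
  · intro p _; rw [Prod.swap_swap]

lemma sum_diag_filter {M : Type*} [AddCommMonoid M] (t : Fin m × Fin m → M) :
    ∑ p ∈ Finset.univ.filter (fun p : Fin m × Fin m => p.1 = p.2), t p = ∑ k, t (k, k) := by
  refine Finset.sum_nbij' (fun p => p.1) (fun k => (k, k)) ?_ ?_ ?_ ?_ ?_
  · intro p _; exact Finset.mem_univ _
  · intro k _; exact Finset.mem_filter.mpr ⟨Finset.mem_univ _, rfl⟩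
  · intro p hp
    obtain ⟨-, he⟩ := Finset.mem_filter.mp hp
    exact (@Prod.ext_iff _ _ (p.1, p.1) p).mpr ⟨rfl, he⟩
  · intro k _; rfl
  · intro p hp
    obtain ⟨-, he⟩ := Finset.mem_filter.mp hp
    exact (congrArg t ((@Prod.ext_iff _ _ (p.1, p.1) p).mpr ⟨rfl, he⟩)).symm

/- ### the eigenvector extraction lemma -/

lemma extract0 {V : Type*} [AddCommGroup V] [Module K V] (I : Submodule K V)
    (f : V →ₗ[K] V) (hf : ∀ x ∈ I, f x ∈ I) (s : Finset K) :
    ∀ u : K → V, (∀ t ∈ s, f (u t) = t • u t) → (∑ t ∈ s, u t) ∈ I → ∀ t ∈ s, u t ∈ I := by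
  classical
  induction s using Finset.induction_on with
  | empty => intro u _ _ t ht; exact absurd ht (Finset.notMem_empty t)
  | @insert t₀ s' ht₀ ih =>
    intro u hu hsum t ht
    have hw : (∑ x ∈ s', (x - t₀) • u x) ∈ I := by
      have h1 : f (∑ x ∈ insert t₀ s', u x) - t₀ • (∑ x ∈ insert t₀ s', u x) ∈ I :=
        I.sub_mem (hf _ hsum) (I.smul_mem _ hsum)
      have h2 : f (∑ x ∈ insert t₀ s', u x) - t₀ • (∑ x ∈ insert t₀ s', u x)
          = ∑ x ∈ insert t₀ s', (x - t₀) • u x := by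
        rw [map_sum, Finset.smul_sum, ← Finset.sum_sub_distrib]
        refine Finset.sum_congr rfl fun x hx => ?_
        rw [hu x hx, sub_smul]
      rw [h2, Finset.sum_insert ht₀, sub_self, zero_smul, zero_add] at h1
      exact h1
    have key : ∀ x ∈ s', u x ∈ I := by
      intro x hx
      have hmem : (x - t₀) • u x ∈ I := by
        refine ih (fun t => (t - t₀) • u t) (fun t ht' => ?_) hw x hx
        show f ((t - t₀) • u t) = t • ((t - t₀) • u t)
        rw [LinearMap.map_smul, hu t (Finset.mem_insert_of_mem ht'), smul_smul, smul_smul,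
          mul_comm]
      have hx0 : x - t₀ ≠ 0 := sub_ne_zero.mpr (fun h => ht₀ (by rwa [h] at hx))
      have hfin := I.smul_mem (x - t₀)⁻¹ hmem
      rwa [smul_smul, inv_mul_cancel₀ hx0, one_smul] at hfin
    rcases Finset.mem_insert.mp ht with rfl | hts
    · have he : u t = (∑ x ∈ insert t s', u x) - ∑ x ∈ s', u x := by
        rw [Finset.sum_insert ht₀]; abel
      rw [he]
      exact I.sub_mem hsum (I.sum_mem fun x hx => key x hx)
    · exact key t hts

lemma extract {V : Type*} [AddCommGroup V] [Module K V] [DecidableEq K] (I : Submodule K V)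
    (f : V →ₗ[K] V) (hf : ∀ x ∈ I, f x ∈ I) {ι : Type*} [DecidableEq ι] (s : Finset ι)
    (v : ι → V) (c : ι → K) (hv : ∀ i ∈ s, f (v i) = c i • v i)
    (hs : (∑ i ∈ s, v i) ∈ I) (t₀ : K) :
    (∑ i ∈ s.filter (fun i => c i = t₀), v i) ∈ I := by
  have hsum : ∑ t ∈ s.image c, ∑ i ∈ s.filter (fun i => c i = t), v i = ∑ i ∈ s, v i :=
    Finset.sum_fiberwise_of_maps_to (fun i hi => Finset.mem_image_of_mem c hi) v
  have heig : ∀ t ∈ s.image c,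
      f (∑ i ∈ s.filter (fun i => c i = t), v i)
        = t • ∑ i ∈ s.filter (fun i => c i = t), v i := by
    intro t _
    rw [map_sum, Finset.smul_sum]
    refine Finset.sum_congr rfl fun i hi => ?_
    obtain ⟨his, hci⟩ := Finset.mem_filter.mp hi
    rw [hv i his, hci]
  by_cases ht₀ : t₀ ∈ s.image c
  · exact extract0 I f hf (s.image c) _ heig (by rw [hsum]; exact hs) t₀ ht₀
  · have hemp : s.filter (fun i => c i = t₀) = ∅ := by
      refine Finset.filter_eq_empty_iff.mpr fun {i} hi hc => ?_
      exact ht₀ (hc ▸ Finset.mem_image_of_mem c hi)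
    rw [hemp, Finset.sum_empty]
    exact I.zero_mem

/- ### existence of an injective tuple with zero sum -/

lemma exists_inj_sum_zero [Infinite K] (hm : 3 ≤ m) :
    ∃ h : Fin m → K, Function.Injective h ∧ ∑ k, h k = 0 := by
  classical
  obtain ⟨s₀, hcard⟩ := Infinite.exists_subset_card_eq K (m - 2)
  obtain ⟨s, hsc, hsn⟩ : ∃ s : Finset K, s.card = m - 2 ∧ ∑ x ∈ s, x ≠ 0 := by
    by_cases h0 : ∑ x ∈ s₀, x ≠ 0
    · exact ⟨s₀, hcard, h0⟩
    · push_neg at h0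
      have hne : s₀.Nonempty := by
        rw [← Finset.card_pos, hcard]; omega
      obtain ⟨y, hy⟩ := hne
      obtain ⟨x, hx⟩ := Infinite.exists_notMem_finset s₀
      have hxe : x ∉ s₀.erase y := fun hc => hx (Finset.mem_of_mem_erase hc)
      refine ⟨insert x (s₀.erase y), ?_, ?_⟩
      · rw [Finset.card_insert_of_notMem hxe, Finset.card_erase_of_mem hy, hcard]
        omega
      · rw [Finset.sum_insert hxe]
        have h3 : (∑ z ∈ s₀.erase y, z) + y = ∑ z ∈ s₀, z :=
          Finset.sum_erase_add s₀ (fun z => z) hy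
        have h2 : ∑ z ∈ s₀.erase y, z = y := char2_add_eq_zero.mp (h3.trans h0)
        rw [h2, Ne, char2_add_eq_zero]
        exact fun hc => hx (hc ▸ hy)
  set σ := ∑ x ∈ s, x with hσ
  obtain ⟨x, hx⟩ := Infinite.exists_notMem_finset (s ∪ s.image (fun t => σ + t))
  have hx1 : x ∉ s := fun hc => hx (Finset.mem_union_left _ hc)
  have hx2 : σ + x ∉ s := by
    intro hc
    exact hx (Finset.mem_union_right _ (Finset.mem_image.mpr ⟨σ + x, hc, by
      rw [← add_assoc, CharTwo.add_self_eq_zero, zero_add]⟩))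
  have hx3 : x ≠ σ + x := by
    intro hc
    apply hsn
    have h5 := char2_add_eq_zero.mpr hc.symm
    rwa [add_assoc, CharTwo.add_self_eq_zero, add_zero] at h5
  have hxn : x ∉ insert (σ + x) s := by
    intro hc
    rcases Finset.mem_insert.mp hc with h' | h'
    · exact hx3 h'
    · exact hx1 h'
  set T : Finset K := insert x (insert (σ + x) s) with hT
  have hTcard : T.card = m := by
    rw [hT, Finset.card_insert_of_notMem hxn, Finset.card_insert_of_notMem hx2, hsc]
    omega
  have hTsum : ∑ t ∈ T, t = 0 := by
    rw [hT, Finset.sum_insert hxn, Finset.sum_insert hx2, ← hσ]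
    have : x + (σ + x + σ) = (x + x) + (σ + σ) := by ring
    rw [this, CharTwo.add_self_eq_zero, CharTwo.add_self_eq_zero, add_zero]
  let e : Fin m ≃ {t // t ∈ T} := ((T.equivFin).trans (finCongr hTcard)).symm
  refine ⟨fun k => (e k : K), fun k l hkl => e.injective (Subtype.ext hkl), ?_⟩
  rw [← hTsum, ← Finset.sum_coe_sort T (fun t => (t : K))]
  exact Equiv.sum_comp e (fun t => (t : K))

/- ### a third index -/

lemma third (hm : 3 ≤ m) (i j : Fin m) : ∃ k : Fin m, k ≠ i ∧ k ≠ j := by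
  by_contra hcon
  push_neg at hcon
  have hsub : (Finset.univ : Finset (Fin m)) ⊆ {i, j} := by
    intro k _
    rcases eq_or_ne k i with rfl | hk
    · exact Finset.mem_insert_self _ _
    · rw [hcon k hk]; exact Finset.mem_insert_of_mem (Finset.mem_singleton_self _)
  have h1 := Finset.card_le_card hsub
  rw [Finset.card_univ, Fintype.card_fin] at h1
  have h2 : ({i, j} : Finset (Fin m)).card ≤ 2 :=
    le_trans (Finset.card_insert_le _ _) (by rw [Finset.card_singleton])
  omega

/- ### misc scalar lemmas -/

lemma scalar_one_eq (cc : K) : (cc • 1 : Mat K m) = fromBlocks (cc • 1) 0 0 (cc • 1) := by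
  rw [← fromBlocks_one, fromBlocks_smul, smul_zero]

lemma scalar_mem (hmz : (m : K) = 0) (cc : K) : (cc • 1 : Mat K m) ∈ sp2Set K m := by
  rw [scalar_one_eq]
  refine ⟨?_, ?_, ?_, ?_⟩ <;>
    simp only [toBlocks_fromBlocks₁₁, toBlocks_fromBlocks₁₂, toBlocks_fromBlocks₂₁,
      toBlocks_fromBlocks₂₂]
  · rw [transpose_smul, transpose_one]
  · exact ⟨isSymm_zero, fun k => rfl⟩
  · exact ⟨isSymm_zero, fun k => rfl⟩
  · rw [trace_smul, trace_one, Fintype.card_fin, smul_eq_mul, hmz, mul_zero]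

lemma Dmat_const (cc : K) : (Dmat (fun _ => cc) : Mat K m) = cc • 1 := by
  rw [scalar_one_eq, smul_one_eq_diagonal]
  rfl

lemma Dmat_erase (d : Fin m → K) (hd : ∑ k, d k = 0) (k0 : Fin m) :
    (Dmat d : Mat K m) = ∑ k ∈ Finset.univ.erase k0, d k • Hmat k0 k := by
  have hsum : ∑ k ∈ Finset.univ.erase k0, d k = d k0 := by
    have h3 : (∑ k ∈ Finset.univ.erase k0, d k) + d k0 = ∑ k, d k :=
      Finset.sum_erase_add _ _ (Finset.mem_univ k0)
    exact char2_add_eq_zero.mp (h3.trans hd)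
  have hblock : ∑ k ∈ Finset.univ.erase k0, d k • (E K k0 k0 + E K k k) = diagonal d := by
    simp only [smul_add]
    rw [Finset.sum_add_distrib, ← Finset.sum_smul, hsum, ← sum_diag_E d]
    exact Finset.add_sum_erase _ (fun k => d k • E K k k) (Finset.mem_univ k0)
  simp only [Hmat, fromBlocks_smul, smul_zero]
  rw [sum_fromBlocks, Finset.sum_const_zero, hblock]
  rfl

/- ### from an off-diagonal coefficient to an `H` generator -/

lemma gen_from_offdiag [Infinite K] (hm : 3 ≤ m) (I : Submodule K (Mat K m))
    (hId : ∀ x ∈ sp2Set K m, ∀ y ∈ I, ⁅x, y⁆ ∈ I)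
    {X : Mat K m} (hXI : X ∈ I) (hXs : X ∈ sp2Set K m)
    {i j : Fin m} (hij : i ≠ j)
    (hnz : ¬(X.toBlocks₁₁ i j = 0 ∧ X.toBlocks₁₁ j i = 0 ∧
             X.toBlocks₁₂ i j = 0 ∧ X.toBlocks₂₁ i j = 0)) :
    (Hmat i j : Mat K m) ∈ I := by
  classical
  obtain ⟨h, hinj, hs0⟩ := exists_inj_sum_zero (K := K) hm
  obtain ⟨h22, hb, hc, htr⟩ := hXs
  set a := X.toBlocks₁₁ with ha
  set b := X.toBlocks₁₂ with hbdef
  set c := X.toBlocks₂₁ with hcdef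
  have hdec : X = ∑ p : Fin m × Fin m, vv (a p.1 p.2) (b p.1 p.2) (c p.1 p.2) p.1 p.2 :=
    Dcmp ⟨h22, hb, hc, htr⟩
  set DD : Mat K m := Dmat h with hDD
  set f : Mat K m →ₗ[K] Mat K m := LinearMap.mulLeft K DD - LinearMap.mulRight K DD with hfdef
  have hfl : ∀ x : Mat K m, f x = ⁅DD, x⁆ := fun x => by
    rw [hfdef, LinearMap.sub_apply, LinearMap.mulLeft_apply, LinearMap.mulRight_apply,
      Ring.lie_def]
  have hfI : ∀ x ∈ I, f x ∈ I := fun x hx => by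
    rw [hfl]; exact hId DD (D_mem hs0) x hx
  have hW : (∑ p ∈ Finset.univ.filter
        (fun p : Fin m × Fin m => h p.1 + h p.2 = h i + h j),
        vv (a p.1 p.2) (b p.1 p.2) (c p.1 p.2) p.1 p.2) ∈ I := by
    refine extract I f hfI (Finset.univ : Finset (Fin m × Fin m)) _
      (fun p : Fin m × Fin m => h p.1 + h p.2) (fun p _ => ?_)
      (by rw [← hdec]; exact hXI) (h i + h j)
    rw [hfl]
    exact lie_D_vv h _ _ _ _ _
  set F := Finset.univ.filter
      (fun p : Fin m × Fin m => h p.1 + h p.2 = h i + h j) with hF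
  have hijF : (i, j) ∈ F := Finset.mem_filter.mpr ⟨Finset.mem_univ _, rfl⟩
  have hjiF : (j, i) ∈ F := Finset.mem_filter.mpr ⟨Finset.mem_univ _, add_comm _ _⟩
  have hijji : ((i, j) : Fin m × Fin m) ≠ (j, i) := fun hco => hij (congrArg Prod.fst hco)
  have hjiij : ((j, i) : Fin m × Fin m) ≠ (i, j) := fun hco => hij (congrArg Prod.snd hco)
  set F' := (F.erase (i, j)).erase (j, i) with hF'
  have hkey : ∀ p ∈ F', p.1 ≠ p.2 ∧ p.1 ≠ i ∧ p.1 ≠ j ∧ p.2 ≠ i ∧ p.2 ≠ j := by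
    intro p hp
    have hpji : p ≠ (j, i) := Finset.ne_of_mem_erase hp
    have hpij : p ≠ (i, j) := Finset.ne_of_mem_erase (Finset.mem_of_mem_erase hp)
    have hpF : p ∈ F := Finset.mem_of_mem_erase (Finset.mem_of_mem_erase hp)
    have hfib : h p.1 + h p.2 = h i + h j := (Finset.mem_filter.mp hpF).2
    obtain ⟨p1, p2⟩ := p
    simp only [ne_eq, Prod.mk.injEq, not_and] at hpji hpij
    simp only at hfib ⊢
    refine ⟨?_, ?_, ?_, ?_, ?_⟩
    · rintro rfl
      rw [CharTwo.add_self_eq_zero] at hfib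
      exact hij (hinj (char2_add_eq_zero.mp hfib.symm))
    · rintro rfl
      exact hpij rfl (hinj (add_left_cancel hfib))
    · rintro rfl
      exact hpji rfl (hinj (add_left_cancel (hfib.trans (add_comm _ _))))
    · rintro rfl
      exact hpji (hinj (add_right_cancel (hfib.trans (add_comm _ _)))) rfl
    · rintro rfl
      exact hpij (hinj (add_right_cancel hfib)) rfl
  have hsplit : F = insert (i, j) (insert (j, i) F') := by
    rw [hF', Finset.insert_erase (Finset.mem_erase.mpr ⟨hjiij, hjiF⟩),
      Finset.insert_erase hijF]
  have hnotin1 : ((i, j) : Fin m × Fin m) ∉ insert (j, i) F' := by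
    intro hc
    rcases Finset.mem_insert.mp hc with h' | h'
    · exact hijji h'
    · exact (Finset.ne_of_mem_erase (Finset.mem_of_mem_erase h')) rfl
  have hnotin2 : ((j, i) : Fin m × Fin m) ∉ F' := fun hc => (Finset.ne_of_mem_erase hc) rfl
  have hbs : b j i = b i j := hb.1.apply i j
  have hcs : c j i = c i j := hc.1.apply i j
  -- the main computation of the bracket against the extracted fiber sum
  have main : ∀ g : Mat K m,
      (∀ p q : Fin m, p ≠ q → p ≠ i → p ≠ j → q ≠ i → q ≠ j →
        (⁅g, (Amat p q : Mat K m)⁆ = 0 ∧ ⁅g, (Bmat p q : Mat K m)⁆ = 0 ∧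
          ⁅g, (Cmat p q : Mat K m)⁆ = 0)) →
      ⁅g, ∑ p ∈ F, vv (a p.1 p.2) (b p.1 p.2) (c p.1 p.2) p.1 p.2⁆ =
        ⁅g, (a i j) • (Amat i j : Mat K m) + (a j i) • Amat j i +
            (b i j) • Bmat i j + (c i j) • Cmat i j⁆ := by
    intro g hg
    rw [lie_sum', hsplit, Finset.sum_insert hnotin1, Finset.sum_insert hnotin2]
    have hF'd : ∀ p ∈ F', p.1 ≠ p.2 := fun p hp => (hkey p hp).1
    have hF'sw : ∀ p ∈ F', p.swap ∈ F' := by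
      intro p hp
      have hpF : p ∈ F := Finset.mem_of_mem_erase (Finset.mem_of_mem_erase hp)
      have h1 : p.swap ∈ F := Finset.mem_filter.mpr ⟨Finset.mem_univ _, by
        rw [Prod.fst_swap, Prod.snd_swap, add_comm]
        exact (Finset.mem_filter.mp hpF).2⟩
      refine Finset.mem_erase.mpr ⟨?_, Finset.mem_erase.mpr ⟨?_, h1⟩⟩
      · intro hc
        apply Finset.ne_of_mem_erase (Finset.mem_of_mem_erase hp)
        rw [← Prod.swap_swap p, hc]
        rfl
      · intro hc
        apply Finset.ne_of_mem_erase hp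
        rw [← Prod.swap_swap p, hc]
        rfl
    have hrest : ∑ p ∈ F', ⁅g, vv (a p.1 p.2) (b p.1 p.2) (c p.1 p.2) p.1 p.2⁆ = 0 := by
      rw [sum_pairs F' hF'd hF'sw]
      refine Finset.sum_eq_zero fun p hp => ?_
      have hpF' := (Finset.mem_filter.mp hp).1
      obtain ⟨hne, h1i, h1j, h2i, h2j⟩ := hkey p hpF'
      dsimp only [Prod.fst_swap, Prod.snd_swap]
      rw [← lie_add', show b p.2 p.1 = b p.1 p.2 from hb.1.apply p.1 p.2,
        show c p.2 p.1 = c p.1 p.2 from hc.1.apply p.1 p.2, pairCombo]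
      obtain ⟨z1, z2, z3⟩ := hg p.1 p.2 hne h1i h1j h2i h2j
      obtain ⟨z4, -, -⟩ := hg p.2 p.1 hne.symm h2i h2j h1i h1j
      rw [lie_add', lie_add', lie_add', lie_smul', lie_smul', lie_smul', lie_smul', z1, z2, z3, z4]
      simp only [smul_zero, add_zero]
    rw [hrest, add_zero, ← lie_add']
    congr 1
    rw [hbs, hcs, pairCombo]
  -- four coefficient extractions
  have memA2 : (a j i) • (Hmat i j : Mat K m) ∈ I := by
    have hbr := hId (Amat i j) (A_mem hij) _ hW
    rw [main (Amat i j) (fun p q hpq hpi hpj hqi hqj =>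
      ⟨dAA hpj.symm hqi, dAB hpj.symm hqj.symm, dAC hpi.symm hqi.symm⟩)] at hbr
    rw [lie_add', lie_add', lie_add', lie_smul', lie_smul', lie_smul', lie_smul', lie_self',
      lieAA' hij, zAB hij, zAC hij] at hbr
    simpa only [smul_zero, zero_add, add_zero] using hbr
  have memA1 : (a i j) • (Hmat i j : Mat K m) ∈ I := by
    have hbr := hId (Amat j i) (A_mem hij.symm) _ hW
    rw [main (Amat j i) (fun p q hpq hpi hpj hqi hqj =>
      ⟨dAA hpi.symm hqj, dAB hpi.symm hqi.symm, dAC hpj.symm hqj.symm⟩)] at hbr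
    rw [Bswap i j, Cswap i j, lie_add', lie_add', lie_add', lie_smul', lie_smul', lie_smul',
      lie_smul', lie_self', lieAA' hij.symm, Hswap j i, zAB hij.symm, zAC hij.symm] at hbr
    simpa only [smul_zero, zero_add, add_zero] using hbr
  have memC : (c i j) • (Hmat i j : Mat K m) ∈ I := by
    have hbr := hId (Bmat i j) (B_mem hij) _ hW
    have e1 : ⁅(Bmat i j : Mat K m), (Amat i j : Mat K m)⁆ = 0 := by
      rw [lie_comm]; exact zAB hij
    have e2 : ⁅(Bmat i j : Mat K m), (Amat j i : Mat K m)⁆ = 0 := by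
      rw [lie_comm, Bswap i j]; exact zAB hij.symm
    rw [main (Bmat i j) (fun p q hpq hpi hpj hqi hqj =>
      ⟨by rw [lie_comm]; exact dAB hqi hqj,
       dBB i j p q,
       dBC hpj.symm hqj.symm hpi.symm hqi.symm⟩)] at hbr
    rw [lie_add', lie_add', lie_add', lie_smul', lie_smul', lie_smul', lie_smul', e1, e2,
      lie_self', lieBC hij] at hbr
    simpa only [smul_zero, zero_add, add_zero] using hbr
  have memB : (b i j) • (Hmat i j : Mat K m) ∈ I := by
    have hbr := hId (Cmat i j) (C_mem hij) _ hW
    have e1 : ⁅(Cmat i j : Mat K m), (Amat i j : Mat K m)⁆ = 0 := by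
      rw [lie_comm]; exact zAC hij
    have e2 : ⁅(Cmat i j : Mat K m), (Amat j i : Mat K m)⁆ = 0 := by
      rw [lie_comm, Cswap i j]; exact zAC hij.symm
    have e3 : ⁅(Cmat i j : Mat K m), (Bmat i j : Mat K m)⁆ = Hmat i j := by
      rw [lie_comm]; exact lieBC hij
    rw [main (Cmat i j) (fun p q hpq hpi hpj hqi hqj =>
      ⟨by rw [lie_comm]; exact dAC hpi hpj,
       by rw [lie_comm]; exact dBC hqi hqj hpi hpj,
       dCC i j p q⟩)] at hbr
    rw [lie_add', lie_add', lie_add', lie_smul', lie_smul', lie_smul', lie_smul', e1, e2, e3,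
      lie_self'] at hbr
    simpa only [smul_zero, zero_add, add_zero] using hbr
  have hHmem : ∀ t : K, t • (Hmat i j : Mat K m) ∈ I → t ≠ 0 → (Hmat i j : Mat K m) ∈ I := by
    intro t ht htne
    have h5 := I.smul_mem t⁻¹ ht
    rwa [smul_smul, inv_mul_cancel₀ htne, one_smul] at h5
  by_cases h1 : a i j = 0
  · by_cases h2 : a j i = 0
    · by_cases h3 : b i j = 0
      · by_cases h4 : c i j = 0
        · exact absurd ⟨h1, h2, h3, h4⟩ hnz
        · exact hHmem _ memC h4
      · exact hHmem _ memB h3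
    · exact hHmem _ memA2 h2
  · exact hHmem _ memA1 h1

/- ### from an `H` generator to an `A` generator -/

lemma H_to_A (hm : 3 ≤ m) (I : Submodule K (Mat K m))
    (hId : ∀ x ∈ sp2Set K m, ∀ y ∈ I, ⁅x, y⁆ ∈ I)
    {i j : Fin m} (hij : i ≠ j) (hH : (Hmat i j : Mat K m) ∈ I) :
    ∃ p q : Fin m, p ≠ q ∧ (Amat p q : Mat K m) ∈ I := by
  obtain ⟨k, hki, hkj⟩ := third hm i j
  have hbr := hId (Amat i k) (A_mem (Ne.symm hki)) _ hH
  rw [lie_comm, lieHA hij hki hkj] at hbr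
  exact ⟨i, k, Ne.symm hki, hbr⟩

/- ### spanning: all generators in an ideal force the whole algebra in -/

lemma span_step (hm : 3 ≤ m) (I : Submodule K (Mat K m))
    (hA : ∀ p q : Fin m, p ≠ q → (Amat p q : Mat K m) ∈ I)
    (hB : ∀ p q : Fin m, p ≠ q → (Bmat p q : Mat K m) ∈ I)
    (hC : ∀ p q : Fin m, p ≠ q → (Cmat p q : Mat K m) ∈ I)
    (hH : ∀ p q : Fin m, p ≠ q → (Hmat p q : Mat K m) ∈ I)
    {X : Mat K m} (hX : X ∈ sp2Set K m) : X ∈ I := by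
  classical
  obtain ⟨h22, hb, hc, htr⟩ := hX
  rw [Dcmp ⟨h22, hb, hc, htr⟩,
    ← Finset.sum_filter_add_sum_filter_not Finset.univ (fun p : Fin m × Fin m => p.1 = p.2)]
  refine I.add_mem ?_ ?_
  · have h0 : ∑ p ∈ Finset.univ.filter (fun p : Fin m × Fin m => p.1 = p.2),
        vv (X.toBlocks₁₁ p.1 p.2) (X.toBlocks₁₂ p.1 p.2) (X.toBlocks₂₁ p.1 p.2) p.1 p.2
        = ∑ k : Fin m, vv (X.toBlocks₁₁ k k) (X.toBlocks₁₂ k k) (X.toBlocks₂₁ k k) k k :=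
      sum_diag_filter _
    have h1 : ∀ k : Fin m, vv (X.toBlocks₁₁ k k) (X.toBlocks₁₂ k k) (X.toBlocks₂₁ k k) k k
        = fromBlocks ((X.toBlocks₁₁ k k) • E K k k) 0 0 ((X.toBlocks₁₁ k k) • E K k k) := by
      intro k
      rw [vv, hb.2 k, hc.2 k, zero_smul]
    have h2 : ∑ k : Fin m, (X.toBlocks₁₁ k k) • E K k k
        = diagonal (fun k => X.toBlocks₁₁ k k) := sum_diag_E _
    rw [h0, Finset.sum_congr rfl fun k _ => h1 k, sum_fromBlocks, Finset.sum_const_zero, h2]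
    have h3 : (fromBlocks (diagonal (fun k => X.toBlocks₁₁ k k)) 0 0
        (diagonal (fun k => X.toBlocks₁₁ k k)) : Mat K m)
        = Dmat (fun k => X.toBlocks₁₁ k k) := rfl
    rw [h3, Dmat_erase (fun k => X.toBlocks₁₁ k k)
      (by simpa [Matrix.trace, Matrix.diag] using htr) ⟨0, by omega⟩]
    exact I.sum_mem fun k hk => I.smul_mem _ (hH _ _ (Ne.symm (Finset.ne_of_mem_erase hk)))
  · rw [sum_pairs _ (fun p hp => (Finset.mem_filter.mp hp).2) (fun p hp =>
      Finset.mem_filter.mpr ⟨Finset.mem_univ _, by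
        have h4 := (Finset.mem_filter.mp hp).2
        rw [Prod.fst_swap, Prod.snd_swap]
        exact fun hc => h4 hc.symm⟩)]
    refine I.sum_mem fun p hp => ?_
    have hne : p.1 ≠ p.2 := (Finset.mem_filter.mp ((Finset.mem_filter.mp hp).1)).2
    dsimp only [Prod.fst_swap, Prod.snd_swap]
    rw [show X.toBlocks₁₂ p.2 p.1 = X.toBlocks₁₂ p.1 p.2 from hb.1.apply p.1 p.2,
      show X.toBlocks₂₁ p.2 p.1 = X.toBlocks₂₁ p.1 p.2 from hc.1.apply p.1 p.2, pairCombo]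
    exact I.add_mem (I.add_mem (I.add_mem (I.smul_mem _ (hA _ _ hne))
      (I.smul_mem _ (hA _ _ hne.symm))) (I.smul_mem _ (hB _ _ hne)))
      (I.smul_mem _ (hC _ _ hne))

/- ### from one `A` generator to everything -/

lemma all_gens (hm : 3 ≤ m) (I : Submodule K (Mat K m))
    (hId : ∀ x ∈ sp2Set K m, ∀ y ∈ I, ⁅x, y⁆ ∈ I)
    {i0 j0 : Fin m} (hij0 : i0 ≠ j0) (hA0 : (Amat i0 j0 : Mat K m) ∈ I) :
    ∀ X ∈ sp2Set K m, X ∈ I := by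
  have colj : ∀ k : Fin m, k ≠ j0 → (Amat k j0 : Mat K m) ∈ I := by
    intro k hk
    rcases eq_or_ne k i0 with rfl | hki
    · exact hA0
    · have hbr := hId (Amat k i0) (A_mem hki) _ hA0
      rwa [lieAA hki hij0 hk] at hbr
  have main1 : ∀ p q : Fin m, p ≠ q → p ≠ j0 → q ≠ j0 → (Amat p q : Mat K m) ∈ I := by
    intro p q hpq hp hq
    have hbr := hId (Amat j0 q) (A_mem (Ne.symm hq)) _ (colj p hp)
    rwa [lie_comm, lieAA hp (Ne.symm hq) hpq] at hbr
  have hA : ∀ p q : Fin m, p ≠ q → (Amat p q : Mat K m) ∈ I := by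
    intro p q hpq
    rcases eq_or_ne q j0 with rfl | hq
    · exact colj p hpq
    · rcases eq_or_ne p j0 with heq | hp
      · obtain ⟨k, hk1, hk2⟩ := third hm p q
        have hkj0 : k ≠ j0 := heq ▸ hk1
        have hbr := hId (Amat p k) (A_mem (Ne.symm hk1)) _ (main1 k q hk2 hkj0 hq)
        rwa [lieAA (Ne.symm hk1) hk2 hpq] at hbr
      · exact main1 p q hpq hp hq
  have hHgen : ∀ p q : Fin m, p ≠ q → (Hmat p q : Mat K m) ∈ I := by
    intro p q hpq
    have hbr := hId (Amat q p) (A_mem hpq.symm) _ (hA p q hpq)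
    rwa [lie_comm, lieAA' hpq] at hbr
  have hBgen : ∀ p q : Fin m, p ≠ q → (Bmat p q : Mat K m) ∈ I := by
    intro p q hpq
    obtain ⟨k, hk1, hk2⟩ := third hm p q
    have hbr := hId (Bmat k q) (B_mem hk2) _ (hA p k (Ne.symm hk1))
    rwa [lie_comm, lieAB (Ne.symm hk1) hk2 hpq] at hbr
  have hCgen : ∀ p q : Fin m, p ≠ q → (Cmat p q : Mat K m) ∈ I := by
    intro p q hpq
    obtain ⟨k, hk1, hk2⟩ := third hm p q
    have hbr := hId (Cmat k q) (C_mem hk2) _ (hA k p hk1)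
    rwa [lie_comm, lieAC hk1 hk2 hpq] at hbr
  intro X hX
  exact span_step hm I hA hBgen hCgen hHgen hX

end Sp2Proof

open Sp2Proof in
/-- Let `K` be an algebraically closed field of characteristic 2 and `m ≥ 3`
with `4 ∣ 2m`.  Then the scalar matrices `z(gl_{2m}(K))` lie in
`sp_{2m}(K)⁽²⁾`, and the quotient `sp_{2m}(K)⁽²⁾ / z(gl_{2m}(K))` is a simple
Lie algebra: every ideal of `sp_{2m}(K)⁽²⁾` containing the scalar matrices is
either the scalar matrices or everything, and the quotient is non-abelian. -/
theorem sp2_quotient_isSimple {K : Type*} [Field K] [IsAlgClosed K] [CharP K 2]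
    (m : ℕ) (hm : 3 ≤ m) (h4 : 4 ∣ 2 * m) :
    let Z : Set (Matrix (Fin m ⊕ Fin m) (Fin m ⊕ Fin m) K) :=
      Set.range (fun c : K => c • (1 : Matrix (Fin m ⊕ Fin m) (Fin m ⊕ Fin m) K))
    Z ⊆ sp2Set K m ∧
    (∃ x ∈ sp2Set K m, ∃ y ∈ sp2Set K m, ⁅x, y⁆ ∉ Z) ∧
    (∀ I : Submodule K (Matrix (Fin m ⊕ Fin m) (Fin m ⊕ Fin m) K),
      Z ⊆ ↑I → (↑I ⊆ sp2Set K m) →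
      (∀ x ∈ sp2Set K m, ∀ y ∈ I, ⁅x, y⁆ ∈ I) →
      (↑I : Set (Matrix (Fin m ⊕ Fin m) (Fin m ⊕ Fin m) K)) = Z ∨
      (↑I : Set (Matrix (Fin m ⊕ Fin m) (Fin m ⊕ Fin m) K)) = sp2Set K m) := by
  intro Z
  obtain ⟨kk, hkk⟩ := h4
  have hm2 : m = 2 * kk := by omega
  have hmz : (m : K) = 0 := by
    rw [hm2]
    push_cast
    rw [CharTwo.two_eq_zero, zero_mul]
  have i0 : Fin m := ⟨0, by omega⟩
  refine ⟨?_, ?_, ?_⟩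
  · rintro x ⟨cc, rfl⟩
    exact scalar_mem hmz cc
  · -- non-abelian
    have h01 : (⟨0, by omega⟩ : Fin m) ≠ ⟨1, by omega⟩ := by
      simp [Fin.ext_iff]
    refine ⟨Amat ⟨0, by omega⟩ ⟨1, by omega⟩, A_mem h01,
      Amat ⟨1, by omega⟩ ⟨0, by omega⟩, A_mem h01.symm, ?_⟩
    rw [lieAA' h01]
    rintro ⟨cc, hcc⟩
    have hcc' : cc • (1 : Mat K m) = Hmat (⟨0, by omega⟩ : Fin m) ⟨1, by omega⟩ := hcc
    have e1 := congrFun (congrFun hcc' (Sum.inl ⟨0, by omega⟩)) (Sum.inl ⟨0, by omega⟩)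
    have e2 := congrFun (congrFun hcc' (Sum.inl ⟨2, by omega⟩)) (Sum.inl ⟨2, by omega⟩)
    have hne02 : ¬((⟨0, by omega⟩ : Fin m) = ⟨2, by omega⟩ ∧ (⟨0, by omega⟩ : Fin m) = ⟨2, by omega⟩) := by
      simp [Fin.ext_iff]
    have hne12 : ¬((⟨1, by omega⟩ : Fin m) = ⟨2, by omega⟩ ∧ (⟨1, by omega⟩ : Fin m) = ⟨2, by omega⟩) := by
      simp [Fin.ext_iff]
    have hne10 : ¬((⟨1, by omega⟩ : Fin m) = ⟨0, by omega⟩ ∧ (⟨1, by omega⟩ : Fin m) = ⟨0, by omega⟩) := by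
      simp [Fin.ext_iff]
    rw [Matrix.smul_apply, Matrix.one_apply_eq, smul_eq_mul, mul_one] at e1 e2
    rw [Hmat] at e1 e2
    rw [fromBlocks_apply₁₁, Matrix.add_apply] at e1 e2
    simp only [E, Matrix.single_apply_same, Matrix.single_apply_of_ne _ _ _ _ _ hne10,
      Matrix.single_apply_of_ne _ _ _ _ _ hne02, Matrix.single_apply_of_ne _ _ _ _ _ hne12, add_zero,
      zero_add] at e1 e2
    exact one_ne_zero (e1.symm.trans e2)
  · intro I hZI hIsp hId
    by_cases hsub : (↑I : Set (Mat K m)) ⊆ Z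
    · left
      exact Set.Subset.antisymm hsub hZI
    · right
      obtain ⟨X, hXI', hXZ⟩ := Set.not_subset.mp hsub
      have hXI : X ∈ I := hXI'
      have hXs : X ∈ sp2Set K m := hIsp hXI'
      have hgen : ∃ p q : Fin m, p ≠ q ∧ (Amat p q : Mat K m) ∈ I := by
        by_cases hoff : ∃ i j : Fin m, i ≠ j ∧
            ¬(X.toBlocks₁₁ i j = 0 ∧ X.toBlocks₁₁ j i = 0 ∧
              X.toBlocks₁₂ i j = 0 ∧ X.toBlocks₂₁ i j = 0)
        · obtain ⟨i, j, hij, hnz⟩ := hoff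
          exact H_to_A hm I hId hij (gen_from_offdiag hm I hId hXI hXs hij hnz)
        · push_neg at hoff
          have hb0 : X.toBlocks₁₂ = 0 := by
            ext p q
            rw [Matrix.zero_apply]
            rcases eq_or_ne p q with rfl | hne
            · exact hXs.2.1.2 p
            · exact (hoff p q hne).2.2.1
          have hc0 : X.toBlocks₂₁ = 0 := by
            ext p q
            rw [Matrix.zero_apply]
            rcases eq_or_ne p q with rfl | hne
            · exact hXs.2.2.1.2 p
            · exact (hoff p q hne).2.2.2
          have ha0 : X.toBlocks₁₁ = diagonal (fun k => X.toBlocks₁₁ k k) := by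
            ext p q
            rcases eq_or_ne p q with rfl | hne
            · rw [diagonal_apply_eq]
            · rw [diagonal_apply_ne _ hne]
              exact (hoff p q hne).1
          have hXD : X = Dmat (fun k => X.toBlocks₁₁ k k) := by
            conv_lhs => rw [← fromBlocks_toBlocks X, hXs.1, ha0, hb0, hc0, diagonal_transpose]
            rfl
          have hnc : ∃ i j : Fin m, X.toBlocks₁₁ i i ≠ X.toBlocks₁₁ j j := by
            by_contra hcon
            push_neg at hcon
            apply hXZ
            refine ⟨X.toBlocks₁₁ i0 i0, ?_⟩
            calc (X.toBlocks₁₁ i0 i0) • (1 : Mat K m)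
                = Dmat (fun _ => X.toBlocks₁₁ i0 i0) := (Dmat_const _).symm
              _ = Dmat (fun k => X.toBlocks₁₁ k k) := congrArg Dmat (funext fun k => hcon i0 k)
              _ = X := hXD.symm
          obtain ⟨i, j, dne⟩ := hnc
          have hij : i ≠ j := fun e => dne (by rw [e])
          have hbr := hId (Amat i j) (A_mem hij) X hXI
          have hval : ⁅(Amat i j : Mat K m), X⁆
              = (X.toBlocks₁₁ i i + X.toBlocks₁₁ j j) • Amat i j := by
            conv_lhs => rw [hXD]
            rw [lie_comm, Amat_eq_vv, lie_D_vv]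
          rw [hval] at hbr
          have hco : X.toBlocks₁₁ i i + X.toBlocks₁₁ j j ≠ 0 :=
            fun hzz => dne (char2_add_eq_zero.mp hzz)
          have hfin := I.smul_mem (X.toBlocks₁₁ i i + X.toBlocks₁₁ j j)⁻¹ hbr
          rw [smul_smul, inv_mul_cancel₀ hco, one_smul] at hfin
          exact ⟨i, j, hij, hfin⟩
      obtain ⟨p, q, hpq, hAm⟩ := hgen
      refine Set.Subset.antisymm hIsp ?_
      intro Y hY
      exact all_gens hm I hId hpq hAm Y hY
end

section
/- Let K be a field of characteristic 2, m ≥ 3, and let I be a nonzero proper ideal of sp_{2m}(K)^{(2)}. Then for all i ≠ j, the basis elements c_{ij} = e_{i+m,j} + e_{j+m,i} and b_{ij} = e_{i,j+m} + e_{j,i+m} do not belong to I. -/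
open Matrix

section Aux

variable (K : Type*) [Field K] {m : ℕ}

/-- small standard basis matrix -/
private def ee (p q : Fin m) : Matrix (Fin m) (Fin m) K := single p q 1

private def MA (p q : Fin m) : Matrix (Fin m ⊕ Fin m) (Fin m ⊕ Fin m) K :=
  fromBlocks (ee K p q) 0 0 (ee K q p)
private def MB (p q : Fin m) : Matrix (Fin m ⊕ Fin m) (Fin m ⊕ Fin m) K :=
  fromBlocks 0 (ee K p q + ee K q p) 0 0
private def MC (p q : Fin m) : Matrix (Fin m ⊕ Fin m) (Fin m ⊕ Fin m) K :=
  fromBlocks 0 0 (ee K p q + ee K q p) 0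
private def MD (p q : Fin m) : Matrix (Fin m ⊕ Fin m) (Fin m ⊕ Fin m) K :=
  fromBlocks (ee K p p + ee K q q) 0 0 (ee K p p + ee K q q)

variable {K}

private lemma ee_transpose (p q : Fin m) : (ee K p q)ᵀ = ee K q p := by
  ext a b
  simp only [ee, single, transpose_apply, of_apply]
  exact if_congr and_comm rfl rfl

private lemma ee_alt {p q : Fin m} (h : p ≠ q) : (ee K p q + ee K q p).IsAlternating := by
  constructor
  · rw [Matrix.IsSymm, transpose_add, ee_transpose, ee_transpose, add_comm]
  · intro i
    simp only [ee, Matrix.add_apply, single, of_apply]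
    have h1 : ¬(p = i ∧ q = i) := fun hc => h (hc.1.trans hc.2.symm)
    have h2 : ¬(q = i ∧ p = i) := fun hc => h (hc.2.trans hc.1.symm)
    rw [if_neg h1, if_neg h2, add_zero]

private lemma MA_mem {p q : Fin m} (h : p ≠ q) : MA K p q ∈ sp2Set K m := by
  refine ⟨?_, ?_, ?_, ?_⟩ <;>
    simp only [MA, toBlocks_fromBlocks₁₁, toBlocks_fromBlocks₁₂, toBlocks_fromBlocks₂₁,
      toBlocks_fromBlocks₂₂]
  · rw [ee_transpose]
  · exact ⟨isSymm_zero, fun i => rfl⟩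
  · exact ⟨isSymm_zero, fun i => rfl⟩
  · exact trace_single_eq_of_ne _ _ _ h

private lemma MB_mem {p q : Fin m} (h : p ≠ q) : MB K p q ∈ sp2Set K m := by
  refine ⟨?_, ?_, ?_, ?_⟩ <;>
    simp only [MB, toBlocks_fromBlocks₁₁, toBlocks_fromBlocks₁₂, toBlocks_fromBlocks₂₁,
      toBlocks_fromBlocks₂₂]
  · rw [transpose_zero]
  · exact ee_alt h
  · exact ⟨isSymm_zero, fun i => rfl⟩
  · exact trace_zero _ _

private lemma MC_mem {p q : Fin m} (h : p ≠ q) : MC K p q ∈ sp2Set K m := by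
  refine ⟨?_, ?_, ?_, ?_⟩ <;>
    simp only [MC, toBlocks_fromBlocks₁₁, toBlocks_fromBlocks₁₂, toBlocks_fromBlocks₂₁,
      toBlocks_fromBlocks₂₂]
  · rw [transpose_zero]
  · exact ⟨isSymm_zero, fun i => rfl⟩
  · exact ee_alt h
  · exact trace_zero _ _

private lemma MD_mem [CharP K 2] {p q : Fin m} (h : p ≠ q) : MD K p q ∈ sp2Set K m := by
  refine ⟨?_, ?_, ?_, ?_⟩ <;>
    simp only [MD, toBlocks_fromBlocks₁₁, toBlocks_fromBlocks₁₂, toBlocks_fromBlocks₂₁,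
      toBlocks_fromBlocks₂₂]
  · rw [transpose_add, ee_transpose, ee_transpose]
  · exact ⟨isSymm_zero, fun i => rfl⟩
  · exact ⟨isSymm_zero, fun i => rfl⟩
  · rw [trace_add, ee, ee, trace_single_eq_same, trace_single_eq_same]
    exact CharTwo.add_self_eq_zero 1

private lemma MB_symm (p q : Fin m) : MB K p q = MB K q p := by
  rw [MB, MB, add_comm]

private lemma MC_symm (p q : Fin m) : MC K p q = MC K q p := by
  rw [MC, MC, add_comm]

variable [CharP K 2]

private lemma msub {ι : Type*} (M N : Matrix ι ι K) : M - N = M + N := by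
  ext i j; exact CharTwo.sub_eq_add _ _

private lemma lie_def' {ι : Type*} [Fintype ι] [DecidableEq ι] (M N : Matrix ι ι K) :
    ⁅M, N⁆ = M * N + N * M := by
  rw [Ring.lie_def, msub]

private lemma lie_comm {ι : Type*} [Fintype ι] [DecidableEq ι] (M N : Matrix ι ι K) :
    ⁅M, N⁆ = ⁅N, M⁆ := by
  rw [lie_def', lie_def', add_comm]

private lemma brBC {p q : Fin m} (h : p ≠ q) : ⁅MB K p q, MC K p q⁆ = MD K p q := by
  rw [lie_def']
  simp only [MB, MC, MD, fromBlocks_multiply, Matrix.mul_zero, Matrix.zero_mul, add_zero, zero_add,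
    ee, add_mul, mul_add, single_mul_single_same, single_mul_single_of_ne,
    h, h.symm, mul_one, ne_eq, not_false_iff]
  rw [fromBlocks_add]
  simp only [add_zero, zero_add]
  rw [add_comm (single q q (1:K))]

private lemma brAC {p q r : Fin m} (hpq : p ≠ q) (hpr : p ≠ r) (hqr : q ≠ r) :
    ⁅MA K q r, MC K p q⁆ = MC K p r := by
  rw [lie_def']
  simp only [MA, MC, fromBlocks_multiply, Matrix.mul_zero, Matrix.zero_mul, add_zero, zero_add,
    ee, add_mul, mul_add, single_mul_single_same, single_mul_single_of_ne,
    hpq, hpq.symm, hpr, hpr.symm, hqr, hqr.symm, mul_one, ne_eq, not_false_iff]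
  rw [fromBlocks_add]
  simp only [add_zero, zero_add]
  rw [add_comm (single r p (1:K))]

private lemma brBCA {p q r : Fin m} (hpq : p ≠ q) (hpr : p ≠ r) (hqr : q ≠ r) :
    ⁅MB K p r, MC K q r⁆ = MA K p q := by
  rw [lie_def']
  simp only [MB, MC, MA, fromBlocks_multiply, Matrix.mul_zero, Matrix.zero_mul, add_zero, zero_add,
    ee, add_mul, mul_add, single_mul_single_same, single_mul_single_of_ne,
    hpq, hpq.symm, hpr, hpr.symm, hqr, hqr.symm, mul_one, ne_eq, not_false_iff]
  rw [fromBlocks_add]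
  simp only [add_zero, zero_add]

private lemma brBA {p q r : Fin m} (hpq : p ≠ q) (hpr : p ≠ r) (hqr : q ≠ r) :
    ⁅MB K q r, MA K p q⁆ = MB K p r := by
  rw [lie_def']
  simp only [MB, MA, fromBlocks_multiply, Matrix.mul_zero, Matrix.zero_mul, add_zero, zero_add,
    ee, add_mul, mul_add, single_mul_single_same, single_mul_single_of_ne,
    hpq, hpq.symm, hpr, hpr.symm, hqr, hqr.symm, mul_one, ne_eq, not_false_iff]
  rw [fromBlocks_add]
  simp only [add_zero, zero_add]
  rw [add_comm (single r p (1:K))]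

private lemma brAB {p q r : Fin m} (hpq : p ≠ q) (hpr : p ≠ r) (hqr : q ≠ r) :
    ⁅MA K r p, MB K p q⁆ = MB K r q := by
  rw [lie_def']
  simp only [MB, MA, fromBlocks_multiply, Matrix.mul_zero, Matrix.zero_mul, add_zero, zero_add,
    ee, add_mul, mul_add, single_mul_single_same, single_mul_single_of_ne,
    hpq, hpq.symm, hpr, hpr.symm, hqr, hqr.symm, mul_one, ne_eq, not_false_iff]
  rw [fromBlocks_add]
  simp only [add_zero, zero_add]

end Aux

section Decomp

variable {K : Type*} [Field K] {m : ℕ}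

private lemma pair_decomp (b : Matrix (Fin m) (Fin m) K)
    (hs : ∀ i j, b j i = b i j) (hd : ∀ i, b i i = 0) :
    b = ∑ p : Fin m, ∑ q : Fin m,
      if p < q then b p q • (ee K p q + ee K q p) else 0 := by
  have key : ∀ p q : Fin m, (if p < q then b p q • (ee K p q + ee K q p) else 0)
      = (if p < q then single p q (b p q) else 0)
        + (if p < q then single q p (b p q) else 0) := by
    intro p q
    split_ifs with h
    · rw [smul_add]
      simp [ee]
    · rw [add_zero]
  simp_rw [key, Finset.sum_add_distrib]
  have h2 : (∑ p : Fin m, ∑ q : Fin m, if p < q then single q p (b p q) else 0)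
      = ∑ p : Fin m, ∑ q : Fin m, if q < p then single p q (b p q) else 0 := by
    rw [Finset.sum_comm]
    refine Finset.sum_congr rfl fun x _ => Finset.sum_congr rfl fun y _ => ?_
    rw [hs x y]
  rw [h2]
  rw [← Finset.sum_add_distrib]
  conv_lhs => rw [matrix_eq_sum_single b]
  refine Finset.sum_congr rfl fun p _ => ?_
  rw [← Finset.sum_add_distrib]
  refine Finset.sum_congr rfl fun q _ => ?_
  rcases lt_trichotomy p q with h | h | h
  · rw [if_pos h, if_neg (asymm h), add_zero]
  · subst h
    rw [if_neg (lt_irrefl p), add_zero, hd p, single_zero]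
  · rw [if_neg (asymm h), if_pos h, zero_add]

private lemma diag_decomp [CharP K 2] (a : Matrix (Fin m) (Fin m) K) (z : Fin m)
    (ht : Matrix.trace a = 0) :
    a = (∑ p : Fin m, ∑ q : Fin m, if p ≠ q then a p q • ee K p q else 0)
      + ∑ p : Fin m, (if p ≠ z then a p p • (ee K p p + ee K z z) else 0) := by
  have key : ∀ p q : Fin m, single p q (a p q)
      = (if p ≠ q then a p q • ee K p q else 0)
        + (if p = q then single p p (a p p) else 0) := by
    intro p q
    rcases eq_or_ne p q with rfl | h
    · rw [if_neg (fun hc : p ≠ p => hc rfl), if_pos rfl, zero_add]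
    · rw [if_pos h, if_neg h, add_zero, ee, smul_single, smul_eq_mul, mul_one]
  conv_lhs => rw [matrix_eq_sum_single a]
  rw [show (∑ p : Fin m, ∑ q : Fin m, single p q (a p q))
      = ∑ p : Fin m, ∑ q : Fin m, ((if p ≠ q then a p q • ee K p q else 0)
        + (if p = q then single p p (a p p) else 0)) from
    Finset.sum_congr rfl fun p _ => Finset.sum_congr rfl fun q _ => key p q]
  simp_rw [Finset.sum_add_distrib]
  congr 1
  have collapse : (∑ p : Fin m, ∑ q : Fin m, if p = q then single p p (a p p) else 0)
      = ∑ p : Fin m, single p p (a p p) := by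
    refine Finset.sum_congr rfl fun p _ => ?_
    rw [Finset.sum_ite_eq Finset.univ p (fun _ => single p p (a p p)),
      if_pos (Finset.mem_univ p)]
  rw [collapse]
  have key2 : ∀ p : Fin m, (if p ≠ z then a p p • (ee K p p + ee K z z) else 0)
      = (if p ≠ z then single p p (a p p) else 0)
        + (if p ≠ z then a p p else 0) • ee K z z := by
    intro p
    split_ifs with h
    · rw [smul_add]
      congr 1
      rw [ee, smul_single, smul_eq_mul, mul_one]
    · rw [zero_add, zero_smul]
  simp_rw [key2, Finset.sum_add_distrib, ← Finset.sum_smul]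
  have hsum : (∑ p : Fin m, if p ≠ z then a p p else 0) = a z z := by
    have h1 : (∑ p : Fin m, if p ≠ z then a p p else 0) + a z z = Matrix.trace a := by
      rw [Matrix.trace]
      rw [show (∑ p : Fin m, if p ≠ z then a p p else 0) + a z z
          = ∑ p : Fin m, ((if p ≠ z then a p p else 0) + (if p = z then a p p else 0)) by
        rw [Finset.sum_add_distrib]
        congr 1
        rw [Finset.sum_ite_eq' Finset.univ z (fun p => a p p), if_pos (Finset.mem_univ z)]]
      refine Finset.sum_congr rfl fun p _ => ?_
      rcases eq_or_ne p z with rfl | h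
      · rw [if_neg (fun hc => hc rfl), if_pos rfl, zero_add]; rfl
      · rw [if_pos h, if_neg h, add_zero]; rfl
    rw [ht] at h1
    calc (∑ p : Fin m, if p ≠ z then a p p else 0)
        = (∑ p : Fin m, if p ≠ z then a p p else 0) + (a z z + a z z) := by
          rw [CharTwo.add_self_eq_zero, add_zero]
      _ = a z z := by rw [← add_assoc, h1, zero_add]
  rw [hsum]
  have split : ∀ p : Fin m, single p p (a p p)
      = (if p ≠ z then single p p (a p p) else 0)
        + (if p = z then single z z (a z z) else 0) := by
    intro p
    rcases eq_or_ne p z with rfl | h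
    · rw [if_neg (fun hc => hc rfl), if_pos rfl, zero_add]
    · rw [if_pos h, if_neg h, add_zero]
  rw [show (∑ p : Fin m, single p p (a p p))
      = ∑ p : Fin m, ((if p ≠ z then single p p (a p p) else 0)
        + (if p = z then single z z (a z z) else 0)) from
    Finset.sum_congr rfl fun p _ => split p]
  rw [Finset.sum_add_distrib]
  congr 1
  rw [Finset.sum_ite_eq' Finset.univ z (fun _ => single z z (a z z)),
    if_pos (Finset.mem_univ z), ee, smul_single, smul_eq_mul, mul_one]

end Decomp

section Phi

variable (K : Type*) [Field K] {m : ℕ}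

private def PhiA : Matrix (Fin m) (Fin m) K →ₗ[K]
    Matrix (Fin m ⊕ Fin m) (Fin m ⊕ Fin m) K where
  toFun a := fromBlocks a 0 0 aᵀ
  map_add' x y := by
    show fromBlocks (x + y) 0 0 (x + y)ᵀ = fromBlocks x 0 0 xᵀ + fromBlocks y 0 0 yᵀ
    rw [transpose_add, fromBlocks_add, add_zero]
  map_smul' r x := by
    show fromBlocks (r • x) 0 0 (r • x)ᵀ = (RingHom.id K) r • fromBlocks x 0 0 xᵀ
    rw [RingHom.id_apply, transpose_smul, fromBlocks_smul, smul_zero]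

private def PhiB : Matrix (Fin m) (Fin m) K →ₗ[K]
    Matrix (Fin m ⊕ Fin m) (Fin m ⊕ Fin m) K where
  toFun b := fromBlocks 0 b 0 0
  map_add' x y := by
    show fromBlocks 0 (x + y) 0 0 = fromBlocks 0 x 0 0 + fromBlocks 0 y 0 0
    rw [fromBlocks_add, add_zero]
  map_smul' r x := by
    show fromBlocks 0 (r • x) 0 0 = (RingHom.id K) r • fromBlocks 0 x 0 0
    rw [RingHom.id_apply, fromBlocks_smul, smul_zero]

private def PhiC : Matrix (Fin m) (Fin m) K →ₗ[K]
    Matrix (Fin m ⊕ Fin m) (Fin m ⊕ Fin m) K where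
  toFun c := fromBlocks 0 0 c 0
  map_add' x y := by
    show fromBlocks 0 0 (x + y) 0 = fromBlocks 0 0 x 0 + fromBlocks 0 0 y 0
    rw [fromBlocks_add, add_zero]
  map_smul' r x := by
    show fromBlocks 0 0 (r • x) 0 = (RingHom.id K) r • fromBlocks 0 0 x 0
    rw [RingHom.id_apply, fromBlocks_smul, smul_zero]

variable {K}

private lemma PhiA_e (p q : Fin m) : PhiA K (ee K p q) = MA K p q := by
  show fromBlocks (ee K p q) 0 0 (ee K p q)ᵀ = _
  rw [ee_transpose]
  rfl

private lemma PhiA_d (p z : Fin m) : PhiA K (ee K p p + ee K z z) = MD K p z := by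
  show fromBlocks _ 0 0 (ee K p p + ee K z z)ᵀ = _
  rw [transpose_add, ee_transpose, ee_transpose]
  rfl

private lemma PhiB_e (p q : Fin m) : PhiB K (ee K p q + ee K q p) = MB K p q := rfl

private lemma PhiC_e (p q : Fin m) : PhiC K (ee K p q + ee K q p) = MC K p q := rfl

private lemma MD_eq {K : Type*} [Field K] {m : ℕ} (p q : Fin m) :
    MA K p p + MA K q q = MD K p q := by
  rw [MA, MA, MD, fromBlocks_add]
  simp only [add_zero]

private lemma fromBlocks_split (a b c : Matrix (Fin m) (Fin m) K) :
    fromBlocks a b c aᵀ = PhiA K a + PhiB K b + PhiC K c := by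
  show _ = fromBlocks a 0 0 aᵀ + fromBlocks 0 b 0 0 + fromBlocks 0 0 c 0
  rw [fromBlocks_add, fromBlocks_add]
  simp only [add_zero, zero_add]

end Phi

section Main

variable {K : Type*} [Field K] [CharP K 2] {m : ℕ}

private lemma exists_third (hm : 3 ≤ m) (p q : Fin m) : ∃ r : Fin m, r ≠ p ∧ r ≠ q := by
  by_contra hcon
  push_neg at hcon
  have hss : (Finset.univ : Finset (Fin m)) ⊆ {p, q} := by
    intro r _
    simp only [Finset.mem_insert, Finset.mem_singleton]
    rcases eq_or_ne r p with h | h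
    · exact Or.inl h
    · exact Or.inr (hcon r h)
  have h1 := Finset.card_le_card hss
  have h2 : ({p, q} : Finset (Fin m)).card ≤ 2 :=
    (Finset.card_insert_le _ _).trans (by simp)
  rw [Finset.card_univ, Fintype.card_fin] at h1
  omega

private lemma subI (hm : 3 ≤ m)
    (I : Submodule K (Matrix (Fin m ⊕ Fin m) (Fin m ⊕ Fin m) K))
    (hideal : ∀ x ∈ sp2Set K m, ∀ y ∈ I, ⁅x, y⁆ ∈ I)
    (hMC : ∀ p q : Fin m, p ≠ q → MC K p q ∈ I) :
    sp2Set K m ⊆ ↑I := by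
  have hm0 : 0 < m := by omega
  have hMD : ∀ p q : Fin m, p ≠ q → MD K p q ∈ I := fun p q h => by
    have := hideal (MB K p q) (MB_mem h) _ (hMC p q h)
    rwa [brBC h] at this
  have hMA : ∀ p q : Fin m, p ≠ q → MA K p q ∈ I := fun p q h => by
    obtain ⟨r, hrp, hrq⟩ := exists_third hm p q
    have := hideal (MB K p r) (MB_mem (Ne.symm hrp)) _ (hMC q r (Ne.symm hrq))
    rwa [brBCA h (Ne.symm hrp) (Ne.symm hrq)] at this
  have hMB : ∀ p r : Fin m, p ≠ r → MB K p r ∈ I := fun p r h => by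
    obtain ⟨q, hqp, hqr⟩ := exists_third hm p r
    have := hideal (MB K q r) (MB_mem hqr) _ (hMA p q (Ne.symm hqp))
    rwa [brBA (Ne.symm hqp) h hqr] at this
  intro X hX
  obtain ⟨h1, h2, h3, h4⟩ := hX
  have hAmem : PhiA K (X.toBlocks₁₁) ∈ I := by
    have hd := congrArg (PhiA K (m := m)) (diag_decomp X.toBlocks₁₁ ⟨0, hm0⟩ h4)
    simp only [map_add, map_sum, apply_ite (PhiA K (m := m)), map_zero, _root_.map_smul,
      PhiA_e, PhiA_d] at hd
    rw [hd]
    refine add_mem (Submodule.sum_mem _ fun p _ => Submodule.sum_mem _ fun q _ => ?_)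
      (Submodule.sum_mem _ fun p _ => ?_)
    · split_ifs with h
      · exact Submodule.smul_mem _ _ (hMA p q h)
      · exact Submodule.zero_mem _
    · split_ifs with h
      · have hmd := hMD p ⟨0, hm0⟩ h
        rw [← MD_eq] at hmd
        exact Submodule.smul_mem _ _ hmd
      · exact Submodule.zero_mem _
  have hBmem : PhiB K (X.toBlocks₁₂) ∈ I := by
    have hd := congrArg (PhiB K (m := m))
      (pair_decomp X.toBlocks₁₂ (fun i j => h2.1.apply i j) h2.2)
    simp only [map_sum, apply_ite (PhiB K (m := m)), map_zero, _root_.map_smul, PhiB_e] at hd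
    rw [hd]
    refine Submodule.sum_mem _ fun p _ => Submodule.sum_mem _ fun q _ => ?_
    split_ifs with h
    · exact Submodule.smul_mem _ _ (hMB p q (ne_of_lt h))
    · exact Submodule.zero_mem _
  have hCmem : PhiC K (X.toBlocks₂₁) ∈ I := by
    have hd := congrArg (PhiC K (m := m))
      (pair_decomp X.toBlocks₂₁ (fun i j => h3.1.apply i j) h3.2)
    simp only [map_sum, apply_ite (PhiC K (m := m)), map_zero, _root_.map_smul, PhiC_e] at hd
    rw [hd]
    refine Submodule.sum_mem _ fun p _ => Submodule.sum_mem _ fun q _ => ?_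
    split_ifs with h
    · exact Submodule.smul_mem _ _ (hMC p q (ne_of_lt h))
    · exact Submodule.zero_mem _
  have hXeq : X = PhiA K X.toBlocks₁₁ + PhiB K X.toBlocks₁₂ + PhiC K X.toBlocks₂₁ := by
    conv_lhs => rw [← fromBlocks_toBlocks X, h1]
    exact fromBlocks_split _ _ _
  rw [hXeq]
  exact add_mem (add_mem hAmem hBmem) hCmem

private lemma propagate (hm : 3 ≤ m) (P : Fin m → Fin m → Prop)
    (hsymm : ∀ a b, P a b → P b a)
    (hstep : ∀ a b c : Fin m, a ≠ b → a ≠ c → b ≠ c → P a b → P a c)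
    (i j : Fin m) (hij : i ≠ j) (hP : P i j) :
    ∀ p q : Fin m, p ≠ q → P p q := by
  intro p q hpq
  by_cases hpi : p = i
  · subst hpi
    by_cases hqj : q = j
    · subst hqj; exact hP
    · exact hstep p j q hij hpq (Ne.symm hqj) hP
  · by_cases hpj : p = j
    · subst hpj
      have hP' : P p i := hsymm _ _ hP
      by_cases hqi : q = i
      · subst hqi; exact hP'
      · exact hstep p i q (Ne.symm hij) hpq (Ne.symm hqi) hP'
    · have h1 : P i p := hstep i j p hij (fun e => hpi e.symm) (fun e => hpj e.symm) hP
      have h2 : P p i := hsymm _ _ h1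
      by_cases hqi : q = i
      · subst hqi; exact h2
      · exact hstep p i q hpi hpq (Ne.symm hqi) h2

end Main

section Bridge

variable {K : Type*} [Field K] {m : ℕ}

private lemma bridgeC (p q : Fin m) :
    PhiC K (ee K p q) = single (Sum.inr p) (Sum.inl q) (1 : K) := by
  show fromBlocks 0 0 (ee K p q) 0 = _
  ext (a | a) (b | b) <;>
    simp [fromBlocks_apply₁₁, fromBlocks_apply₁₂, fromBlocks_apply₂₁, fromBlocks_apply₂₂,
      ee, single]

private lemma bridgeB (p q : Fin m) :
    PhiB K (ee K p q) = single (Sum.inl p) (Sum.inr q) (1 : K) := by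
  show fromBlocks 0 (ee K p q) 0 0 = _
  ext (a | a) (b | b) <;>
    simp [fromBlocks_apply₁₁, fromBlocks_apply₁₂, fromBlocks_apply₂₁, fromBlocks_apply₂₂,
      ee, single]

private lemma MC_eq (p q : Fin m) :
    MC K p q = single (Sum.inr p) (Sum.inl q) (1 : K) +
      single (Sum.inr q) (Sum.inl p) 1 := by
  have h : MC K p q = PhiC K (ee K p q) + PhiC K (ee K q p) := by rw [← map_add]; rfl
  rw [h, bridgeC, bridgeC]

private lemma MB_eq (p q : Fin m) :
    MB K p q = single (Sum.inl p) (Sum.inr q) (1 : K) +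
      single (Sum.inl q) (Sum.inr p) 1 := by
  have h : MB K p q = PhiB K (ee K p q) + PhiB K (ee K q p) := by rw [← map_add]; rfl
  rw [h, bridgeB, bridgeB]

end Bridge

/-- Let `K` be a field of characteristic 2, `m ≥ 3`, and `I` a nonzero proper
ideal of `sp_{2m}(K)⁽²⁾`.  Then for all `i ≠ j` the basis elements
`c_{ij} = e_{i+m,j} + e_{j+m,i}` and `b_{ij} = e_{i,j+m} + e_{j,i+m}` do not
belong to `I`. -/
theorem cij_bij_not_mem_ideal {K : Type*} [Field K] [CharP K 2] (m : ℕ)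
    (hm : 3 ≤ m) (I : Submodule K (Matrix (Fin m ⊕ Fin m) (Fin m ⊕ Fin m) K))
    (hsub : ↑I ⊆ sp2Set K m)
    (hideal : ∀ x ∈ sp2Set K m, ∀ y ∈ I, ⁅x, y⁆ ∈ I)
    (hne_bot : I ≠ ⊥)
    (hne_top : (↑I : Set (Matrix (Fin m ⊕ Fin m) (Fin m ⊕ Fin m) K)) ≠ sp2Set K m) :
    ∀ i j : Fin m, i ≠ j →
      (Matrix.single (Sum.inr i) (Sum.inl j) (1 : K) +
        Matrix.single (Sum.inr j) (Sum.inl i) 1) ∉ I ∧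
      (Matrix.single (Sum.inl i) (Sum.inr j) (1 : K) +
        Matrix.single (Sum.inl j) (Sum.inr i) 1) ∉ I := by
  intro i j hij
  constructor
  · intro hmem
    have hIC : MC K i j ∈ I := by rw [MC_eq]; exact hmem
    have hall : ∀ p q : Fin m, p ≠ q → MC K p q ∈ I := by
      refine propagate hm (fun p q => MC K p q ∈ I) (fun a b h => ?_)
        (fun a b c hab hac hbc h => ?_) i j hij hIC
      · show MC K b a ∈ I
        rw [MC_symm]; exact h
      · show MC K a c ∈ I
        have := hideal (MA K b c) (MA_mem hbc) _ h
        rwa [brAC hab hac hbc] at this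
    exact hne_top (Set.Subset.antisymm hsub (subI hm I hideal hall))
  · intro hmem
    have hIB : MB K i j ∈ I := by rw [MB_eq]; exact hmem
    have hallB : ∀ p q : Fin m, p ≠ q → MB K p q ∈ I := by
      refine propagate hm (fun p q => MB K p q ∈ I) (fun a b h => ?_)
        (fun a b c hab hac hbc h => ?_) i j hij hIB
      · show MB K b a ∈ I
        rw [MB_symm]; exact h
      · show MB K a c ∈ I
        have h' : MB K b a ∈ I := by rw [← MB_symm]; exact h
        have := hideal (MA K c b) (MA_mem (Ne.symm hbc)) _ h'
        rw [brAB (Ne.symm hab) hbc hac] at this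
        rw [MB_symm]
        exact this
    have hA' : ∀ p q : Fin m, p ≠ q → MA K p q ∈ I := fun p q h => by
      obtain ⟨r, hrp, hrq⟩ := exists_third hm p q
      have := hideal (MC K q r) (MC_mem (Ne.symm hrq)) _ (hallB p r (Ne.symm hrp))
      rwa [lie_comm (MC K q r) (MB K p r), brBCA h (Ne.symm hrp) (Ne.symm hrq)] at this
    have hall : ∀ p q : Fin m, p ≠ q → MC K p q ∈ I := fun p r h => by
      obtain ⟨q, hqp, hqr⟩ := exists_third hm p r
      have := hideal (MC K p q) (MC_mem (Ne.symm hqp)) _ (hA' q r hqr)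
      rwa [lie_comm (MC K p q) (MA K q r), brAC (Ne.symm hqp) h hqr] at this
    exact hne_top (Set.Subset.antisymm hsub (subI hm I hideal hall))
end

section
/- Let K be a field of characteristic 2. The symplectic Lie algebra sp_4(K) is solvable: its derived series reaches zero, with sp_4(K)^{(3)} equal to the scalar matrices and sp_4(K)^{(4)} = 0. -/
open Matrix

/-- The symplectic Lie algebra `sp_4(K)` in characteristic 2, as the set of
block matrices `[[a, b], [c, aᵀ]]` with `b`, `c` symmetric (`2 × 2` blocks). -/
def sp4Set (K : Type*) [Field K] :
    Set (Matrix (Fin 2 ⊕ Fin 2) (Fin 2 ⊕ Fin 2) K) :=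
  {X | X.toBlocks₂₂ = (X.toBlocks₁₁)ᵀ ∧ (X.toBlocks₁₂).IsSymm ∧ (X.toBlocks₂₁).IsSymm}

/-- The span of all commutators of elements of a set of matrices. -/
def bracketSpan4 (K : Type*) [Field K]
    (S : Set (Matrix (Fin 2 ⊕ Fin 2) (Fin 2 ⊕ Fin 2) K)) :
    Submodule K (Matrix (Fin 2 ⊕ Fin 2) (Fin 2 ⊕ Fin 2) K) :=
  Submodule.span K {z | ∃ x ∈ S, ∃ y ∈ S, z = ⁅x, y⁆}

namespace Sp4Aux

abbrev I2 := Fin 2 ⊕ Fin 2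

variable (K : Type*) [Field K]

/-- first upper bound: sp4 with `b`, `c` antidiagonal multiples of `S`. -/
def P1 : Submodule K (Matrix I2 I2 K) where
  carrier := {X |
    X (Sum.inr 0) (Sum.inr 0) = X (Sum.inl 0) (Sum.inl 0) ∧
    X (Sum.inr 0) (Sum.inr 1) = X (Sum.inl 1) (Sum.inl 0) ∧
    X (Sum.inr 1) (Sum.inr 0) = X (Sum.inl 0) (Sum.inl 1) ∧
    X (Sum.inr 1) (Sum.inr 1) = X (Sum.inl 1) (Sum.inl 1) ∧
    X (Sum.inl 0) (Sum.inr 0) = 0 ∧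
    X (Sum.inl 1) (Sum.inr 1) = 0 ∧
    X (Sum.inl 1) (Sum.inr 0) = X (Sum.inl 0) (Sum.inr 1) ∧
    X (Sum.inr 0) (Sum.inl 0) = 0 ∧
    X (Sum.inr 1) (Sum.inl 1) = 0 ∧
    X (Sum.inr 1) (Sum.inl 0) = X (Sum.inr 0) (Sum.inl 1)}
  add_mem' := by
    intro a b ha hb
    simp only [Set.mem_setOf_eq, Matrix.add_apply] at *
    obtain ⟨a1,a2,a3,a4,a5,a6,a7,a8,a9,a10⟩ := ha
    obtain ⟨b1,b2,b3,b4,b5,b6,b7,b8,b9,b10⟩ := hb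
    refine ⟨?_,?_,?_,?_,?_,?_,?_,?_,?_,?_⟩ <;> simp_all
  zero_mem' := by simp
  smul_mem' := by
    intro c a ha
    simp only [Set.mem_setOf_eq, Matrix.smul_apply, smul_eq_mul] at *
    obtain ⟨a1,a2,a3,a4,a5,a6,a7,a8,a9,a10⟩ := ha
    refine ⟨?_,?_,?_,?_,?_,?_,?_,?_,?_,?_⟩ <;> simp_all

/-- second upper bound: `P1` plus equal diagonal of `a`. -/
def P2 : Submodule K (Matrix I2 I2 K) where
  carrier := {X | X ∈ P1 K ∧ X (Sum.inl 0) (Sum.inl 0) = X (Sum.inl 1) (Sum.inl 1)}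
  add_mem' := by
    intro a b ha hb
    exact ⟨(P1 K).add_mem ha.1 hb.1, by simp [Matrix.add_apply, ha.2, hb.2]⟩
  zero_mem' := ⟨(P1 K).zero_mem, by simp⟩
  smul_mem' := by
    intro c a ha
    exact ⟨(P1 K).smul_mem c ha.1, by simp [Matrix.smul_apply, ha.2]⟩

variable [CharP K 2]

lemma mem_P1_iff (X : Matrix I2 I2 K) : X ∈ P1 K ↔
    (X (Sum.inr 0) (Sum.inr 0) = X (Sum.inl 0) (Sum.inl 0) ∧
    X (Sum.inr 0) (Sum.inr 1) = X (Sum.inl 1) (Sum.inl 0) ∧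
    X (Sum.inr 1) (Sum.inr 0) = X (Sum.inl 0) (Sum.inl 1) ∧
    X (Sum.inr 1) (Sum.inr 1) = X (Sum.inl 1) (Sum.inl 1) ∧
    X (Sum.inl 0) (Sum.inr 0) = 0 ∧
    X (Sum.inl 1) (Sum.inr 1) = 0 ∧
    X (Sum.inl 1) (Sum.inr 0) = X (Sum.inl 0) (Sum.inr 1) ∧
    X (Sum.inr 0) (Sum.inl 0) = 0 ∧
    X (Sum.inr 1) (Sum.inl 1) = 0 ∧
    X (Sum.inr 1) (Sum.inl 0) = X (Sum.inr 0) (Sum.inl 1)) := Iff.rfl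

lemma mem_P2_iff (X : Matrix I2 I2 K) : X ∈ P2 K ↔
    (X ∈ P1 K ∧ X (Sum.inl 0) (Sum.inl 0) = X (Sum.inl 1) (Sum.inl 1)) := Iff.rfl

/-- brackets of `sp4` land in `P1`. -/
lemma bracket_sp4_mem_P1 (x y : Matrix I2 I2 K) (hx : x ∈ sp4Set K) (hy : y ∈ sp4Set K) :
    ⁅x, y⁆ ∈ P1 K := by
  have h2 : (2:K) = 0 := CharTwo.two_eq_zero
  obtain ⟨ha, hb, hc⟩ := hx
  obtain ⟨ha', hb', hc'⟩ := hy
  rw [← Matrix.ext_iff] at ha ha'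
  rw [Matrix.IsSymm, ← Matrix.ext_iff] at hb hc hb' hc'
  simp only [Matrix.toBlocks₁₁, Matrix.toBlocks₁₂, Matrix.toBlocks₂₁, Matrix.toBlocks₂₂,
    Matrix.transpose_apply, Matrix.of_apply] at ha hb hc ha' hb' hc'
  have hb1 := hb 1 0; have hc1 := hc 1 0; have hb1' := hb' 1 0; have hc1' := hc' 1 0
  rw [mem_P1_iff]
  refine ⟨?_,?_,?_,?_,?_,?_,?_,?_,?_,?_⟩ <;>
    simp only [Ring.lie_def, Matrix.sub_apply, Matrix.mul_apply, Fintype.sum_sum_type,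
      Fin.sum_univ_two, CharTwo.sub_eq_add, ha, ha', hb1, hc1, hb1', hc1']
  all_goals try ring_nf
  all_goals try simp only [h2, mul_zero, zero_mul, mul_one, one_mul, add_zero, zero_add]
  all_goals try ring_nf
  all_goals try rfl

/-- brackets of `P1` land in `P2`. -/
lemma bracket_P1_mem_P2 (x y : Matrix I2 I2 K) (hx : x ∈ P1 K) (hy : y ∈ P1 K) :
    ⁅x, y⁆ ∈ P2 K := by
  have h2 : (2:K) = 0 := CharTwo.two_eq_zero
  rw [mem_P1_iff] at hx hy
  obtain ⟨a1,a2,a3,a4,a5,a6,a7,a8,a9,a10⟩ := hx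
  obtain ⟨b1,b2,b3,b4,b5,b6,b7,b8,b9,b10⟩ := hy
  rw [mem_P2_iff, mem_P1_iff]
  refine ⟨⟨?_,?_,?_,?_,?_,?_,?_,?_,?_,?_⟩,?_⟩ <;>
    simp only [Ring.lie_def, Matrix.sub_apply, Matrix.mul_apply, Fintype.sum_sum_type,
      Fin.sum_univ_two, CharTwo.sub_eq_add, a1,a2,a3,a4,a5,a6,a7,a8,a9,a10,b1,b2,b3,b4,b5,b6,b7,b8,b9,b10]
  all_goals try ring_nf
  all_goals try simp only [h2, mul_zero, zero_mul, mul_one, one_mul, add_zero, zero_add]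
  all_goals try ring_nf
  all_goals try rfl

/-- brackets of `P2` are scalar. -/
lemma bracket_P2_mem_scalar (x y : Matrix I2 I2 K) (hx : x ∈ P2 K) (hy : y ∈ P2 K) :
    ⁅x, y⁆ ∈ Submodule.span K {(1 : Matrix I2 I2 K)} := by
  have h2 : (2:K) = 0 := CharTwo.two_eq_zero
  rw [mem_P2_iff] at hx hy
  obtain ⟨hx, a0⟩ := hx
  obtain ⟨hy, b0⟩ := hy
  rw [mem_P1_iff] at hx hy
  obtain ⟨a1,a2,a3,a4,a5,a6,a7,a8,a9,a10⟩ := hx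
  obtain ⟨b1,b2,b3,b4,b5,b6,b7,b8,b9,b10⟩ := hy
  rw [Submodule.mem_span_singleton]
  refine ⟨⁅x, y⁆ (Sum.inl 0) (Sum.inl 0), ?_⟩
  ext i j
  obtain (i|i) := i <;> obtain (j|j) := j <;> fin_cases i <;> fin_cases j <;>
    simp only [Matrix.smul_apply, Matrix.one_apply, Sum.inl.injEq, Sum.inr.injEq,
      reduceCtorEq, Fin.isValue, if_true, if_false, smul_eq_mul, mul_one, mul_zero,
      Fin.zero_eta, Fin.mk_one, show ((0:Fin 2) = 1) = False by simp, show ((1:Fin 2) = 0) = False by simp,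
      if_pos rfl] <;>
    simp only [Ring.lie_def, Matrix.sub_apply, Matrix.mul_apply, Fintype.sum_sum_type,
      Fin.sum_univ_two, CharTwo.sub_eq_add, a0,a1,a2,a3,a4,a5,a6,a7,a8,a9,a10,b0,b1,b2,b3,b4,b5,b6,b7,b8,b9,b10]
  all_goals try ring_nf
  all_goals try simp only [h2, mul_zero, zero_mul, mul_one, one_mul, add_zero, zero_add]
  all_goals try ring_nf
  all_goals try rfl

section Witnesses

/-- `[[E00,0],[0,E00]]` -/
def wA : Matrix I2 I2 K := fromBlocks !![1,0;0,0] 0 0 !![1,0;0,0]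
/-- `[[0,S],[0,0]]` -/
def wBS : Matrix I2 I2 K := fromBlocks 0 !![0,1;1,0] 0 0
/-- `[[0,0],[S,0]]` -/
def wCS : Matrix I2 I2 K := fromBlocks 0 0 !![0,1;1,0] 0
/-- `[[0,E00],[0,0]]` -/
def wBE : Matrix I2 I2 K := fromBlocks 0 !![1,0;0,0] 0 0
/-- `[[0,0],[E00,0]]` -/
def wCE : Matrix I2 I2 K := fromBlocks 0 0 !![1,0;0,0] 0

omit [CharP K 2] in
lemma w_mem_sp4 : wA K ∈ sp4Set K ∧ wBS K ∈ sp4Set K ∧ wCS K ∈ sp4Set K ∧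
    wBE K ∈ sp4Set K ∧ wCE K ∈ sp4Set K := by
  refine ⟨⟨?_,?_,?_⟩,⟨?_,?_,?_⟩,⟨?_,?_,?_⟩,⟨?_,?_,?_⟩,⟨?_,?_,?_⟩⟩ <;>
    simp only [wA, wBS, wCS, wBE, wCE, Matrix.toBlocks_fromBlocks₁₁,
      Matrix.toBlocks_fromBlocks₁₂, Matrix.toBlocks_fromBlocks₂₁,
      Matrix.toBlocks_fromBlocks₂₂, Matrix.IsSymm] <;>
    (ext i j; fin_cases i <;> fin_cases j <;> rfl)

lemma wbr1 : ⁅wBE K, wCE K⁆ = wA K := by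
  have h2 : (2:K) = 0 := CharTwo.two_eq_zero
  rw [Ring.lie_def]
  ext i j
  simp only [wBE, wCE, wA, Matrix.sub_apply, Matrix.mul_apply, Fintype.sum_sum_type,
    Fin.sum_univ_two, fromBlocks_apply₁₁, fromBlocks_apply₁₂, fromBlocks_apply₂₁,
    fromBlocks_apply₂₂, Matrix.zero_apply]
  obtain (i|i) := i <;> obtain (j|j) := j <;> fin_cases i <;> fin_cases j <;>
    simp <;> linear_combination -h2

lemma wbr2 : ⁅wA K, wBS K⁆ = wBS K := by
  have h2 : (2:K) = 0 := CharTwo.two_eq_zero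
  rw [Ring.lie_def]
  ext i j
  simp only [wBS, wA, Matrix.sub_apply, Matrix.mul_apply, Fintype.sum_sum_type,
    Fin.sum_univ_two, fromBlocks_apply₁₁, fromBlocks_apply₁₂, fromBlocks_apply₂₁,
    fromBlocks_apply₂₂, Matrix.zero_apply]
  obtain (i|i) := i <;> obtain (j|j) := j <;> fin_cases i <;> fin_cases j <;>
    simp <;> try linear_combination -h2

lemma wbr3 : ⁅wA K, wCS K⁆ = wCS K := by
  have h2 : (2:K) = 0 := CharTwo.two_eq_zero
  rw [Ring.lie_def]
  ext i j
  simp only [wCS, wA, Matrix.sub_apply, Matrix.mul_apply, Fintype.sum_sum_type,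
    Fin.sum_univ_two, fromBlocks_apply₁₁, fromBlocks_apply₁₂, fromBlocks_apply₂₁,
    fromBlocks_apply₂₂, Matrix.zero_apply]
  obtain (i|i) := i <;> obtain (j|j) := j <;> fin_cases i <;> fin_cases j <;>
    simp <;> try linear_combination -h2

lemma wbr4 : ⁅wBS K, wCS K⁆ = 1 := by
  have h2 : (2:K) = 0 := CharTwo.two_eq_zero
  rw [Ring.lie_def]
  ext i j
  simp only [wBS, wCS, Matrix.sub_apply, Matrix.mul_apply, Fintype.sum_sum_type,
    Fin.sum_univ_two, fromBlocks_apply₁₁, fromBlocks_apply₁₂, fromBlocks_apply₂₁,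
    fromBlocks_apply₂₂, Matrix.zero_apply, Matrix.one_apply]
  obtain (i|i) := i <;> obtain (j|j) := j <;> fin_cases i <;> fin_cases j <;>
    simp <;> linear_combination -h2

lemma one_mem_D3 :
    (1 : Matrix I2 I2 K) ∈ bracketSpan4 K
      (bracketSpan4 K (bracketSpan4 K (sp4Set K) : Set (Matrix I2 I2 K)) :
        Set (Matrix I2 I2 K)) := by
  obtain ⟨hA, hBS, hCS, hBE, hCE⟩ := w_mem_sp4 K
  have hA1 : wA K ∈ bracketSpan4 K (sp4Set K) :=
    Submodule.subset_span ⟨wBE K, hBE, wCE K, hCE, (wbr1 K).symm⟩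
  have hBS1 : wBS K ∈ bracketSpan4 K (sp4Set K) :=
    Submodule.subset_span ⟨wA K, hA, wBS K, hBS, (wbr2 K).symm⟩
  have hCS1 : wCS K ∈ bracketSpan4 K (sp4Set K) :=
    Submodule.subset_span ⟨wA K, hA, wCS K, hCS, (wbr3 K).symm⟩
  have hBS2 : wBS K ∈ bracketSpan4 K (bracketSpan4 K (sp4Set K) : Set (Matrix I2 I2 K)) :=
    Submodule.subset_span ⟨wA K, hA1, wBS K, hBS1, (wbr2 K).symm⟩
  have hCS2 : wCS K ∈ bracketSpan4 K (bracketSpan4 K (sp4Set K) : Set (Matrix I2 I2 K)) :=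
    Submodule.subset_span ⟨wA K, hA1, wCS K, hCS1, (wbr3 K).symm⟩
  exact Submodule.subset_span ⟨wBS K, hBS2, wCS K, hCS2, (wbr4 K).symm⟩

end Witnesses

end Sp4Aux

open Sp4Aux in
/-- Let `K` be a field of characteristic 2.  The Lie algebra `sp_4(K)` is
solvable: its third derived algebra is the space of scalar matrices and its
fourth derived algebra is zero. -/
theorem sp4_solvable {K : Type*} [Field K] [CharP K 2] :
    let D1 := bracketSpan4 K (sp4Set K)
    let D2 := bracketSpan4 K (↑D1 : Set (Matrix (Fin 2 ⊕ Fin 2) (Fin 2 ⊕ Fin 2) K))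
    let D3 := bracketSpan4 K (↑D2 : Set (Matrix (Fin 2 ⊕ Fin 2) (Fin 2 ⊕ Fin 2) K))
    let D4 := bracketSpan4 K (↑D3 : Set (Matrix (Fin 2 ⊕ Fin 2) (Fin 2 ⊕ Fin 2) K))
    (↑D3 : Set (Matrix (Fin 2 ⊕ Fin 2) (Fin 2 ⊕ Fin 2) K)) =
      Set.range (fun c : K => c • (1 : Matrix (Fin 2 ⊕ Fin 2) (Fin 2 ⊕ Fin 2) K)) ∧
    D4 = ⊥ := by
  intro D1 D2 D3 D4
  have hD1 : D1 ≤ P1 K := by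
    refine Submodule.span_le.2 ?_
    rintro z ⟨x, hx, y, hy, rfl⟩
    exact bracket_sp4_mem_P1 K x y hx hy
  have hD2 : D2 ≤ P2 K := by
    refine Submodule.span_le.2 ?_
    rintro z ⟨x, hx, y, hy, rfl⟩
    exact bracket_P1_mem_P2 K x y (hD1 hx) (hD1 hy)
  have hD3 : D3 ≤ Submodule.span K {(1 : Matrix I2 I2 K)} := by
    refine Submodule.span_le.2 ?_
    rintro z ⟨x, hx, y, hy, rfl⟩
    exact bracket_P2_mem_scalar K x y (hD2 hx) (hD2 hy)
  have hset : (↑D3 : Set (Matrix (Fin 2 ⊕ Fin 2) (Fin 2 ⊕ Fin 2) K)) =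
      Set.range (fun c : K => c • (1 : Matrix (Fin 2 ⊕ Fin 2) (Fin 2 ⊕ Fin 2) K)) := by
    ext z
    constructor
    · intro hz
      obtain ⟨c, hc⟩ := Submodule.mem_span_singleton.1 (hD3 hz)
      exact ⟨c, hc⟩
    · rintro ⟨c, rfl⟩
      exact D3.smul_mem c (one_mem_D3 K)
  refine ⟨hset, ?_⟩
  rw [eq_bot_iff]
  refine Submodule.span_le.2 ?_
  rintro z ⟨x, hx, y, hy, rfl⟩
  obtain ⟨c, rfl⟩ : x ∈ Set.range (fun c : K => c • (1 : Matrix I2 I2 K)) := hset ▸ hx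
  obtain ⟨d, rfl⟩ : y ∈ Set.range (fun c : K => c • (1 : Matrix I2 I2 K)) := hset ▸ hy
  have : ⁅(c • 1 : Matrix I2 I2 K), d • (1 : Matrix I2 I2 K)⁆ = 0 := by
    rw [Ring.lie_def, smul_mul_smul_comm c (1:Matrix I2 I2 K) d 1,
      smul_mul_smul_comm d (1:Matrix I2 I2 K) c 1, mul_comm d c, sub_self]
  rw [this]
  exact Submodule.mem_bot _ |>.2 rfl
end

section
/- Any toral subalgebra of a restricted Lie algebra over a field of characteristic 2 is abelian. -/
section aux
variable {K L : Type*} [Field K] [CharP K 2] [LieRing L] [LieAlgebra K L]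

/-- freshman's dream for `P + c • 1` in `End` over a char-2 field -/
lemma char2_pow_add (k : ℕ) (P : Module.End K L) (c : K) :
    (P + c • 1) ^ (2 ^ k) = P ^ (2 ^ k) + (c ^ (2 ^ k)) • 1 := by
  have hsq : ∀ (Q : Module.End K L) (e : K), (Q + e • 1) ^ 2 = Q ^ 2 + (e ^ 2) • 1 := by
    intro Q e
    have h2X : e • Q + e • Q = (0 : Module.End K L) := by
      rw [← add_smul, CharTwo.add_self_eq_zero, zero_smul]
    simp only [pow_two, mul_add, add_mul, smul_mul_assoc, mul_smul_comm, one_mul, mul_one,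
      smul_add, smul_smul]
    rw [add_assoc, ← add_assoc (e • Q), h2X, zero_add]
  induction k generalizing P c with
  | zero => simp
  | succ k ih =>
    rw [show (2 : ℕ) ^ (k + 1) = 2 ^ k * 2 by ring, pow_mul, pow_mul, pow_mul, ih, hsq]
end aux

/-- Any toral subalgebra of a (finite-dimensional) restricted Lie algebra over
an algebraically closed field of characteristic 2 is abelian.  Here `sq` is the
2-map, and a subalgebra `t` is toral if `sq` restricts to a bijection of `t`
onto itself. -/
theorem toral_subalgebra_abelian {K L : Type*} [Field K] [IsAlgClosed K]
    [CharP K 2] [LieRing L] [LieAlgebra K L] [Module.Finite K L]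
    (sq : L → L)
    (hadd : ∀ a b : L, sq (a + b) = sq a + sq b + ⁅a, b⁆)
    (hsmul : ∀ (c : K) (a : L), sq (c • a) = c ^ 2 • sq a)
    (had : ∀ a b : L, ⁅sq a, b⁆ = ⁅a, ⁅a, b⁆⁆)
    (t : LieSubalgebra K L)
    (htoral : Set.BijOn sq (t : Set L) (t : Set L)) :
    ∀ x ∈ t, ∀ y ∈ t, ⁅x, y⁆ = 0 := by
  classical
  set d := Module.finrank K L with hd
  -- char 2 facts in L
  have hLadd : ∀ z : L, z + z = 0 := by
    intro z
    have h2 : (2 : K) = 0 := by exact_mod_cast CharP.cast_eq_zero K 2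
    rw [← two_smul K z, h2, zero_smul]
  have hnegL : ∀ z : L, -z = z := fun z => neg_eq_of_add_eq_zero_left (hLadd z)
  -- ad of sq is the square of ad
  have hadsq : ∀ a : L, LieAlgebra.ad K L (sq a) = (LieAlgebra.ad K L a) ^ 2 := by
    intro a
    ext b
    simp [LieAlgebra.ad_apply, pow_two, Module.End.mul_apply, had]
  -- every ad x, x ∈ t, is a 2^k-th power of some ad b, b ∈ t
  have hpow : ∀ (k : ℕ), ∀ x ∈ t, ∃ b ∈ t,
      LieAlgebra.ad K L x = (LieAlgebra.ad K L b) ^ (2 ^ k) := by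
    intro k
    induction k with
    | zero => intro x hx; exact ⟨x, hx, by simp⟩
    | succ k ih =>
      intro x hx
      obtain ⟨b, hb, hab⟩ := ih x hx
      obtain ⟨c, hc, hcb⟩ := htoral.surjOn hb
      refine ⟨c, hc, ?_⟩
      rw [hab, ← hcb, hadsq, ← pow_mul, show 2 * 2 ^ k = 2 ^ (k + 1) by ring]
  -- key lemma: generalized eigenvectors of ad w (w ∈ t) are genuine eigenvectors
  have key : ∀ w ∈ t, ∀ (lam : K) (N : ℕ), 1 ≤ N → ∀ u : L,
      ((LieAlgebra.ad K L w - lam • 1) ^ N) u = 0 → ⁅w, u⁆ = lam • u := by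
    intro w hw lam N hN u hu
    obtain ⟨k, hk2⟩ : ∃ k : ℕ, d ≤ 2 ^ k := ⟨d, (Nat.lt_two_pow_self (n := d)).le⟩
    obtain ⟨b, hb, hab⟩ := hpow k w hw
    obtain ⟨mu, hmu⟩ := IsAlgClosed.exists_pow_nat_eq lam (n := 2 ^ k) (by positivity)
    set C : Module.End K L := LieAlgebra.ad K L b - mu • 1 with hC
    have hCE : C ^ (2 ^ k) = LieAlgebra.ad K L w - lam • 1 := by
      have h1 : C = LieAlgebra.ad K L b + (-mu) • 1 := by rw [hC, sub_eq_add_neg, neg_smul]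
      have h2 : (-mu : K) ^ (2 ^ k) = lam := by rw [CharTwo.neg_eq, hmu]
      have h3 : LieAlgebra.ad K L w - lam • 1 = LieAlgebra.ad K L w + (-lam) • 1 := by
        rw [sub_eq_add_neg, neg_smul]
      rw [h1, char2_pow_add, h2, ← hab, h3, CharTwo.neg_eq]
    have hker : ∀ m : ℕ, d ≤ m → LinearMap.ker (C ^ m) = LinearMap.ker (C ^ d) :=
      fun m hm => Module.End.ker_pow_eq_ker_pow_finrank_of_le hm
    have hu' : u ∈ LinearMap.ker (C ^ (2 ^ k * N)) := by
      rw [pow_mul, hCE]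
      exact hu
    rw [hker _ (le_trans hk2 (Nat.le_mul_of_pos_right _ (by omega))), ← hker _ hk2,
      LinearMap.mem_ker, hCE] at hu'
    have h4 := sub_eq_zero.mp (by simpa using hu')
    simpa [LieAlgebra.ad_apply] using h4
  -- main argument
  intro x hx y hy
  set p : Submodule K L := t.toSubmodule with hp
  have hinv : ∀ v ∈ p, LieAlgebra.ad K L x v ∈ p := by
    intro v hv
    simpa [LieAlgebra.ad_apply, hp] using t.lie_mem hx hv
  set A : Module.End K p := (LieAlgebra.ad K L x).restrict hinv with hA
  -- (A - lam • 1) ^ N is the restriction of (ad x - lam • 1) ^ N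
  have hres : ∀ lam : K, ∀ N : ℕ, ∀ v : p,
      (((A - lam • 1) ^ N) v : L) = ((LieAlgebra.ad K L x - lam • 1) ^ N) (v : L) := by
    intro lam N v
    have hinv2 : ∀ u ∈ p, (LieAlgebra.ad K L x - lam • 1) u ∈ p := by
      intro u hu
      simpa using p.sub_mem (hinv u hu) (p.smul_mem lam hu)
    have heq : A - lam • 1 = (LieAlgebra.ad K L x - lam • 1).restrict hinv2 := by
      ext w
      simp [hA, LinearMap.restrict_coe_apply]
    rw [heq, Module.End.pow_restrict, LinearMap.restrict_coe_apply]
  -- every generalized eigenvector of A is killed by ad x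
  have hgen : ∀ lam : K, (A.maxGenEigenspace lam) ≤
      LinearMap.ker ((LieAlgebra.ad K L x).comp p.subtype) := by
    intro lam v hv
    obtain ⟨N, hN⟩ := (Module.End.mem_maxGenEigenspace A lam v).mp hv
    have hN' : ((A - lam • 1) ^ (N + 1)) v = 0 := by
      rw [pow_succ', Module.End.mul_apply, hN, map_zero]
    have hvL : ((LieAlgebra.ad K L x - lam • 1) ^ (N + 1)) (v : L) = 0 := by
      rw [← hres lam (N + 1) v, hN', ZeroMemClass.coe_zero]
    have hxv : ⁅x, (v : L)⁆ = lam • (v : L) := key x hx lam (N + 1) (by omega) _ hvL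
    -- now show ⁅x, v⁆ = 0
    have hzero : ⁅x, (v : L)⁆ = 0 := by
      rcases eq_or_ne lam 0 with h0 | h0
      · rw [hxv, h0, zero_smul]
      rcases eq_or_ne (v : L) 0 with hv0 | hv0
      · rw [hv0, lie_zero]
      -- Humphreys trick: ⁅v,⁅v,x⁆⁆ = 0 forces ⁅v,x⁆ = 0
      exfalso
      have hvt : (v : L) ∈ t := v.2
      have hvx : ⁅(v : L), x⁆ = lam • (v : L) := by
        rw [← lie_skew (v : L) x, hxv]
        exact hnegL _
      have h5 : ⁅(v : L), x⁆ = (0 : K) • x := by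
        refine key (v : L) hvt 0 2 (by omega) x ?_
        simp only [zero_smul, sub_zero, pow_two, Module.End.mul_apply, LieAlgebra.ad_apply]
        rw [hvx, lie_smul, lie_self, smul_zero]
      rw [zero_smul] at h5
      rw [h5] at hvx
      exact hv0 (by simpa [h0] using hvx.symm)
    simpa [LinearMap.mem_ker, LieAlgebra.ad_apply] using hzero
  -- conclude using the generalized eigenspace decomposition of A
  have htop : (⨆ lam : K, A.maxGenEigenspace lam) = ⊤ :=
    Module.End.iSup_maxGenEigenspace_eq_top A
  have hle : (⊤ : Submodule K p) ≤
      LinearMap.ker ((LieAlgebra.ad K L x).comp p.subtype) := by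
    rw [← htop]
    exact iSup_le hgen
  have hy' : (⟨y, hy⟩ : p) ∈ LinearMap.ker ((LieAlgebra.ad K L x).comp p.subtype) :=
    hle Submodule.mem_top
  simpa [LinearMap.mem_ker, LieAlgebra.ad_apply] using hy'
end
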